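/- arXiv:1703.01150 — 9 statements merged into one kernel-verified Lean document; each statement's English description precedes it below -/
import Mathlib

section
/- Let n, m > 1 be integers with n dividing m. Then the girth of the graph G_n(Z_m) is either 3 or infinity; that is, G_n(Z_m) either contains a triangle or contains no cycle at all. -/
/-- The vertex set of `G_n(Z_m)`: nonzero proper ideals of `Z_m`, identified with
divisors `d` of `m` with `d ≠ 1` and `d ≠ m` (the ideal `dZ_m`). -/
abbrev IdealVertex (m : ℕ) := {d : ℕ // d ∣ m ∧ d ≠ 1 ∧ d ≠ m}

/-- The graph `G_n(Z_m)`: vertices are the nonzero proper ideals `dZ_m` of `Z_m`,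
and distinct vertices `d₁Z_m`, `d₂Z_m` are adjacent iff `d₁Z_n ∩ d₂Z_n ≠ 0`,
equivalently iff `n` does not divide `lcm(d₁, d₂)`. -/
def idealGraph (n m : ℕ) : SimpleGraph (IdealVertex m) where
  Adj I J := I ≠ J ∧ ¬ n ∣ Nat.lcm I.1 J.1
  symm := by
    constructor
    rintro I J ⟨h1, h2⟩
    exact ⟨h1.symm, by rwa [Nat.lcm_comm]⟩
  loopless := by constructor; rintro I ⟨h1, -⟩; exact h1 rfl

/-- Any graph with a triangle has `egirth ≤ 3`. -/
lemma egirth_le_three_of_triangle {α : Type*} {G : SimpleGraph α} {x y z : α}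
    (hxy : G.Adj x y) (hyz : G.Adj y z) (hzx : G.Adj z x) : G.egirth ≤ 3 := by
  let w : G.Walk x x := .cons hxy (.cons hyz (.cons hzx .nil))
  have h1 : x ≠ y := hxy.ne
  have h2 : y ≠ z := hyz.ne
  have h3 : z ≠ x := hzx.ne
  have hcyc : w.IsCycle := by
    rw [SimpleGraph.Walk.isCycle_def]
    refine ⟨?_, by simp [w], ?_⟩
    · rw [SimpleGraph.Walk.isTrail_def]
      simp only [w, SimpleGraph.Walk.edges_cons, SimpleGraph.Walk.edges_nil,
        List.nodup_cons, List.mem_cons, List.not_mem_nil, List.nodup_nil, and_true,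
        or_false, List.mem_singleton, Sym2.eq_iff]
      tauto
    · simp only [w, SimpleGraph.Walk.support_cons, SimpleGraph.Walk.support_nil,
        List.tail_cons, List.nodup_cons, List.mem_cons, List.not_mem_nil,
        List.mem_singleton, List.nodup_nil, and_true, or_false]
      tauto
  calc G.egirth ≤ (w.length : ℕ∞) :=
        iInf_le_of_le x (iInf_le_of_le w (iInf_le_of_le hcyc le_rfl))
    _ = 3 := by simp [w]

section aux

variable {n m : ℕ}

private lemma not_dvd_trans {s t : ℕ} (h : ¬ n ∣ t) (hd : s ∣ t) : ¬ n ∣ s :=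
  fun hns => h (hns.trans hd)

/-- `lcm` of two vertices not killed by `n` is again a vertex. -/
private lemma lcm_mem (hdvd : n ∣ m) (x y : IdealVertex m)
    (h : ¬ n ∣ Nat.lcm x.1 y.1) :
    Nat.lcm x.1 y.1 ∣ m ∧ Nat.lcm x.1 y.1 ≠ 1 ∧ Nat.lcm x.1 y.1 ≠ m := by
  refine ⟨Nat.lcm_dvd x.2.1 y.2.1, ?_, ?_⟩
  · intro h1
    have hx := Nat.dvd_lcm_left x.1 y.1
    rw [h1] at hx
    exact x.2.2.1 (Nat.eq_one_of_dvd_one hx)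
  · intro h1
    rw [h1] at h
    exact h hdvd

/-- If there is a path of length 3 (with the mild distinctness conditions that hold in a cycle),
then the graph contains a triangle. -/
private lemma triangle_of_path (hdvd : n ∣ m)
    {a b c d : IdealVertex m}
    (hab : (idealGraph n m).Adj a b) (hbc : (idealGraph n m).Adj b c)
    (hcd : (idealGraph n m).Adj c d) (hac : a ≠ c) (hbd : b ≠ d) :
    ∃ x y z : IdealVertex m, (idealGraph n m).Adj x y ∧ (idealGraph n m).Adj y z ∧
      (idealGraph n m).Adj z x := by
  have hab' : ¬ n ∣ Nat.lcm a.1 b.1 := hab.2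
  have hbc' : ¬ n ∣ Nat.lcm b.1 c.1 := hbc.2
  have hcd' : ¬ n ∣ Nat.lcm c.1 d.1 := hcd.2
  -- helper: an edge with incomparable endpoints gives a triangle
  have incomp : ∀ x y : IdealVertex m, (idealGraph n m).Adj x y → ¬ x.1 ∣ y.1 → ¬ y.1 ∣ x.1 →
      ∃ x' y' z' : IdealVertex m, (idealGraph n m).Adj x' y' ∧ (idealGraph n m).Adj y' z' ∧
        (idealGraph n m).Adj z' x' := by
    rintro x y ⟨hne, hadj⟩ h1 h2
    refine ⟨x, y, ⟨Nat.lcm x.1 y.1, lcm_mem hdvd x y hadj⟩, ⟨hne, hadj⟩, ⟨?_, ?_⟩, ⟨?_, ?_⟩⟩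
    · intro h
      apply h1
      rw [show y.1 = Nat.lcm x.1 y.1 from congrArg Subtype.val h]
      exact Nat.dvd_lcm_left x.1 y.1
    · exact not_dvd_trans hadj (Nat.lcm_dvd (Nat.dvd_lcm_right x.1 y.1) dvd_rfl)
    · intro h
      apply h2
      rw [show x.1 = Nat.lcm x.1 y.1 from (congrArg Subtype.val h).symm]
      exact Nat.dvd_lcm_right x.1 y.1
    · exact not_dvd_trans hadj (Nat.lcm_dvd (Nat.lcm_dvd (Nat.dvd_lcm_left x.1 y.1)
        (Nat.dvd_lcm_right x.1 y.1)) (Nat.dvd_lcm_left x.1 y.1))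
  by_cases hAB : a.1 ∣ b.1
  · by_cases hBC : b.1 ∣ c.1
    · -- a∣b, b∣c : a ~ c, triangle a b c
      refine ⟨a, b, c, hab, hbc, fun h => hac h.symm, ?_⟩
      exact not_dvd_trans hbc' ((Nat.lcm_dvd dvd_rfl (hAB.trans hBC)).trans
        (Nat.dvd_lcm_right b.1 c.1))
    · by_cases hCB : c.1 ∣ b.1
      · -- a∣b, c∣b : lcm a c ∣ b, triangle a b c
        refine ⟨a, b, c, hab, hbc, fun h => hac h.symm, ?_⟩
        exact not_dvd_trans hab' ((Nat.lcm_dvd hCB hAB).trans (Nat.dvd_lcm_right a.1 b.1))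
      · exact incomp b c hbc hBC hCB
  · by_cases hBA : b.1 ∣ a.1
    · by_cases hCB : c.1 ∣ b.1
      · -- b∣a, c∣b : c∣a, triangle a b c
        refine ⟨a, b, c, hab, hbc, fun h => hac h.symm, ?_⟩
        exact not_dvd_trans hab' ((Nat.lcm_dvd (hCB.trans hBA) dvd_rfl).trans
          (Nat.dvd_lcm_left a.1 b.1))
      · by_cases hBC : b.1 ∣ c.1
        · -- b∣a, b∣c : look at the edge c~d
          by_cases hCD : c.1 ∣ d.1
          · -- b∣d, b ~ d : triangle b c d
            refine ⟨b, c, d, hbc, hcd, fun h => hbd h.symm, ?_⟩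
            exact not_dvd_trans hcd' ((Nat.lcm_dvd dvd_rfl (hBC.trans hCD)).trans
              (Nat.dvd_lcm_right c.1 d.1))
          · by_cases hDC : d.1 ∣ c.1
            · -- lcm b d ∣ c : triangle b c d
              refine ⟨b, c, d, hbc, hcd, fun h => hbd h.symm, ?_⟩
              exact not_dvd_trans hbc' ((Nat.lcm_dvd hDC hBC).trans
                (Nat.dvd_lcm_right b.1 c.1))
            · exact incomp c d hcd hCD hDC
        · exact incomp b c hbc hBC hCB
    · exact incomp a b hab hAB hBA

end aux

/-- The girth of `G_n(Z_m)` is either 3 or infinity. -/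
theorem girth_idealGraph (n m : ℕ) (hn : 1 < n) (hm : 1 < m) (hdvd : n ∣ m) :
    (idealGraph n m).egirth = 3 ∨ (idealGraph n m).egirth = ⊤ := by
  by_cases hac : (idealGraph n m).IsAcyclic
  · exact Or.inr (SimpleGraph.egirth_eq_top.mpr hac)
  left
  obtain ⟨v, w, hw, -⟩ := SimpleGraph.exists_egirth_eq_length.mpr hac
  cases w with
  | nil => exact absurd rfl hw.ne_nil
  | cons h1 p =>
    rename_i x
    cases p with
    | nil => simpa using hw.three_le_length
    | cons h2 q =>
      rename_i y
      cases q with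
      | nil => simpa using hw.three_le_length
      | cons h3 r =>
        rename_i z
        have hnd := (SimpleGraph.Walk.isCycle_def _ |>.mp hw).2.2
        simp only [SimpleGraph.Walk.support_cons, List.tail_cons, List.nodup_cons] at hnd
        have hxz : x ≠ z := fun h =>
          hnd.1 (List.mem_cons_of_mem _ (h ▸ r.start_mem_support))
        have hvy : v ≠ y := fun h =>
          hnd.2.1 (h ▸ r.end_mem_support)
        obtain ⟨x', y', z', hxy', hyz', hzx'⟩ :=
          triangle_of_path hdvd h1 h2 h3 hvy hxz
        exact le_antisymm (egirth_le_three_of_triangle hxy' hyz' hzx')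
          SimpleGraph.three_le_egirth
end

section
/- Let n, m > 1 be integers with n dividing m. Then G_n(Z_m) is a forest if and only if one of the following holds: (i) there exist distinct primes p₁, p₂ and integers α₁, α₂ with 1 ≤ α₁, α₂ ≤ 2 such that n = p₁p₂ and m = p₁^{α₁}p₂^{α₂}; (ii) there exist distinct primes p₁, p₂ and integers α₁ ≥ 1, 1 ≤ α₂ ≤ 2 such that n = p₁ and m = p₁^{α₁}p₂^{α₂}; (iii) there exist a prime p₁ and integers α₁ ≥ β₁ with 1 ≤ β₁ ≤ 3 such that n = p₁^{β₁} and m = p₁^{α₁}. -/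
open SimpleGraph


section Helpers

lemma notAcyclic_of_triangle {V : Type*} (G : SimpleGraph V) {a b c : V}
    (hab : G.Adj a b) (hbc : G.Adj b c) (hca : G.Adj c a) : ¬ G.IsAcyclic := by
  intro hG
  have hcyc : (Walk.cons hab (Walk.cons hbc (Walk.cons hca Walk.nil))).IsCycle := by
    simp [Walk.isCycle_def, Walk.isTrail_def, hab.ne, hbc.ne, hca.ne, hab.ne', hbc.ne', hca.ne']
  exact hG _ hcyc

lemma isAcyclic_of_unique {V : Type*} (G : SimpleGraph V)
    (h : ∀ a b c, G.Adj a b → G.Adj a c → b = c) : G.IsAcyclic := by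
  intro v p hp
  cases p with
  | nil => simp [Walk.isCycle_def] at hp
  | cons h1 q =>
    cases q with
    | nil => exact G.loopless.irrefl v h1
    | cons h2 q' =>
      have hx := h _ _ _ h1.symm h2
      subst hx
      cases q' with
      | nil => simpa using hp.three_le_length
      | cons h3 q'' =>
        have hnd := hp.support_nodup
        have hmem := q''.end_mem_support
        simp [Walk.support_cons] at hnd

lemma div_pp {p α d : ℕ} (hp : p.Prime) (hd : d ∣ p ^ α) (hd1 : d ≠ 1) :
    ∃ i, 1 ≤ i ∧ i ≤ α ∧ d = p ^ i := by
  obtain ⟨i, hi, rfl⟩ := (Nat.dvd_prime_pow hp).mp hd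
  refine ⟨i, ?_, hi, rfl⟩
  rcases Nat.eq_zero_or_pos i with h | h
  · simp [h] at hd1
  · exact h

lemma div_ppq {p q a b d : ℕ} (hp : p.Prime) (hq : q.Prime)
    (hd : d ∣ p ^ a * q ^ b) : ∃ i j, i ≤ a ∧ j ≤ b ∧ d = p ^ i * q ^ j := by
  obtain ⟨d1, d2, h1, h2, rfl⟩ := exists_dvd_and_dvd_of_dvd_mul hd
  obtain ⟨i, hi, rfl⟩ := (Nat.dvd_prime_pow hp).mp h1
  obtain ⟨j, hj, rfl⟩ := (Nat.dvd_prime_pow hq).mp h2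
  exact ⟨i, j, hi, hj, rfl⟩

lemma div_ppq_nop {p q a b d : ℕ} (hp : p.Prime) (hq : q.Prime)
    (hd : d ∣ p ^ a * q ^ b) (hd1 : d ≠ 1) (hnp : ¬ p ∣ d) :
    ∃ j, 1 ≤ j ∧ j ≤ b ∧ d = q ^ j := by
  obtain ⟨i, j, hi, hj, rfl⟩ := div_ppq hp hq hd
  have hi0 : i = 0 := by
    by_contra h
    exact hnp (Dvd.dvd.mul_right (dvd_pow_self p h) _)
  subst hi0
  simp only [pow_zero, one_mul] at *
  obtain ⟨k, hk1, hk2, hk3⟩ := div_pp hq dvd_rfl hd1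
  exact ⟨k, hk1, le_trans hk2 hj, hk3⟩

lemma prime_not_dvd_pp {p q : ℕ} (hp : p.Prime) (hq : q.Prime) (hne : q ≠ p) (k : ℕ) :
    ¬ q ∣ p ^ k := fun h =>
  hne ((Nat.prime_dvd_prime_iff_eq hq hp).mp (hq.dvd_of_dvd_pow h))

lemma sq_not_dvd {p q : ℕ} (hp : p.Prime) (hq : q.Prime) (hne : p ≠ q) : ¬ p ^ 2 ∣ p * q := by
  intro h
  have h2 : p * p ∣ p * q := by simpa [pow_two] using h
  have : p ∣ q := (Nat.mul_dvd_mul_iff_left hp.pos).mp h2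
  exact hne ((Nat.prime_dvd_prime_iff_eq hp hq).mp this)

lemma two_primes {m p q : ℕ} (hp : p.Prime) (hq : q.Prime) (hpq : q ≠ p) (hm : m ≠ 0)
    (hpm : p ∣ m) (hqm : q ∣ m) (hall : ∀ r, r.Prime → r ∣ m → r = p ∨ r = q) :
    ∃ a b, 1 ≤ a ∧ 1 ≤ b ∧ m = p ^ a * q ^ b := by
  have hmc : p ^ m.factorization p * (m / p ^ m.factorization p) = m :=
    Nat.ordProj_mul_ordCompl_eq_self m p
  have hcd : (m / p ^ m.factorization p) ∣ m := Nat.ordCompl_dvd m p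
  have hpc : ¬ p ∣ (m / p ^ m.factorization p) := Nat.not_dvd_ordCompl hp hm
  have hc0 : (m / p ^ m.factorization p) ≠ 0 := (Nat.ordCompl_pos p hm).ne'
  have hcq : ∀ {r : ℕ}, r.Prime → r ∣ (m / p ^ m.factorization p) → r = q := by
    intro r hr hrc
    refine (hall r hr (hrc.trans hcd)).resolve_left fun h => hpc (h ▸ hrc)
  have hcb := Nat.eq_prime_pow_of_unique_prime_dvd hc0 hcq
  have hqc : q ∣ (m / p ^ m.factorization p) := by
    have hcop : Nat.Coprime q (p ^ m.factorization p) :=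
      Nat.Coprime.pow_right _ ((Nat.coprime_primes hq hp).mpr hpq)
    have hqm' := hqm
    rw [← hmc] at hqm'
    exact hcop.dvd_of_dvd_mul_left hqm'
  have hb1 : 1 ≤ (m / p ^ m.factorization p).primeFactorsList.length := by
    rcases Nat.eq_zero_or_pos (m / p ^ m.factorization p).primeFactorsList.length with h0 | h0
    · rw [h0, pow_zero] at hcb
      rw [hcb] at hqc
      have := Nat.dvd_one.mp hqc
      have := hq.one_lt
      omega
    · exact h0
  refine ⟨m.factorization p, _, hp.factorization_pos_of_dvd hm hpm, hb1, ?_⟩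
  rw [← hcb, hmc]

lemma triangle_graph {n m a b c D : ℕ}
    (haD : a ∣ D) (hbD : b ∣ D) (hcD : c ∣ D) (hnD : ¬ n ∣ D)
    (ham : a ∣ m) (hbm : b ∣ m) (hcm : c ∣ m)
    (ha1 : a ≠ 1) (hb1 : b ≠ 1) (hc1 : c ≠ 1)
    (haM : a ≠ m) (hbM : b ≠ m) (hcM : c ≠ m)
    (hab : a ≠ b) (hbc : b ≠ c) (hac : c ≠ a) :
    ¬ (idealGraph n m).IsAcyclic := by
  have key : ∀ x y : ℕ, x ∣ D → y ∣ D → ¬ n ∣ Nat.lcm x y := fun x y hx hy h =>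
    hnD (h.trans (Nat.lcm_dvd hx hy))
  refine notAcyclic_of_triangle _ (a := ⟨a, ham, ha1, haM⟩) (b := ⟨b, hbm, hb1, hbM⟩)
    (c := ⟨c, hcm, hc1, hcM⟩) ?_ ?_ ?_
  · exact ⟨fun h => hab (congrArg Subtype.val h), key a b haD hbD⟩
  · exact ⟨fun h => hbc (congrArg Subtype.val h), key b c hbD hcD⟩
  · exact ⟨fun h => hac (congrArg Subtype.val h), key c a hcD haD⟩

lemma tri_ppp {n m p : ℕ} (hp : p.Prime) (h3m : p ^ 3 ∣ m) (hnD : ¬ n ∣ p ^ 3)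
    (hmd : ¬ m ∣ p ^ 3) : ¬ (idealGraph n m).IsAcyclic := by
  have h1 : (1:ℕ) < p := hp.one_lt
  have hne : ∀ i j : ℕ, i < j → p ^ i ≠ p ^ j := fun i j hij =>
    (Nat.pow_lt_pow_right h1 hij).ne
  have hd : ∀ i : ℕ, i ≤ 3 → p ^ i ∣ m := fun i hi => (pow_dvd_pow p hi).trans h3m
  have hne1 : ∀ i : ℕ, 1 ≤ i → p ^ i ≠ 1 := fun i hi => (Nat.one_lt_pow (by omega) h1).ne'
  have hnem : ∀ i : ℕ, i ≤ 3 → p ^ i ≠ m := fun i hi h => hmd (h ▸ pow_dvd_pow p hi)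
  refine triangle_graph (a := p ^ 1) (b := p ^ 2) (c := p ^ 3) (D := p ^ 3)
    (pow_dvd_pow p (by omega)) (pow_dvd_pow p (by omega)) dvd_rfl hnD
    (hd 1 (by omega)) (hd 2 (by omega)) (hd 3 (by omega))
    (hne1 1 le_rfl) (hne1 2 (by omega)) (hne1 3 (by omega))
    (hnem 1 (by omega)) (hnem 2 (by omega)) (hnem 3 (by omega))
    (hne 1 2 (by omega)) (hne 2 3 (by omega)) (Ne.symm (hne 1 3 (by omega)))

lemma tri_pq {n m p q : ℕ} (hp : p.Prime) (hq : q.Prime) (hpq : p ≠ q)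
    (hpqm : p * q ∣ m) (hnD : ¬ n ∣ p * q) (hmd : ¬ m ∣ p * q) :
    ¬ (idealGraph n m).IsAcyclic := by
  have hppq : p ≠ p * q := fun h =>
    hq.one_lt.ne' (Nat.eq_of_mul_eq_mul_left hp.pos (by rw [mul_one, ← h])).symm
  have hqpq : q ≠ p * q := fun h =>
    hp.one_lt.ne' (Nat.eq_of_mul_eq_mul_left hq.pos (by rw [mul_one, mul_comm q p, ← h])).symm
  refine triangle_graph (a := p) (b := q) (c := p * q) (D := p * q)
    (dvd_mul_right p q) (dvd_mul_left q p) dvd_rfl hnD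
    ((dvd_mul_right p q).trans hpqm) ((dvd_mul_left q p).trans hpqm) hpqm
    hp.one_lt.ne' hq.one_lt.ne' (Nat.one_lt_mul_iff.mpr (by exact ⟨hp.pos, hq.pos, Or.inl hp.one_lt⟩)).ne'
    (fun h => hmd (h ▸ dvd_mul_right p q)) (fun h => hmd (h ▸ dvd_mul_left q p))
    (fun h => hmd (h ▸ dvd_rfl))
    hpq hqpq (Ne.symm hppq)

end Helpers

/-- `G_n(Z_m)` is a forest iff one of three arithmetic conditions on `n`, `m` holds. -/
theorem idealGraph_isAcyclic_iff (n m : ℕ) (hn : 1 < n) (hm : 1 < m) (hdvd : n ∣ m) :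
    (idealGraph n m).IsAcyclic ↔
      (∃ p₁ p₂ α₁ α₂ : ℕ, p₁.Prime ∧ p₂.Prime ∧ p₁ ≠ p₂ ∧
        1 ≤ α₁ ∧ α₁ ≤ 2 ∧ 1 ≤ α₂ ∧ α₂ ≤ 2 ∧ n = p₁ * p₂ ∧ m = p₁ ^ α₁ * p₂ ^ α₂) ∨
      (∃ p₁ p₂ α₁ α₂ : ℕ, p₁.Prime ∧ p₂.Prime ∧ p₁ ≠ p₂ ∧
        1 ≤ α₁ ∧ 1 ≤ α₂ ∧ α₂ ≤ 2 ∧ n = p₁ ∧ m = p₁ ^ α₁ * p₂ ^ α₂) ∨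
      (∃ p₁ α₁ β₁ : ℕ, p₁.Prime ∧ 1 ≤ β₁ ∧ β₁ ≤ 3 ∧ β₁ ≤ α₁ ∧
        n = p₁ ^ β₁ ∧ m = p₁ ^ α₁) := by
  constructor
  · -- forward direction
    intro hac
    have hm0 : m ≠ 0 := by omega
    have hn1 : n ≠ 1 := by omega
    have hP : m.minFac.Prime := Nat.minFac_prime (by omega)
    set P := m.minFac with hPdef
    have hPm : P ∣ m := Nat.minFac_dvd m
    by_cases hall : ∀ r, r.Prime → r ∣ m → r = P
    · -- m is a prime power
      have hmα := Nat.eq_prime_pow_of_unique_prime_dvd hm0 (fun {q} hq hqm => hall q hq hqm)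
      obtain ⟨β, hβ1, hβα, hnβ⟩ := div_pp hP (hmα ▸ hdvd) hn1
      by_cases hβ3 : β ≤ 3
      · exact Or.inr (Or.inr ⟨P, _, β, hP, hβ1, hβ3, hβα, hnβ, hmα⟩)
      · refine absurd hac (tri_ppp hP ?_ ?_ ?_)
        · exact dvd_trans (by rw [hnβ]; exact pow_dvd_pow P (by omega)) hdvd
        · rw [hnβ]
          intro h
          have := (Nat.pow_dvd_pow_iff_le_right hP.one_lt).mp h
          omega
        · intro h
          have h4 : P ^ 4 ∣ P ^ 3 :=
            dvd_trans (dvd_trans (by rw [hnβ]; exact pow_dvd_pow P (by omega)) hdvd) h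
          have := (Nat.pow_dvd_pow_iff_le_right hP.one_lt).mp h4
          omega
    · push_neg at hall
      obtain ⟨q, hq, hqm, hqP⟩ := hall
      by_cases hall2 : ∀ r, r.Prime → r ∣ m → r = P ∨ r = q
      · -- m has exactly the primes P and q
        obtain ⟨a, b, ha1, hb1, hmab⟩ := two_primes hP hq hqP hm0 hPm hqm hall2
        obtain ⟨s, t, hsa, htb, hnst⟩ := div_ppq hP hq (hmab ▸ hdvd)
        have hPq : P ≠ q := fun h => hqP h.symm
        have hpqm : P * q ∣ m := by
          rw [hmab]
          exact mul_dvd_mul (dvd_pow_self P (by omega)) (dvd_pow_self q (by omega))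
        by_cases hs0 : s = 0
        · -- n = q^t
          subst hs0
          rw [pow_zero, one_mul] at hnst
          have ht1 : 1 ≤ t := by
            rcases Nat.eq_zero_or_pos t with h | h
            · rw [h, pow_zero] at hnst; omega
            · exact h
          by_cases ht2 : 2 ≤ t
          · refine absurd hac (tri_pq hP hq hPq hpqm ?_ ?_)
            · intro h
              refine sq_not_dvd hq hP hqP ?_
              rw [mul_comm]
              exact dvd_trans (by rw [hnst]; exact pow_dvd_pow q ht2) h
            · intro h
              refine sq_not_dvd hq hP hqP ?_
              rw [mul_comm]
              exact dvd_trans (dvd_trans (by rw [hnst]; exact pow_dvd_pow q ht2) hdvd) h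
          · have ht : t = 1 := by omega
            rw [ht, pow_one] at hnst
            by_cases ha2 : a ≤ 2
            · exact Or.inr (Or.inl ⟨q, P, b, a, hq, hP, hqP, hb1, ha1, ha2, hnst,
                by rw [hmab, mul_comm]⟩)
            · refine absurd hac (tri_ppp hP ?_ ?_ ?_)
              · rw [hmab]; exact dvd_mul_of_dvd_left (pow_dvd_pow P (by omega)) _
              · rw [hnst]; exact prime_not_dvd_pp hP hq hqP 3
              · exact fun h => prime_not_dvd_pp hP hq hqP 3 (dvd_trans hqm h)
        · by_cases ht0 : t = 0
          · -- n = P^s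
            subst ht0
            rw [pow_zero, mul_one] at hnst
            have hs1 : 1 ≤ s := by omega
            by_cases hs2 : 2 ≤ s
            · refine absurd hac (tri_pq hP hq hPq hpqm ?_ ?_)
              · intro h
                exact sq_not_dvd hP hq hPq
                  (dvd_trans (by rw [hnst]; exact pow_dvd_pow P hs2) h)
              · intro h
                exact sq_not_dvd hP hq hPq
                  (dvd_trans (dvd_trans (by rw [hnst]; exact pow_dvd_pow P hs2) hdvd) h)
            · have hs : s = 1 := by omega
              rw [hs, pow_one] at hnst
              by_cases hb2 : b ≤ 2
              · exact Or.inr (Or.inl ⟨P, q, a, b, hP, hq, hPq, ha1, hb1, hb2, hnst, hmab⟩)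
              · refine absurd hac (tri_ppp hq ?_ ?_ ?_)
                · rw [hmab]; exact dvd_mul_of_dvd_right (pow_dvd_pow q (by omega)) _
                · rw [hnst]; exact prime_not_dvd_pp hq hP hPq 3
                · exact fun h => prime_not_dvd_pp hq hP hPq 3 (dvd_trans hPm h)
          · -- s ≥ 1, t ≥ 1
            have hs1 : 1 ≤ s := by omega
            have ht1 : 1 ≤ t := by omega
            by_cases hs2 : 2 ≤ s
            · refine absurd hac (tri_pq hP hq hPq hpqm ?_ ?_)
              · intro h
                refine sq_not_dvd hP hq hPq (dvd_trans ?_ h)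
                rw [hnst]; exact dvd_mul_of_dvd_left (pow_dvd_pow P hs2) _
              · intro h
                refine sq_not_dvd hP hq hPq (dvd_trans (dvd_trans ?_ hdvd) h)
                rw [hnst]; exact dvd_mul_of_dvd_left (pow_dvd_pow P hs2) _
            · by_cases ht2 : 2 ≤ t
              · refine absurd hac (tri_pq hP hq hPq hpqm ?_ ?_)
                · intro h
                  refine sq_not_dvd hq hP hqP ?_
                  rw [mul_comm]
                  refine dvd_trans ?_ h
                  rw [hnst]; exact dvd_mul_of_dvd_right (pow_dvd_pow q ht2) _
                · intro h
                  refine sq_not_dvd hq hP hqP ?_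
                  rw [mul_comm]
                  refine dvd_trans (dvd_trans ?_ hdvd) h
                  rw [hnst]; exact dvd_mul_of_dvd_right (pow_dvd_pow q ht2) _
              · have hs : s = 1 := by omega
                have ht : t = 1 := by omega
                rw [hs, ht, pow_one, pow_one] at hnst
                by_cases ha2 : a ≤ 2
                · by_cases hb2 : b ≤ 2
                  · exact Or.inl ⟨P, q, a, b, hP, hq, hPq, ha1, ha2, hb1, hb2, hnst, hmab⟩
                  · refine absurd hac (tri_ppp hq ?_ ?_ ?_)
                    · rw [hmab]; exact dvd_mul_of_dvd_right (pow_dvd_pow q (by omega)) _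
                    · intro h
                      exact prime_not_dvd_pp hq hP hPq 3
                        (dvd_trans (by rw [hnst]; exact dvd_mul_right P q) h)
                    · exact fun h => prime_not_dvd_pp hq hP hPq 3 (dvd_trans hPm h)
                · refine absurd hac (tri_ppp hP ?_ ?_ ?_)
                  · rw [hmab]; exact dvd_mul_of_dvd_left (pow_dvd_pow P (by omega)) _
                  · intro h
                    exact prime_not_dvd_pp hP hq hqP 3
                      (dvd_trans (by rw [hnst]; exact dvd_mul_left q P) h)
                  · exact fun h => prime_not_dvd_pp hP hq hqP 3 (dvd_trans hqm h)
      · -- m has at least three primes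
        push_neg at hall2
        obtain ⟨r, hr, hrm, hrP, hrq⟩ := hall2
        exfalso
        have hs : n.minFac.Prime := Nat.minFac_prime hn1
        have hsn : n.minFac ∣ n := Nat.minFac_dvd n
        have hsm : n.minFac ∣ m := hsn.trans hdvd
        have key : ∀ x y : ℕ, x.Prime → y.Prime → x ≠ y → x ∣ m → y ∣ m →
            n.minFac ≠ x → n.minFac ≠ y → False := by
          intro x y hx hy hxy hxm hym hsx hsy
          have hnd : ∀ z : ℕ, n.minFac ∣ z → z ∣ x * y → False := by
            intro z h1 h2
            rcases hs.dvd_mul.mp (h1.trans h2) with h | h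
            · exact hsx ((Nat.prime_dvd_prime_iff_eq hs hx).mp h)
            · exact hsy ((Nat.prime_dvd_prime_iff_eq hs hy).mp h)
          refine absurd hac (tri_pq hx hy hxy ?_ (fun h => hnd n hsn h) (fun h => hnd m hsm h))
          exact Nat.Coprime.mul_dvd_of_dvd_of_dvd ((Nat.coprime_primes hx hy).mpr hxy) hxm hym
        by_cases hsP : n.minFac = P
        · exact key q r hq hr (fun h => hrq h.symm) hqm hrm
            (by rw [hsP]; exact fun h => hqP h.symm) (by rw [hsP]; exact fun h => hrP h.symm)
        · by_cases hsq : n.minFac = q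
          · exact key P r hP hr (fun h => hrP h.symm) hPm hrm hsP
              (by rw [hsq]; exact fun h => hrq h.symm)
          · exact key P q hP hq (fun h => hqP h.symm) hPm hqm hsP hsq
  · -- backward direction
    rintro (⟨p, q, a, b, hp, hq, hpq, ha1, ha2, hb1, hb2, rfl, rfl⟩ |
            ⟨p, q, a, b, hp, hq, hpq, ha1, hb1, hb2, rfl, rfl⟩ |
            ⟨p, α, β, hp, hβ1, hβ3, hβα, rfl, rfl⟩)
    · -- case (i) : n = p*q, m = p^a * q^b, a,b ≤ 2
      apply isAcyclic_of_unique
      rintro I J K ⟨hIJne, hIJ⟩ ⟨hIKne, hIK⟩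
      have hcop : Nat.Coprime p q := (Nat.coprime_primes hp hq).mpr hpq
      have key : ∀ X Y : IdealVertex (p ^ a * q ^ b), ¬ p * q ∣ Nat.lcm X.1 Y.1 →
          (¬ p ∣ X.1 ∧ ¬ p ∣ Y.1) ∨ (¬ q ∣ X.1 ∧ ¬ q ∣ Y.1) := by
        intro X Y h
        by_cases hpl : p ∣ Nat.lcm X.1 Y.1
        · exact Or.inr ⟨fun hx => h (hcop.mul_dvd_of_dvd_of_dvd hpl
              (hx.trans (Nat.dvd_lcm_left _ _))),
            fun hy => h (hcop.mul_dvd_of_dvd_of_dvd hpl (hy.trans (Nat.dvd_lcm_right _ _)))⟩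
        · exact Or.inl ⟨fun hx => hpl (hx.trans (Nat.dvd_lcm_left _ _)),
            fun hy => hpl (hy.trans (Nat.dvd_lcm_right _ _))⟩
      have hm' : ∀ d : ℕ, d ∣ p ^ a * q ^ b → d ∣ q ^ b * p ^ a := fun d hd => by rwa [mul_comm]
      rcases key I J hIJ with ⟨hI1, hJ1⟩ | ⟨hI1, hJ1⟩ <;>
        rcases key I K hIK with ⟨hI2, hK2⟩ | ⟨hI2, hK2⟩
      · obtain ⟨i, hi1, hib, hIv⟩ := div_ppq_nop hp hq I.2.1 I.2.2.1 hI1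
        obtain ⟨j, hj1, hjb, hJv⟩ := div_ppq_nop hp hq J.2.1 J.2.2.1 hJ1
        obtain ⟨k, hk1, hkb, hKv⟩ := div_ppq_nop hp hq K.2.1 K.2.2.1 hK2
        have hij : i ≠ j := fun h => hIJne (Subtype.ext (by rw [hIv, hJv, h]))
        have hik : i ≠ k := fun h => hIKne (Subtype.ext (by rw [hIv, hKv, h]))
        have hjk : j = k := by omega
        exact Subtype.ext (by rw [hJv, hKv, hjk])
      · exfalso
        obtain ⟨i, hi1, _, hIv⟩ := div_ppq_nop hp hq I.2.1 I.2.2.1 hI1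
        exact hI2 (by rw [hIv]; exact dvd_pow_self q (by omega))
      · exfalso
        obtain ⟨i, hi1, _, hIv⟩ := div_ppq_nop hp hq I.2.1 I.2.2.1 hI2
        exact hI1 (by rw [hIv]; exact dvd_pow_self q (by omega))
      · obtain ⟨i, hi1, hib, hIv⟩ := div_ppq_nop hq hp (hm' _ I.2.1) I.2.2.1 hI1
        obtain ⟨j, hj1, hjb, hJv⟩ := div_ppq_nop hq hp (hm' _ J.2.1) J.2.2.1 hJ1
        obtain ⟨k, hk1, hkb, hKv⟩ := div_ppq_nop hq hp (hm' _ K.2.1) K.2.2.1 hK2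
        have hij : i ≠ j := fun h => hIJne (Subtype.ext (by rw [hIv, hJv, h]))
        have hik : i ≠ k := fun h => hIKne (Subtype.ext (by rw [hIv, hKv, h]))
        have hjk : j = k := by omega
        exact Subtype.ext (by rw [hJv, hKv, hjk])
    · -- case (ii) : n = p, m = p^a * q^b, b ≤ 2
      apply isAcyclic_of_unique
      rintro I J K ⟨hIJne, hIJ⟩ ⟨hIKne, hIK⟩
      have hI : ¬ n ∣ I.1 := fun h => hIJ (h.trans (Nat.dvd_lcm_left _ _))
      have hJ : ¬ n ∣ J.1 := fun h => hIJ (h.trans (Nat.dvd_lcm_right _ _))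
      have hK : ¬ n ∣ K.1 := fun h => hIK (h.trans (Nat.dvd_lcm_right _ _))
      obtain ⟨i, hi1, hib, hIv⟩ := div_ppq_nop hp hq I.2.1 I.2.2.1 hI
      obtain ⟨j, hj1, hjb, hJv⟩ := div_ppq_nop hp hq J.2.1 J.2.2.1 hJ
      obtain ⟨k, hk1, hkb, hKv⟩ := div_ppq_nop hp hq K.2.1 K.2.2.1 hK
      have hij : i ≠ j := fun h => hIJne (Subtype.ext (by rw [hIv, hJv, h]))
      have hik : i ≠ k := fun h => hIKne (Subtype.ext (by rw [hIv, hKv, h]))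
      have hjk : j = k := by omega
      exact Subtype.ext (by rw [hJv, hKv, hjk])
    · -- case (iii) : n = p^β, m = p^α, β ≤ 3
      apply isAcyclic_of_unique
      rintro I J K ⟨hIJne, hIJ⟩ ⟨hIKne, hIK⟩
      obtain ⟨i, hi1, hiα, hIv⟩ := div_pp hp I.2.1 I.2.2.1
      obtain ⟨j, hj1, hjα, hJv⟩ := div_pp hp J.2.1 J.2.2.1
      obtain ⟨k, hk1, hkα, hKv⟩ := div_pp hp K.2.1 K.2.2.1
      have hiβ : i < β := by
        by_contra h
        push_neg at h
        exact hIJ (dvd_trans (by rw [hIv]; exact pow_dvd_pow p h) (Nat.dvd_lcm_left _ _))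
      have hjβ : j < β := by
        by_contra h
        push_neg at h
        exact hIJ (dvd_trans (by rw [hJv]; exact pow_dvd_pow p h) (Nat.dvd_lcm_right _ _))
      have hkβ : k < β := by
        by_contra h
        push_neg at h
        exact hIK (dvd_trans (by rw [hKv]; exact pow_dvd_pow p h) (Nat.dvd_lcm_right _ _))
      have hij : i ≠ j := fun h => hIJne (Subtype.ext (by rw [hIv, hJv, h]))
      have hik : i ≠ k := fun h => hIKne (Subtype.ext (by rw [hIv, hKv, h]))
      have hjk : j = k := by omega
      exact Subtype.ext (by rw [hJv, hKv, hjk])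
end

section
/- Let n, m > 1 be integers with n dividing m. Then G_n(Z_m) is a tree if and only if G_n(Z_m) is a star. Moreover, G_n(Z_m) is a tree if and only if one of the following holds for some prime p₁: (i) n = m = p₁²; (ii) n = m = p₁³; (iii) n = p₁ and m = p₁². -/
/-- A star graph: one center vertex adjacent to all other vertices and no further edges. -/
def SimpleGraph.IsStarGraph {V : Type*} (G : SimpleGraph V) : Prop :=
  ∃ c : V, (∀ v : V, v ≠ c → G.Adj c v) ∧ ∀ a b : V, G.Adj a b → a = c ∨ b = c

open SimpleGraph

lemma no_adj_not_reachable {V : Type*} {G : SimpleGraph V} {v w : V}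
    (h : ∀ u, ¬ G.Adj v u) (hne : v ≠ w) : ¬ G.Reachable v w := by
  rintro ⟨p⟩
  cases p with
  | nil => exact hne rfl
  | cons h' _ => exact h _ h'

lemma triangle_not_acyclic {V : Type*} {G : SimpleGraph V} {a b c : V}
    (hab : G.Adj a b) (hbc : G.Adj b c) (hac : G.Adj a c) : ¬ G.IsAcyclic := by
  intro h
  have hb := (isAcyclic_iff_forall_adj_isBridge.mp h) hab
  rw [isBridge_iff] at hb
  apply hb
  rw [reachable_delete_edges_iff_exists_walk]
  refine ⟨Walk.cons hac (Walk.cons hbc.symm Walk.nil), ?_⟩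
  simp only [Walk.edges_cons, Walk.edges_nil, List.mem_cons, List.not_mem_nil, or_false]
  push_neg
  constructor
  · intro h'
    rcases Sym2.eq_iff.mp h' with ⟨-, h2⟩ | ⟨h1, -⟩
    · exact hbc.ne h2
    · exact hac.ne h1
  · intro h'
    rcases Sym2.eq_iff.mp h' with ⟨h1, -⟩ | ⟨h1, -⟩
    · exact hac.ne h1
    · exact hab.ne h1

lemma star_isTree {V : Type*} {G : SimpleGraph V} (h : G.IsStarGraph) : G.IsTree := by
  obtain ⟨c, hc, hedge⟩ := h
  have reach_c : ∀ v : V, G.Reachable v c := by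
    intro v
    by_cases hv : v = c
    · exact hv ▸ Reachable.refl v
    · exact ((hc v hv).symm).reachable
  constructor
  · rw [SimpleGraph.connected_iff]
    exact ⟨fun u v => (reach_c u).trans (reach_c v).symm, ⟨c⟩⟩
  · rw [isAcyclic_iff_forall_adj_isBridge]
    intro v w hvw
    rw [isBridge_iff]
    rcases hedge v w hvw with rfl | rfl
    · intro hr
      refine no_adj_not_reachable (G := G \ fromEdgeSet {s(v, w)}) (v := w) ?_ hvw.ne' hr.symm
      intro u hu
      rw [sdiff_adj] at hu
      rcases hedge w u hu.1 with rfl | rfl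
      · exact hvw.ne' rfl
      · exact hu.2 (by rw [fromEdgeSet_adj, Set.mem_singleton_iff]; exact ⟨Sym2.eq_swap, hu.1.ne⟩)
    · intro hr
      refine no_adj_not_reachable (G := G \ fromEdgeSet {s(v, w)}) (v := v) ?_ hvw.ne hr
      intro u hu
      rw [sdiff_adj] at hu
      rcases hedge v u hu.1 with rfl | rfl
      · exact hvw.ne rfl
      · exact hu.2 (by rw [fromEdgeSet_adj, Set.mem_singleton_iff]; exact ⟨rfl, hu.1.ne⟩)

lemma div_pp_s2 {p d : ℕ} (hp : p.Prime) (hd : d ∣ p ^ 2) (h1 : d ≠ 1) (h2 : d ≠ p ^ 2) : d = p := by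
  obtain ⟨i, hi, rfl⟩ := (Nat.dvd_prime_pow hp).mp hd
  interval_cases i
  · simp at h1
  · exact pow_one p
  · exact absurd rfl h2

lemma div_ppp {p d : ℕ} (hp : p.Prime) (hd : d ∣ p ^ 3) (h1 : d ≠ 1) (h2 : d ≠ p ^ 3) :
    d = p ∨ d = p ^ 2 := by
  obtain ⟨i, hi, rfl⟩ := (Nat.dvd_prime_pow hp).mp hd
  interval_cases i
  · simp at h1
  · exact Or.inl (pow_one p)
  · exact Or.inr rfl
  · exact absurd rfl h2

lemma star_of_cases (n m : ℕ) (hP : ∃ p : ℕ, p.Prime ∧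
    ((n = p ^ 2 ∧ m = p ^ 2) ∨ (n = p ^ 3 ∧ m = p ^ 3) ∨ (n = p ∧ m = p ^ 2))) :
    (idealGraph n m).IsStarGraph := by
  obtain ⟨p, hp, hcase⟩ := hP
  have hp2 := hp.two_le
  have hp1 : p ≠ 1 := hp.one_lt.ne'
  have hpp2 : p ≠ p ^ 2 := by
    have := pow_lt_pow_right₀ hp.one_lt (show 1 < 2 by norm_num)
    rw [pow_one] at this; exact this.ne
  have hpp3 : p ≠ p ^ 3 := by
    have := pow_lt_pow_right₀ hp.one_lt (show 1 < 3 by norm_num)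
    rw [pow_one] at this; exact this.ne
  rcases hcase with ⟨hn, hm⟩ | ⟨hn, hm⟩ | ⟨hn, hm⟩
  · -- n = m = p^2
    subst hn hm
    have hall : ∀ v : IdealVertex (p ^ 2), v = ⟨p, dvd_pow_self p two_ne_zero, hp1, hpp2⟩ := by
      rintro ⟨d, hd, h1, h2⟩
      exact Subtype.ext (div_pp_s2 hp hd h1 h2)
    exact ⟨_, fun v hv => absurd (hall v) hv, fun a b _ => Or.inl (hall a)⟩
  · -- n = m = p^3
    subst hn hm
    have hc : (p : ℕ) ∣ p ^ 3 ∧ p ≠ 1 ∧ p ≠ p ^ 3 := ⟨dvd_pow_self p three_ne_zero, hp1, hpp3⟩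
    refine ⟨⟨p, hc⟩, ?_, ?_⟩
    · rintro ⟨d, hd, h1, h2⟩ hv
      rcases div_ppp hp hd h1 h2 with rfl | rfl
      · exact absurd rfl hv
      · refine ⟨fun h => hv h.symm, ?_⟩
        intro hdl
        have h3 : Nat.lcm p (p ^ 2) ∣ p ^ 2 :=
          Nat.lcm_dvd (dvd_pow_self p two_ne_zero) dvd_rfl
        have := Nat.le_of_dvd (pow_pos hp.pos 2) (hdl.trans h3)
        nlinarith
    · rintro ⟨a, ha, ha1, ha2⟩ ⟨b, hb, hb1, hb2⟩ hab
      rcases div_ppp hp ha ha1 ha2 with rfl | rfl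
      · exact Or.inl rfl
      · rcases div_ppp hp hb hb1 hb2 with rfl | rfl
        · exact Or.inr rfl
        · exact absurd rfl hab.1
  · -- n = p, m = p^2
    subst hn hm
    have hall : ∀ v : IdealVertex (n ^ 2), v = ⟨n, dvd_pow_self n two_ne_zero, hp1, hpp2⟩ := by
      rintro ⟨d, hd, h1, h2⟩
      exact Subtype.ext (div_pp_s2 hp hd h1 h2)
    exact ⟨_, fun v hv => absurd (hall v) hv, fun a b _ => Or.inl (hall a)⟩

lemma tree_imp_cases (n m : ℕ) (hn : 1 < n) (hm : 1 < m) (hdvd : n ∣ m)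
    (ht : (idealGraph n m).IsTree) : ∃ p : ℕ, p.Prime ∧
    ((n = p ^ 2 ∧ m = p ^ 2) ∨ (n = p ^ 3 ∧ m = p ^ 3) ∨ (n = p ∧ m = p ^ 2)) := by
  have hm0 : 0 < m := by omega
  obtain ⟨⟨d₀, hd₀, hd₀1, hd₀m⟩⟩ := ht.isConnected.nonempty
  have hmnp : ¬ m.Prime := by
    intro h
    rcases h.eq_one_or_self_of_dvd d₀ hd₀ with h1 | h1
    · exact hd₀1 h1
    · exact hd₀m h1
  have hp := Nat.minFac_prime hm.ne'
  set p := m.minFac with hpdef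
  have hpm : p ∣ m := Nat.minFac_dvd m
  have hpne_m : p ≠ m := fun h => hmnp (h ▸ hp)
  by_cases hnm : n = m
  case neg =>
    -- n is an isolated vertex, so it is the only vertex, and m = p^2, n = p
    have hiso : ∀ u, ¬ (idealGraph n m).Adj ⟨n, hdvd, hn.ne', hnm⟩ u := by
      rintro u ⟨-, h2⟩
      exact h2 (Nat.dvd_lcm_left _ _)
    have hall : ∀ w : IdealVertex m, w = ⟨n, hdvd, hn.ne', hnm⟩ := by
      intro w
      by_contra hw
      exact no_adj_not_reachable hiso (Ne.symm hw) (ht.isConnected.preconnected _ w)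
    have hpn : p = n := congrArg Subtype.val (hall ⟨p, hpm, hp.one_lt.ne', hpne_m⟩)
    obtain ⟨k, hk⟩ := hpm
    have hk1 : k ≠ 1 := by rintro rfl; rw [mul_one] at hk; exact hpne_m hk.symm
    have hkm : k ≠ m := by
      intro hkm
      rw [hkm] at hk
      nlinarith [hp.two_le, hm0]
    have hkdvd : k ∣ m := ⟨p, by rw [hk, mul_comm]⟩
    have hkn : k = n := congrArg Subtype.val (hall ⟨k, hkdvd, hk1, hkm⟩)
    refine ⟨p, hp, Or.inr (Or.inr ⟨hpn.symm, ?_⟩)⟩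
    rw [hk, hkn, ← hpn, pow_two]
  case pos =>
    subst hnm
    have adj_of : ∀ (a b : IdealVertex n) (x : ℕ), a.1 ∣ x → b.1 ∣ x → ¬ n ∣ x → a ≠ b →
        (idealGraph n n).Adj a b :=
      fun a b x ha hb hx hne => ⟨hne, fun h => hx (h.trans (Nat.lcm_dvd ha hb))⟩
    by_cases hq : ∀ q : ℕ, q.Prime → q ∣ n → q = p
    · -- n is a prime power p ^ k
      have hk : n = p ^ n.primeFactorsList.length :=
        Nat.eq_prime_pow_of_unique_prime_dvd hm0.ne' (fun {d} hd hdm => hq d hd hdm)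
      set k := n.primeFactorsList.length with hkdef
      have hinj : ∀ i j : ℕ, p ^ i = p ^ j → i = j :=
        fun i j h => Nat.pow_right_injective hp.two_le h
      have hk0 : k ≠ 0 := by rintro h; rw [h, pow_zero] at hk; omega
      have hk1 : k ≠ 1 := by rintro h; rw [h, pow_one] at hk; exact hmnp (hk ▸ hp)
      rcases Nat.lt_or_ge k 4 with hk4 | hk4
      · -- k = 2 or 3
        interval_cases k
        · omega
        · omega
        · exact ⟨p, hp, Or.inl ⟨hk, hk⟩⟩
        · exact ⟨p, hp, Or.inr (Or.inl ⟨hk, hk⟩)⟩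
      · -- k ≥ 4 : triangle p, p^2, p^3
        exfalso
        have hne_n : ∀ i : ℕ, i < k → p ^ i ≠ n := by
          intro i hi h
          rw [hk] at h
          exact absurd (hinj i k h) hi.ne
        have hne1 : ∀ i : ℕ, i ≠ 0 → p ^ i ≠ 1 := fun i hi => (Nat.one_lt_pow hi hp.one_lt).ne'
        have hdvd' : ∀ i : ℕ, i ≤ k → p ^ i ∣ n := fun i hi => hk ▸ pow_dvd_pow p hi
        have hnd3 : ¬ n ∣ p ^ 3 := by
          intro h
          have h1 := Nat.le_of_dvd (pow_pos hp.pos 3) h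
          have h2 : p ^ 3 < p ^ k := pow_lt_pow_right₀ hp.one_lt (by omega)
          rw [← hk] at h2
          omega
        set v1 : IdealVertex n := ⟨p ^ 1, hdvd' 1 (by omega), hne1 1 one_ne_zero, hne_n 1 (by omega)⟩
        set v2 : IdealVertex n := ⟨p ^ 2, hdvd' 2 (by omega), hne1 2 two_ne_zero, hne_n 2 (by omega)⟩
        set v3 : IdealVertex n := ⟨p ^ 3, hdvd' 3 (by omega), hne1 3 three_ne_zero, hne_n 3 (by omega)⟩
        have hne12 : v1 ≠ v2 := fun h => by
          have := hinj 1 2 (congrArg Subtype.val h); omega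
        have hne23 : v2 ≠ v3 := fun h => by
          have := hinj 2 3 (congrArg Subtype.val h); omega
        have hne13 : v1 ≠ v3 := fun h => by
          have := hinj 1 3 (congrArg Subtype.val h); omega
        have h12 : (idealGraph n n).Adj v1 v2 :=
          adj_of v1 v2 (p ^ 3) (pow_dvd_pow p (by omega)) (pow_dvd_pow p (by omega)) hnd3 hne12
        have h23 : (idealGraph n n).Adj v2 v3 :=
          adj_of v2 v3 (p ^ 3) (pow_dvd_pow p (by omega)) (pow_dvd_pow p (by omega)) hnd3 hne23
        have h13 : (idealGraph n n).Adj v1 v3 :=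
          adj_of v1 v3 (p ^ 3) (pow_dvd_pow p (by omega)) (pow_dvd_pow p (by omega)) hnd3 hne13
        exact triangle_not_acyclic h12 h23 h13 ht.IsAcyclic
    · -- n has a second prime factor q
      exfalso
      push_neg at hq
      obtain ⟨q, hqp, hqn, hqne⟩ := hq
      have hpq_ne : p ≠ q := Ne.symm hqne
      have hco : Nat.Coprime p q := (Nat.coprime_primes hp hqp).mpr hpq_ne
      have hpq_dvd : p * q ∣ n := Nat.Coprime.mul_dvd_of_dvd_of_dvd hco hpm hqn
      have hqne_n : q ≠ n := fun h => hmnp (h ▸ hqp)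
      have hvp : IdealVertex n := ⟨p, hpm, hp.one_lt.ne', hpne_m⟩
      by_cases hpq : p * q = n
      · -- n = pq : vertex p is isolated, vertex q is different, contradiction
        have hiso : ∀ u, ¬ (idealGraph n n).Adj ⟨p, hpm, hp.one_lt.ne', hpne_m⟩ u := by
          rintro ⟨d, hdn, hd1, hdm⟩ ⟨hne, h2⟩
          apply h2
          have hqd : q ∣ d := by
            by_contra hqd
            have hco2 : Nat.Coprime d q := ((hqp.coprime_iff_not_dvd).mpr hqd).symm
            have hdp : d ∣ p := hco2.dvd_of_dvd_mul_right (by rw [hpq]; exact hdn)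
            rcases hp.eq_one_or_self_of_dvd d hdp with h | h
            · exact hd1 h
            · exact hne (Subtype.ext h).symm
          have hdl : p * q ∣ Nat.lcm p d :=
            Nat.Coprime.mul_dvd_of_dvd_of_dvd hco (Nat.dvd_lcm_left p d)
              (hqd.trans (Nat.dvd_lcm_right p d))
          rw [hpq] at hdl
          exact hdl
        refine no_adj_not_reachable hiso ?_
          (ht.isConnected.preconnected _ ⟨q, hqn, hqp.one_lt.ne', hqne_n⟩)
        intro h
        exact hpq_ne (congrArg Subtype.val h)
      · -- pq proper divisor : triangle p, q, pq
        have hpq1 : p * q ≠ 1 := by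
          have := hp.two_le; have := hqp.two_le; nlinarith
        have hnpq : ¬ n ∣ p * q := by
          intro h
          exact hpq (Nat.dvd_antisymm hpq_dvd h)
        set vp : IdealVertex n := ⟨p, hpm, hp.one_lt.ne', hpne_m⟩
        set vq : IdealVertex n := ⟨q, hqn, hqp.one_lt.ne', hqne_n⟩
        set vpq : IdealVertex n := ⟨p * q, hpq_dvd, hpq1, hpq⟩
        have hne_pq : vp ≠ vq := fun h => hpq_ne (congrArg Subtype.val h)
        have hne_ppq : vp ≠ vpq := fun h => by
          have h' : p * 1 = p * q := by rw [mul_one]; exact congrArg Subtype.val h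
          exact hqp.one_lt.ne (Nat.eq_of_mul_eq_mul_left hp.pos h')
        have hne_qpq : vq ≠ vpq := fun h => by
          have h' : 1 * q = p * q := by rw [one_mul]; exact congrArg Subtype.val h
          exact hp.one_lt.ne (Nat.eq_of_mul_eq_mul_right hqp.pos h')
        have h1 : (idealGraph n n).Adj vp vq :=
          adj_of vp vq (p * q) (Dvd.intro q rfl) (Dvd.intro_left p rfl) hnpq hne_pq
        have h2 : (idealGraph n n).Adj vq vpq :=
          adj_of vq vpq (p * q) (Dvd.intro_left p rfl) dvd_rfl hnpq hne_qpq
        have h3 : (idealGraph n n).Adj vp vpq :=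
          adj_of vp vpq (p * q) (Dvd.intro q rfl) dvd_rfl hnpq hne_ppq
        exact triangle_not_acyclic h1 h2 h3 ht.IsAcyclic


/-- `G_n(Z_m)` is a tree iff it is a star; moreover it is a tree iff `n = m = p₁²`,
`n = m = p₁³`, or `n = p₁` and `m = p₁²` for some prime `p₁`. -/
theorem idealGraph_isTree_iff (n m : ℕ) (hn : 1 < n) (hm : 1 < m) (hdvd : n ∣ m) :
    ((idealGraph n m).IsTree ↔ (idealGraph n m).IsStarGraph) ∧
    ((idealGraph n m).IsTree ↔ ∃ p₁ : ℕ, p₁.Prime ∧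
      ((n = p₁ ^ 2 ∧ m = p₁ ^ 2) ∨ (n = p₁ ^ 3 ∧ m = p₁ ^ 3) ∨ (n = p₁ ∧ m = p₁ ^ 2))) := by
  constructor
  · exact ⟨fun ht => star_of_cases n m (tree_imp_cases n m hn hm hdvd ht), star_isTree⟩
  · exact ⟨tree_imp_cases n m hn hm hdvd, fun hP => star_isTree (star_of_cases n m hP)⟩
end

section
/- Let n, m > 1 be integers with n dividing m. Then G_n(Z_m) is a null graph (has no edges) if and only if one of the following holds: (i) there exist distinct primes p₁, p₂ and α₁ ≥ 1 such that n = p₁ and m = p₁^{α₁}p₂; (ii) there exist a prime p₁ and α₁ ≥ 1 such that n = p₁ and m = p₁^{α₁}; (iii) there exist a prime p₁ and α₁ ≥ 2 such that n = p₁² and m = p₁^{α₁}; (iv) there exist distinct primes p₁, p₂ such that n = m = p₁p₂. -/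
/-- Divisor-level formulation of nullity. -/
def NullD (n m : ℕ) : Prop :=
  ∀ d₁ d₂ : ℕ, d₁ ∣ m → d₂ ∣ m → d₁ ≠ 1 → d₁ ≠ m → d₂ ≠ 1 → d₂ ≠ m → d₁ ≠ d₂ →
    n ∣ Nat.lcm d₁ d₂

lemma nullD_iff (n m : ℕ) :
    (∀ a b : IdealVertex m, ¬ (idealGraph n m).Adj a b) ↔ NullD n m := by
  constructor
  · intro h d₁ d₂ h1 h2 h3 h4 h5 h6 hne
    have := h ⟨d₁, h1, h3, h4⟩ ⟨d₂, h2, h5, h6⟩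
    by_contra hnd
    exact this ⟨fun hEq => hne (congrArg Subtype.val hEq), hnd⟩
  · rintro h a b ⟨hab, hdvd⟩
    have hne : a.1 ≠ b.1 := fun hEq => hab (Subtype.ext hEq)
    exact hdvd (h a.1 b.1 a.2.1 b.2.1 a.2.2.1 a.2.2.2 b.2.2.1 b.2.2.2 hne)

/-- If the graph is null and `u ≠ v` are primes dividing `m`, then `n ∣ u * v`. -/
lemma null_dvd_mul {n m u v : ℕ} (hnull : NullD n m) (hu : u.Prime) (hv : v.Prime)
    (hum : u ∣ m) (hvm : v ∣ m) (huv : u ≠ v) : n ∣ u * v := by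
  have hunm : u ≠ m := by
    rintro rfl
    exact huv ((Nat.prime_dvd_prime_iff_eq hv hu).1 hvm).symm
  have hvnm : v ≠ m := by
    rintro rfl
    exact huv ((Nat.prime_dvd_prime_iff_eq hu hv).1 hum)
  have := hnull u v hum hvm hu.ne_one hunm hv.ne_one hvnm huv
  rwa [Nat.Coprime.lcm_eq_mul ((Nat.coprime_primes hu hv).2 huv)] at this

/-- In the two-prime case with `n` a power of the first prime, nullity forces
`n = p` and `b = 1`. -/
lemma null_two_primes {n m p q a b c : ℕ} (hp : p.Prime) (hq : q.Prime) (hpq : p ≠ q)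
    (ha : 1 ≤ a) (hb : 1 ≤ b) (hc : 1 ≤ c) (hmm : m = p ^ a * q ^ b) (hnn : n = p ^ c)
    (hnull : NullD n m) : n = p ∧ m = p ^ a * q := by
  have hqm : q ∣ m := by
    rw [hmm]; exact Dvd.dvd.mul_left (dvd_pow_self q (by omega)) _
  have hpm : p ∣ m := by
    rw [hmm]; exact Dvd.dvd.mul_right (dvd_pow_self p (by omega)) _
  have hqnm : q ≠ m := by
    rintro rfl; exact hpq ((Nat.prime_dvd_prime_iff_eq hp hq).1 hpm)
  have hpnm : p ≠ m := by
    rintro rfl; exact hpq.symm ((Nat.prime_dvd_prime_iff_eq hq hp).1 hqm)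
  -- first: b = 1
  have hb1 : b = 1 := by
    by_contra hb2
    have hb2 : 2 ≤ b := by omega
    have hqbm : q ^ b ∣ m := by rw [hmm]; exact Dvd.dvd.mul_left (pow_dvd_pow q le_rfl) _
    have hqbne1 : q ^ b ≠ 1 := (Nat.one_lt_pow (by omega) hq.one_lt).ne'
    have hqbnem : q ^ b ≠ m := by
      rintro rfl
      exact hpq (((Nat.prime_dvd_prime_iff_eq hp hq).1 (hp.dvd_of_dvd_pow hpm)))
    have hqne : q ≠ q ^ b := by
      intro hEq
      have : q ^ 1 = q ^ b := by simpa using hEq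
      have := Nat.pow_right_injective hq.two_le this
      omega
    have := hnull q (q ^ b) hqm hqbm hq.ne_one hqnm hqbne1 hqbnem hqne
    have hlcm : Nat.lcm q (q ^ b) ∣ q ^ b :=
      Nat.lcm_dvd (dvd_pow_self q (by omega)) dvd_rfl
    have hn : n ∣ q ^ b := this.trans hlcm
    have hpd : p ∣ q ^ b := dvd_trans (by rw [hnn]; exact dvd_pow_self p (by omega)) hn
    exact hpq (hp.dvd_of_dvd_pow hpd |> fun h => (Nat.prime_dvd_prime_iff_eq hp hq).1
      ((Nat.prime_dvd_prime_iff_eq hp hq).2 ((Nat.prime_dvd_prime_iff_eq hp hq).1 h)))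
  -- second: c = 1
  have hc1 : c = 1 := by
    by_contra hc2
    have hc2 : 2 ≤ c := by omega
    have := hnull p q hpm hqm hp.ne_one hpnm hq.ne_one hqnm hpq
    rw [Nat.Coprime.lcm_eq_mul ((Nat.coprime_primes hp hq).2 hpq), hnn] at this
    have hp2 : p ^ 2 ∣ p * q := dvd_trans (pow_dvd_pow p hc2) this
    have : p * p ∣ p * q := by rwa [pow_two] at hp2
    have hpdq : p ∣ q := (mul_dvd_mul_iff_left hp.pos.ne').1 this
    exact hpq ((Nat.prime_dvd_prime_iff_eq hp hq).1 hpdq)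
  constructor
  · rw [hnn, hc1, pow_one]
  · rw [hmm, hb1, pow_one]

/-- `G_n(Z_m)` is a null graph (has no edges) iff one of four arithmetic conditions holds. -/
theorem idealGraph_null_iff (n m : ℕ) (hn : 1 < n) (hm : 1 < m) (hdvd : n ∣ m) :
    (∀ a b : IdealVertex m, ¬ (idealGraph n m).Adj a b) ↔
      (∃ p₁ p₂ α₁ : ℕ, p₁.Prime ∧ p₂.Prime ∧ p₁ ≠ p₂ ∧ 1 ≤ α₁ ∧
        n = p₁ ∧ m = p₁ ^ α₁ * p₂) ∨
      (∃ p₁ α₁ : ℕ, p₁.Prime ∧ 1 ≤ α₁ ∧ n = p₁ ∧ m = p₁ ^ α₁) ∨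
      (∃ p₁ α₁ : ℕ, p₁.Prime ∧ 2 ≤ α₁ ∧ n = p₁ ^ 2 ∧ m = p₁ ^ α₁) ∨
      (∃ p₁ p₂ : ℕ, p₁.Prime ∧ p₂.Prime ∧ p₁ ≠ p₂ ∧ n = p₁ * p₂ ∧ m = p₁ * p₂) := by
  rw [nullD_iff]
  have hm0 : m ≠ 0 := by omega
  constructor
  · -- forward direction
    intro hnull
    by_cases hpp : ∀ r : ℕ, r.Prime → r ∣ m → r = m.minFac
    · -- m is a prime power
      set p := m.minFac with hpdef
      have hp : p.Prime := Nat.minFac_prime (by omega)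
      obtain ⟨a, hma⟩ : ∃ a, m = p ^ a :=
        ⟨m.primeFactorsList.length, Nat.eq_prime_pow_of_unique_prime_dvd hm0
          (fun {d} hd hdm => hpp d hd hdm)⟩
      have ha1 : 1 ≤ a := by
        rcases Nat.eq_zero_or_pos a with h | h
        · rw [h, pow_zero] at hma; omega
        · exact h
      obtain ⟨c, hc, hnc⟩ := (Nat.dvd_prime_pow hp).1 (hma ▸ hdvd)
      have hc1 : 1 ≤ c := by
        rcases Nat.eq_zero_or_pos c with h | h
        · rw [h, pow_zero] at hnc; omega
        · exact h
      have hcle2 : c ≤ 2 := by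
        by_contra hc3
        have hc3 : 3 ≤ c := by omega
        have ha3 : 3 ≤ a := le_trans hc3 hc
        have hpdvd : p ∣ m := by rw [hma]; exact dvd_pow_self p (by omega)
        have hp2dvd : p ^ 2 ∣ m := by rw [hma]; exact pow_dvd_pow p (by omega)
        have hpnem : p ≠ m := by
          rw [hma]; intro hEq
          have : p ^ 1 = p ^ a := by simpa using hEq
          have := Nat.pow_right_injective hp.two_le this; omega
        have hp2nem : p ^ 2 ≠ m := by
          rw [hma]; intro hEq
          have := Nat.pow_right_injective hp.two_le hEq; omega
        have hp2ne1 : p ^ 2 ≠ 1 := (Nat.one_lt_pow (by omega) hp.one_lt).ne'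
        have hpnep2 : p ≠ p ^ 2 := by
          intro hEq
          have : p ^ 1 = p ^ 2 := by simpa using hEq
          have := Nat.pow_right_injective hp.two_le this; omega
        have := hnull p (p ^ 2) hpdvd hp2dvd hp.ne_one hpnem hp2ne1 hp2nem hpnep2
        have hlcm : Nat.lcm p (p ^ 2) ∣ p ^ 2 :=
          Nat.lcm_dvd (dvd_pow_self p (by omega)) dvd_rfl
        have : p ^ c ∣ p ^ 2 := hnc ▸ (this.trans hlcm)
        have := (Nat.pow_dvd_pow_iff_le_right hp.one_lt).1 this
        omega
      interval_cases c
      · exact Or.inr (Or.inl ⟨p, a, hp, ha1, by rw [hnc, pow_one], hma⟩)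
      · exact Or.inr (Or.inr (Or.inl ⟨p, a, hp, hc, hnc, hma⟩))
    · -- m has at least two prime factors
      push_neg at hpp
      obtain ⟨q, hq, hqm, hqne⟩ := hpp
      set p := m.minFac with hpdef
      have hp : p.Prime := Nat.minFac_prime (by omega)
      have hpm : p ∣ m := Nat.minFac_dvd m
      have hpq : p ≠ q := fun h => hqne h.symm
      -- every prime dividing m is p or q
      have hkey : ∀ r : ℕ, r.Prime → r ∣ m → r = p ∨ r = q := by
        intro r hr hrm
        by_contra hcon
        push_neg at hcon
        obtain ⟨hrp, hrq⟩ := hcon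
        set s := n.minFac with hsdef
        have hs : s.Prime := Nat.minFac_prime (by omega)
        have hsn : s ∣ n := Nat.minFac_dvd n
        have h1 := (hs.dvd_mul.1 (hsn.trans (null_dvd_mul hnull hp hq hpm hqm hpq)))
        have h2 := (hs.dvd_mul.1 (hsn.trans (null_dvd_mul hnull hp hr hpm hrm
          (fun h => hrp h.symm))))
        have h3 := (hs.dvd_mul.1 (hsn.trans (null_dvd_mul hnull hq hr hqm hrm
          (fun h => hrq h.symm))))
        have e1 : s = p ∨ s = q := h1.imp
          (fun h => (Nat.prime_dvd_prime_iff_eq hs hp).1 h)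
          (fun h => (Nat.prime_dvd_prime_iff_eq hs hq).1 h)
        have e2 : s = p ∨ s = r := h2.imp
          (fun h => (Nat.prime_dvd_prime_iff_eq hs hp).1 h)
          (fun h => (Nat.prime_dvd_prime_iff_eq hs hr).1 h)
        have e3 : s = q ∨ s = r := h3.imp
          (fun h => (Nat.prime_dvd_prime_iff_eq hs hq).1 h)
          (fun h => (Nat.prime_dvd_prime_iff_eq hs hr).1 h)
        rcases e1 with h | h
        · rcases e3 with h' | h'
          · exact hpq (h.symm.trans h')
          · exact hrp (h.symm.trans h').symm
        · rcases e2 with h' | h'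
          · exact hpq (h'.symm.trans h)
          · exact hrq (h'.symm.trans h)
      -- m = p^a * q^b
      have hsupp : m.primeFactors = {p, q} := by
        ext r
        simp only [Nat.mem_primeFactors, Finset.mem_insert, Finset.mem_singleton]
        constructor
        · rintro ⟨hr, hrm, -⟩; exact hkey r hr hrm
        · rintro (rfl | rfl)
          · exact ⟨hp, hpm, hm0⟩
          · exact ⟨hq, hqm, hm0⟩
      set a := m.factorization p with hadef
      set b := m.factorization q with hbdef
      have hmab : m = p ^ a * q ^ b := by
        conv_lhs => rw [← Nat.factorization_prod_pow_eq_self hm0]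
        rw [Finsupp.prod_of_support_subset _ (by rw [Nat.support_factorization, hsupp])
          _ (fun i _ => pow_zero i), Finset.prod_pair hpq]
      have ha1 : 1 ≤ a := hp.factorization_pos_of_dvd hm0 hpm
      have hb1 : 1 ≤ b := hq.factorization_pos_of_dvd hm0 hqm
      set c := n.factorization p with hcdef
      set d := n.factorization q with hddef
      have hn0 : n ≠ 0 := by omega
      have hnsub : n.primeFactors ⊆ {p, q} :=
        hsupp ▸ Nat.primeFactors_mono hdvd hm0
      have hncd : n = p ^ c * q ^ d := by
        conv_lhs => rw [← Nat.factorization_prod_pow_eq_self hn0]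
        rw [Finsupp.prod_of_support_subset _ hnsub _ (fun i _ => pow_zero i),
          Finset.prod_pair hpq]
      have hcd1 : 1 ≤ c + d := by
        by_contra h
        have hc0 : c = 0 := by omega
        have hd0 : d = 0 := by omega
        rw [hc0, hd0, pow_zero, pow_zero] at hncd; omega
      by_cases hc0 : c = 0
      · -- n = q ^ d, use symmetric case
        have hd1 : 1 ≤ d := by omega
        have hnq : n = q ^ d := by rw [hncd, hc0, pow_zero, one_mul]
        have hmba : m = q ^ b * p ^ a := by rw [hmab, mul_comm]
        obtain ⟨hn1, hm1⟩ := null_two_primes hq hp hpq.symm hb1 ha1 hd1 hmba hnq hnull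
        exact Or.inl ⟨q, p, b, hq, hp, hpq.symm, hb1, hn1, hm1⟩
      · have hc1 : 1 ≤ c := by omega
        by_cases hd0 : d = 0
        · have hnp : n = p ^ c := by rw [hncd, hd0, pow_zero, mul_one]
          obtain ⟨hn1, hm1⟩ := null_two_primes hp hq hpq ha1 hb1 hc1 hmab hnp hnull
          exact Or.inl ⟨p, q, a, hp, hq, hpq, ha1, hn1, hm1⟩
        · -- both primes divide n : show a = b = 1 and n = m = p*q
          have hd1 : 1 ≤ d := by omega
          have hqn : q ∣ n := by
            rw [hncd]; exact Dvd.dvd.mul_left (dvd_pow_self q (by omega)) _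
          have hpn : p ∣ n := by
            rw [hncd]; exact Dvd.dvd.mul_right (dvd_pow_self p (by omega)) _
          have hqnm : q ≠ m := by
            intro hEq
            exact hpq ((Nat.prime_dvd_prime_iff_eq hp hq).1 (hEq ▸ hpm))
          have hpnm : p ≠ m := by
            intro hEq
            exact hpq.symm ((Nat.prime_dvd_prime_iff_eq hq hp).1 (hEq ▸ hqm))
          have key : ∀ u v e : ℕ, u.Prime → v.Prime → u ≠ v → v ∣ n → v ∣ m → u ∣ m →
              u ≠ m → 2 ≤ e → ¬ (u ^ e ∣ m) := by
            intro u v e hu hv huv hvn hvm hum hunm he hue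
            have huene1 : u ^ e ≠ 1 := (Nat.one_lt_pow (by omega) hu.one_lt).ne'
            have huenem : u ^ e ≠ m := by
              intro hEq
              have hvue : v ∣ u ^ e := hEq ▸ hvm
              exact huv (((Nat.prime_dvd_prime_iff_eq hv hu).1 (hv.dvd_of_dvd_pow hvue))).symm
            have hune : u ≠ u ^ e := by
              intro hEq
              have : u ^ 1 = u ^ e := by simpa using hEq
              have := Nat.pow_right_injective hu.two_le this; omega
            have hdl := hnull u (u ^ e) hum hue hu.ne_one hunm huene1 huenem hune
            have hlcm : Nat.lcm u (u ^ e) ∣ u ^ e :=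
              Nat.lcm_dvd (dvd_pow_self u (by omega)) dvd_rfl
            have hvd : v ∣ u ^ e := hvn.trans (hdl.trans hlcm)
            exact huv ((Nat.prime_dvd_prime_iff_eq hv hu).1 (hv.dvd_of_dvd_pow hvd)).symm
          have ha' : a = 1 := by
            by_contra ha2
            exact key p q a hp hq hpq hqn hqm hpm hpnm (by omega)
              (by rw [hmab]; exact Dvd.dvd.mul_right (pow_dvd_pow p le_rfl) _)
          have hb' : b = 1 := by
            by_contra hb2
            exact key q p b hq hp hpq.symm hpn hpm hqm hqnm (by omega)
              (by rw [hmab]; exact Dvd.dvd.mul_left (pow_dvd_pow q le_rfl) _)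
          have hcle : c ≤ a := by
            have := (Nat.factorization_le_iff_dvd hn0 hm0).2 hdvd
            exact this p
          have hdle : d ≤ b := by
            have := (Nat.factorization_le_iff_dvd hn0 hm0).2 hdvd
            exact this q
          have hc' : c = 1 := by omega
          have hd' : d = 1 := by omega
          refine Or.inr (Or.inr (Or.inr ⟨p, q, hp, hq, hpq, ?_, ?_⟩))
          · rw [hncd, hc', hd', pow_one, pow_one]
          · rw [hmab, ha', hb', pow_one, pow_one]
  · -- reverse direction
    rintro (⟨p, q, α, hp, hq, hpq, hα, hnp, hmpq⟩ | ⟨p, α, hp, hα, hnp, hmp⟩ |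
      ⟨p, α, hp, hα, hnp, hmp⟩ | ⟨p, q, hp, hq, hpq, hnpq, hmpq⟩)
    · -- n = p, m = p^α * q
      intro d₁ d₂ h1 h2 h3 h4 h5 h6 hne
      have claim : ∀ d : ℕ, d ∣ m → d ≠ 1 → p ∣ d ∨ d = q := by
        intro d hdm hd1
        by_cases hpd : p ∣ d
        · exact Or.inl hpd
        · right
          have hcop : Nat.Coprime d (p ^ α) :=
            Nat.Coprime.pow_right _ ((Nat.coprime_comm.1 (hp.coprime_iff_not_dvd.2 hpd)))
          have hdq : d ∣ q := hcop.dvd_of_dvd_mul_left (by rwa [hmpq] at hdm)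
          rcases (Nat.Prime.eq_one_or_self_of_dvd hq d hdq) with h | h
          · exact absurd h hd1
          · exact h
      rcases claim d₁ h1 h3 with hpd | rfl
      · exact dvd_trans (by rw [hnp]; exact hpd) (Nat.dvd_lcm_left _ _)
      · rcases claim d₂ h2 h5 with hpd | rfl
        · exact dvd_trans (by rw [hnp]; exact hpd) (Nat.dvd_lcm_right _ _)
        · exact absurd rfl hne
    · -- n = p, m = p^α
      intro d₁ d₂ h1 h2 h3 h4 h5 h6 hne
      obtain ⟨i, hi, rfl⟩ := (Nat.dvd_prime_pow hp).1 (hmp ▸ h1)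
      have hi1 : 1 ≤ i := by
        rcases Nat.eq_zero_or_pos i with h | h
        · rw [h, pow_zero] at h3; exact absurd rfl h3
        · exact h
      exact dvd_trans (by rw [hnp]; exact dvd_pow_self p (by omega)) (Nat.dvd_lcm_left _ _)
    · -- n = p^2, m = p^α
      intro d₁ d₂ h1 h2 h3 h4 h5 h6 hne
      obtain ⟨i, hi, rfl⟩ := (Nat.dvd_prime_pow hp).1 (hmp ▸ h1)
      obtain ⟨j, hj, rfl⟩ := (Nat.dvd_prime_pow hp).1 (hmp ▸ h2)
      have hi1 : 1 ≤ i := by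
        rcases Nat.eq_zero_or_pos i with h | h
        · rw [h, pow_zero] at h3; exact absurd rfl h3
        · exact h
      have hj1 : 1 ≤ j := by
        rcases Nat.eq_zero_or_pos j with h | h
        · rw [h, pow_zero] at h5; exact absurd rfl h5
        · exact h
      have hij : i ≠ j := fun h => hne (by rw [h])
      rcases le_or_gt 2 i with h | h
      · exact dvd_trans (by rw [hnp]; exact pow_dvd_pow p h) (Nat.dvd_lcm_left _ _)
      · have hj2 : 2 ≤ j := by omega
        exact dvd_trans (by rw [hnp]; exact pow_dvd_pow p hj2) (Nat.dvd_lcm_right _ _)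
    · -- n = m = p * q
      intro d₁ d₂ h1 h2 h3 h4 h5 h6 hne
      have claim : ∀ d : ℕ, d ∣ m → d ≠ 1 → d ≠ m → d = p ∨ d = q := by
        intro d hdm hd1 hdm'
        by_cases hpd : p ∣ d
        · left
          obtain ⟨e, rfl⟩ := hpd
          have : p * e ∣ p * q := by rwa [hmpq] at hdm
          have he : e ∣ q := (mul_dvd_mul_iff_left hp.pos.ne').1 this
          rcases (Nat.Prime.eq_one_or_self_of_dvd hq e he) with h | h
          · rw [h, mul_one]
          · exact absurd (by rw [h, ← hmpq]) hdm'
        · right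
          have hcop : Nat.Coprime d p :=
            Nat.coprime_comm.1 (hp.coprime_iff_not_dvd.2 hpd)
          have hdq : d ∣ q := hcop.dvd_of_dvd_mul_left (by rwa [hmpq] at hdm)
          rcases (Nat.Prime.eq_one_or_self_of_dvd hq d hdq) with h | h
          · exact absurd h hd1
          · exact h
      have hcop : Nat.Coprime p q := (Nat.coprime_primes hp hq).2 hpq
      rcases claim d₁ h1 h3 h4 with rfl | rfl
      · rcases claim d₂ h2 h5 h6 with rfl | rfl
        · exact absurd rfl hne
        · rw [hcop.lcm_eq_mul, hnpq]
      · rcases claim d₂ h2 h5 h6 with rfl | rfl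
        · rw [Nat.lcm_comm, hcop.lcm_eq_mul, hnpq]
        · exact absurd rfl hne
end

section
/- Let n, m > 1 be integers with n dividing m, and suppose G_n(Z_m) is not a null graph. If it is not the case that n = p₁p₂ and m = p₁^{α₁}p₂ for distinct primes p₁, p₂ and some α₁ ≥ 2, then for every divisor d of m with d ≠ 1, m, the vertex dZ_m is an isolated vertex of G_n(Z_m) if and only if n divides d. In the exceptional case n = p₁p₂, m = p₁^{α₁}p₂ with α₁ ≥ 2, the graph G_n(Z_m) is isomorphic to the disjoint union of the complete graph K_{α₁} and the null graph on α₁ vertices. -/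
/-- Divisors of `p^α * q` for distinct primes are of the form `p^i` or `p^i*q`. -/
lemma divisor_classify {p q α d : ℕ} (hp : p.Prime) (hq : q.Prime)
    (hd : d ∣ p ^ α * q) : ∃ i ≤ α, d = p ^ i ∨ d = p ^ i * q := by
  obtain ⟨a, b, ha, hb, rfl⟩ := exists_dvd_and_dvd_of_dvd_mul hd
  obtain ⟨i, hi, rfl⟩ := (Nat.dvd_prime_pow hp).1 ha
  rcases (Nat.dvd_prime hq).1 hb with rfl | rfl
  · exact ⟨i, hi, Or.inl (mul_one _)⟩
  · exact ⟨i, hi, Or.inr rfl⟩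

lemma lcm_dvd_mul' (a b : ℕ) : Nat.lcm a b ∣ a * b :=
  Nat.lcm_dvd (dvd_mul_right a b) (dvd_mul_left b a)

/-- Key lemma: if the graph is not null and some vertex `v` with `n ∤ v` is
isolated, then we are in the exceptional case. -/
lemma key_lemma (n m : ℕ) (hn : 1 < n) (hm : 1 < m) (hdvd : n ∣ m)
    (hnotnull : ∃ a b : IdealVertex m, (idealGraph n m).Adj a b)
    (v : IdealVertex m) (hiso : ∀ u : IdealVertex m, ¬ (idealGraph n m).Adj v u)
    (hnv : ¬ n ∣ v.1) :
    ∃ p₁ p₂ α₁ : ℕ, p₁.Prime ∧ p₂.Prime ∧ p₁ ≠ p₂ ∧ 2 ≤ α₁ ∧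
      n = p₁ * p₂ ∧ m = p₁ ^ α₁ * p₂ := by
  obtain ⟨hdm, hd1, hdmne⟩ := v.2
  have hm0 : m ≠ 0 := by omega
  have hp0 : v.1 ≠ 0 := by rintro h; rw [h] at hdm; exact hm0 (Nat.eq_zero_of_zero_dvd hdm)
  have hp2 : 2 ≤ v.1 := by omega
  have hplt : v.1 < m := lt_of_le_of_ne (Nat.le_of_dvd (by omega) hdm) hdmne
  -- every vertex other than v has lcm with v divisible by n
  have hlcm : ∀ u : IdealVertex m, u.1 ≠ v.1 → n ∣ Nat.lcm v.1 u.1 := by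
    intro u hu
    by_contra h
    exact hiso u ⟨fun he => hu (he ▸ rfl), h⟩
  -- v.1 is prime
  have hp : v.1.Prime := by
    by_contra hpp
    obtain ⟨e, he, he2, helt⟩ := Nat.exists_dvd_of_not_prime2 hp2 hpp
    have hne : e ≠ v.1 := by omega
    have := hlcm ⟨e, he.trans hdm, by omega, by omega⟩ hne
    exact hnv (this.trans (Nat.lcm_dvd dvd_rfl he))
  set p := v.1 with hpdef
  have hmnp : ¬ m.Prime := fun h => by
    rcases (Nat.Prime.eq_one_or_self_of_dvd h p hdm) with h1 | h1 <;> omega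
  by_cases hq : ∃ q, q.Prime ∧ q ∣ m ∧ q ≠ p
  · obtain ⟨q, hqp, hqm, hqne⟩ := hq
    have hq1 : q ≠ 1 := hqp.ne_one
    have hqmne : q ≠ m := fun h => hmnp (h ▸ hqp)
    have hcop : Nat.Coprime p q := (Nat.coprime_primes hp hqp).2 (Ne.symm hqne)
    have hnpq : n ∣ p * q := by
      have := hlcm ⟨q, hqm, hq1, hqmne⟩ hqne
      rwa [hcop.lcm_eq_mul] at this
    -- any prime dividing m is p or q
    have hprimes : ∀ r, r.Prime → r ∣ m → r = p ∨ r = q := by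
      intro r hr hrm
      by_contra hcon
      push_neg at hcon
      have hrne : r ≠ p := hcon.1
      have hrmne : r ≠ m := fun h => hmnp (h ▸ hr)
      have h1 := hlcm ⟨r, hrm, hr.ne_one, hrmne⟩ hrne
      have h2 : n ∣ p * r := by
        have hcop2 : Nat.Coprime p r := (Nat.coprime_primes hp hr).2 (Ne.symm hrne)
        rwa [hcop2.lcm_eq_mul] at h1
      have h3 : n ∣ Nat.gcd (p * q) (p * r) := Nat.dvd_gcd hnpq h2
      rw [Nat.gcd_mul_left, Nat.Coprime.gcd_eq_one ((Nat.coprime_primes hqp hr).2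
        (fun h => hcon.2 h.symm)), mul_one] at h3
      exact hnv h3
    -- n = q or n = p*q
    have hncase : n = q ∨ n = p * q := by
      obtain ⟨a, b, ha, hb, hab⟩ := exists_dvd_and_dvd_of_dvd_mul hnpq
      rcases (Nat.dvd_prime hp).1 ha with h1 | h1 <;>
        rcases (Nat.dvd_prime hqp).1 hb with h2 | h2 <;>
          rw [h1, h2] at hab
      · rw [mul_one] at hab; omega
      · rw [one_mul] at hab; exact Or.inl hab
      · rw [mul_one] at hab; exact absurd (hab ▸ dvd_rfl) hnv
      · exact Or.inr hab
    rcases hncase with hnq | hnq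
    · -- n = q : contradiction with nonnull
      exfalso
      have hdvdq : ∀ u : IdealVertex m, u.1 ≠ p → q ∣ u.1 := by
        intro u hu
        have h1 := hlcm u hu
        rw [hnq] at h1
        have h2 : q ∣ p * u.1 := h1.trans (lcm_dvd_mul' _ _)
        rcases (Nat.Prime.dvd_mul hqp).1 h2 with h3 | h3
        · exact absurd ((Nat.prime_dvd_prime_iff_eq hqp hp).1 h3) hqne
        · exact h3
      obtain ⟨x, y, hxy⟩ := hnotnull
      have hx : ¬ q ∣ Nat.lcm x.1 y.1 := hnq ▸ hxy.2
      by_cases hxp : x.1 = p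
      · have hyp : y.1 ≠ p := fun h => hxy.1 (Subtype.ext (hxp.trans h.symm))
        exact hx ((hdvdq y hyp).trans (Nat.dvd_lcm_right _ _))
      · exact hx ((hdvdq x hxp).trans (Nat.dvd_lcm_left _ _))
    · -- n = p * q : exceptional case
      -- p² does not divide m
      have hpsq : ¬ p ^ 2 ∣ m := by
        intro hps
        have hne1 : p ^ 2 ≠ 1 := (Nat.one_lt_pow (by norm_num) hp.one_lt).ne'
        have hnem : p ^ 2 ≠ m := by
          intro h
          have : q ∣ p ^ 2 := h ▸ hqm
          exact hqne ((Nat.prime_dvd_prime_iff_eq hqp hp).1 (hqp.dvd_of_dvd_pow this))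
        have hnep : p ^ 2 ≠ p := by
          have := hp.one_lt
          nlinarith [sq_nonneg p]
        have h1 := hlcm ⟨p ^ 2, hps, hne1, hnem⟩ hnep
        rw [hnq] at h1
        have h2 : Nat.lcm p (p ^ 2) ∣ p ^ 2 :=
          Nat.lcm_dvd (dvd_pow_self p (by norm_num)) dvd_rfl
        have h3 : q ∣ p ^ 2 := dvd_trans (Dvd.intro_left p rfl) (h1.trans h2)
        exact hqne ((Nat.prime_dvd_prime_iff_eq hqp hp).1 (hqp.dvd_of_dvd_pow h3))
      set α := m.factorization q with hα
      set c := m / q ^ α with hc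
      have hmc : q ^ α * c = m := Nat.ordProj_mul_ordCompl_eq_self m q
      have hccop : Nat.Coprime q c := Nat.coprime_ordCompl hqp hm0
      have hc0 : c ≠ 0 := by
        intro h; rw [h, mul_zero] at hmc; exact hm0 hmc.symm
      have hcprimes : ∀ {d : ℕ}, d.Prime → d ∣ c → d = p := by
        intro d hd hdc
        have hdm' : d ∣ m := hdc.trans (Dvd.intro_left _ hmc)
        rcases hprimes d hd hdm' with h | h
        · exact h
        · exfalso
          rw [h] at hdc
          have h4 := Nat.dvd_gcd (dvd_refl q) hdc
          rw [Nat.Coprime.gcd_eq_one hccop] at h4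
          exact hqp.ne_one (Nat.eq_one_of_dvd_one h4)
      have hceq : c = p ^ c.primeFactorsList.length :=
        Nat.eq_prime_pow_of_unique_prime_dvd hc0 hcprimes
      have hpc : p ∣ c := by
        have hpm : p ∣ q ^ α * c := hmc ▸ hdm
        have hcop' : Nat.Coprime p (q ^ α) := (Nat.Coprime.pow_right _ hcop)
        exact hcop'.dvd_of_dvd_mul_left hpm
      have hlen : c.primeFactorsList.length = 1 := by
        rcases Nat.lt_or_ge c.primeFactorsList.length 2 with h | h
        · rcases Nat.lt_or_ge c.primeFactorsList.length 1 with h' | h'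
          · exfalso
            have h0 : c.primeFactorsList.length = 0 := by omega
            rw [hceq, h0, pow_zero] at hpc
            exact hp.ne_one (Nat.eq_one_of_dvd_one hpc)
          · omega
        · exfalso
          have : p ^ 2 ∣ c := hceq ▸ pow_dvd_pow p h
          exact hpsq (this.trans (Dvd.intro_left _ hmc))
      have hcp : c = p := by rw [hceq, hlen, pow_one]
      have hmqa : m = q ^ α * p := by rw [← hmc, hcp]
      have hα1 : 1 ≤ α := Nat.Prime.factorization_pos_of_dvd hqp hm0 hqm
      have hα2 : 2 ≤ α := by
        by_contra h
        have hα1' : α = 1 := by omega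
        rw [hα1', pow_one] at hmqa
        -- m = q * p, vertices are p and q only; graph is null
        obtain ⟨x, y, hxy⟩ := hnotnull
        have hclass : ∀ u : IdealVertex m, u.1 = p ∨ u.1 = q := by
          intro u
          obtain ⟨hum, hu1, hume⟩ := u.2
          have hum' : u.1 ∣ q ^ 1 * p := by rw [pow_one, ← hmqa]; exact hum
          obtain ⟨i, hi, hcase⟩ := divisor_classify hqp hp hum'
          interval_cases i
          · rcases hcase with h | h
            · rw [pow_zero] at h; exact absurd h hu1
            · rw [pow_zero, one_mul] at h; exact Or.inl h
          · rcases hcase with h | h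
            · rw [pow_one] at h; exact Or.inr h
            · rw [pow_one] at h; exact absurd (h.trans hmqa.symm) hume
        have hlcmpq : p * q ∣ Nat.lcm x.1 y.1 := by
          rcases hclass x with h1 | h1 <;> rcases hclass y with h2 | h2
          · exact absurd (Subtype.ext (h1.trans h2.symm)) hxy.1
          · rw [h1, h2, hcop.lcm_eq_mul]
          · rw [h1, h2, Nat.lcm_comm, hcop.lcm_eq_mul]
          · exact absurd (Subtype.ext (h1.trans h2.symm)) hxy.1
        exact hxy.2 (hnq ▸ hlcmpq)
      exact ⟨q, p, α, hqp, hp, hqne, hα2, by rw [hnq, mul_comm], hmqa⟩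
  · -- m is a power of p : derive a contradiction
    exfalso
    push_neg at hq
    have hmp : m = p ^ m.primeFactorsList.length :=
      Nat.eq_prime_pow_of_unique_prime_dvd hm0 (fun hd hdvd' => hq _ hd hdvd')
    set k := m.primeFactorsList.length with hk
    -- n = p ^ j for some 2 ≤ j ≤ k
    obtain ⟨j, hjk, hnj⟩ := (Nat.dvd_prime_pow hp).1 (hmp ▸ hdvd)
    have hj2 : 2 ≤ j := by
      rcases Nat.lt_or_ge j 2 with h | h
      · interval_cases j
        · simp at hnj; omega
        · rw [pow_one] at hnj; exact absurd (hnj ▸ dvd_rfl) hnv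
      · exact h
    -- from nonnull, get j ≥ 3
    obtain ⟨x, y, hxy⟩ := hnotnull
    obtain ⟨i₁, hi₁, hx1⟩ := (Nat.dvd_prime_pow hp).1 (show x.1 ∣ p ^ k by rw [← hmp]; exact x.2.1)
    obtain ⟨i₂, hi₂, hy1⟩ := (Nat.dvd_prime_pow hp).1 (show y.1 ∣ p ^ k by rw [← hmp]; exact y.2.1)
    have hi₁0 : i₁ ≠ 0 := by
      intro h; rw [h, pow_zero] at hx1; exact x.2.2.1 hx1
    have hi₂0 : i₂ ≠ 0 := by
      intro h; rw [h, pow_zero] at hy1; exact y.2.2.1 hy1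
    have hine : i₁ ≠ i₂ := by
      intro h; exact hxy.1 (Subtype.ext (by rw [hx1, hy1, h]))
    have hmax : 2 ≤ max i₁ i₂ := by omega
    have hpmax : p ^ max i₁ i₂ ∣ Nat.lcm x.1 y.1 := by
      rcases Nat.le_total i₁ i₂ with h | h
      · rw [max_eq_right h, ← hy1]; exact Nat.dvd_lcm_right _ _
      · rw [max_eq_left h, ← hx1]; exact Nat.dvd_lcm_left _ _
    have hj3 : 3 ≤ j := by
      by_contra h
      have hj2' : j = 2 := by omega
      have : n ∣ Nat.lcm x.1 y.1 := by
        rw [hnj, hj2']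
        exact (pow_dvd_pow p hmax).trans hpmax
      exact hxy.2 this
    -- p^2 is a vertex adjacent to v = p
    have hpsm : p ^ 2 ∣ m := by
      rw [hmp]; exact pow_dvd_pow p (by omega)
    have hne1 : p ^ 2 ≠ 1 := (Nat.one_lt_pow (by norm_num) hp.one_lt).ne'
    have hnem : p ^ 2 ≠ m := by
      rw [hmp]
      intro h
      have := Nat.pow_right_injective hp.two_le h
      omega
    have hnep : p ^ 2 ≠ p := by
      have := hp.one_lt
      nlinarith [sq_nonneg p]
    have h1 := hlcm ⟨p ^ 2, hpsm, hne1, hnem⟩ hnep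
    have h2 : Nat.lcm p (p ^ 2) ∣ p ^ 2 :=
      Nat.lcm_dvd (dvd_pow_self p (by norm_num)) dvd_rfl
    have h3 : p ^ j ∣ p ^ 2 := hnj ▸ (h1.trans h2)
    have := (Nat.pow_dvd_pow_iff_le_right hp.one_lt).1 h3
    omega

/-- The isomorphism in the exceptional case. -/
lemma exceptional_iso (p₁ p₂ α : ℕ) (hp1 : p₁.Prime) (hp2 : p₂.Prime) (hne : p₁ ≠ p₂)
    (hα : 2 ≤ α) :
    Nonempty ((idealGraph (p₁ * p₂) (p₁ ^ α * p₂)) ≃g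
      (SimpleGraph.completeGraph (Fin α) ⊕g (⊥ : SimpleGraph (Fin α)))) := by
  have hcop : Nat.Coprime p₁ p₂ := (Nat.coprime_primes hp1 hp2).2 hne
  have hp1lt := hp1.one_lt
  have hp2lt := hp2.one_lt
  have hinj := Nat.pow_right_injective hp1.two_le
  have hndvd : ∀ k : ℕ, ¬ p₂ ∣ p₁ ^ k := fun k h =>
    hne ((Nat.prime_dvd_prime_iff_eq hp2 hp1).1 (hp2.dvd_of_dvd_pow h)).symm
  have hg₁mem : ∀ i : Fin α,
      p₁ ^ (i.1 + 1) ∣ p₁ ^ α * p₂ ∧ p₁ ^ (i.1 + 1) ≠ 1 ∧ p₁ ^ (i.1 + 1) ≠ p₁ ^ α * p₂ := by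
    intro i
    refine ⟨dvd_mul_of_dvd_left (pow_dvd_pow _ (by omega)) _,
      (Nat.one_lt_pow (by omega) hp1lt).ne', fun h => ?_⟩
    exact hndvd (i.1 + 1) (by rw [h]; exact dvd_mul_left p₂ _)
  have hg₂mem : ∀ i : Fin α,
      p₁ ^ i.1 * p₂ ∣ p₁ ^ α * p₂ ∧ p₁ ^ i.1 * p₂ ≠ 1 ∧ p₁ ^ i.1 * p₂ ≠ p₁ ^ α * p₂ := by
    intro i
    refine ⟨mul_dvd_mul_right (pow_dvd_pow _ i.2.le) p₂,
      fun h => hp2.ne_one (Nat.eq_one_of_mul_eq_one_left h), fun h => ?_⟩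
    have h2 : p₁ ^ i.1 = p₁ ^ α := Nat.eq_of_mul_eq_mul_right (by omega) h
    have h3 := hinj h2
    have := i.2
    omega
  let g₁ : Fin α → IdealVertex (p₁ ^ α * p₂) := fun i => ⟨p₁ ^ (i.1 + 1), hg₁mem i⟩
  let g₂ : Fin α → IdealVertex (p₁ ^ α * p₂) := fun i => ⟨p₁ ^ i.1 * p₂, hg₂mem i⟩
  let f : Fin α ⊕ Fin α → IdealVertex (p₁ ^ α * p₂) := Sum.elim g₁ g₂
  have hbij : Function.Bijective f := by
    constructor
    · rintro (i | i) (j | j) h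
      · have hval : p₁ ^ (i.1 + 1) = p₁ ^ (j.1 + 1) := congrArg Subtype.val h
        have h2 := hinj hval
        have h3 : i = j := Fin.ext (by omega)
        rw [h3]
      · have hval : p₁ ^ (i.1 + 1) = p₁ ^ j.1 * p₂ := congrArg Subtype.val h
        exact absurd (show p₂ ∣ p₁ ^ (i.1 + 1) by rw [hval]; exact dvd_mul_left p₂ _)
          (hndvd _)
      · have hval : p₁ ^ i.1 * p₂ = p₁ ^ (j.1 + 1) := congrArg Subtype.val h
        exact absurd (show p₂ ∣ p₁ ^ (j.1 + 1) by rw [← hval]; exact dvd_mul_left p₂ _)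
          (hndvd _)
      · have hval : p₁ ^ i.1 * p₂ = p₁ ^ j.1 * p₂ := congrArg Subtype.val h
        have h2 : p₁ ^ i.1 = p₁ ^ j.1 := Nat.eq_of_mul_eq_mul_right (by omega) hval
        have h3 : i = j := Fin.ext (hinj h2)
        rw [h3]
    · intro d
      obtain ⟨i, hi, hcase | hcase⟩ := divisor_classify hp1 hp2 d.2.1
      · have hi0 : i ≠ 0 := by
          intro h; rw [h, pow_zero] at hcase; exact d.2.2.1 hcase
        refine ⟨Sum.inl ⟨i - 1, by omega⟩, Subtype.ext ?_⟩
        show p₁ ^ (i - 1 + 1) = d.1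
        rw [hcase]; congr 1; omega
      · have hiα : i ≠ α := by
          intro h; rw [h] at hcase; exact d.2.2.2 hcase
        exact ⟨Sum.inr ⟨i, by omega⟩, Subtype.ext hcase.symm⟩
  have hSll : ∀ i j : Fin α,
      (SimpleGraph.completeGraph (Fin α) ⊕g (⊥ : SimpleGraph (Fin α))).Adj (.inl i) (.inl j) ↔ i ≠ j := by
    intro i j; simp [SimpleGraph.completeGraph]
  have hSlr : ∀ i j : Fin α,
      ¬ (SimpleGraph.completeGraph (Fin α) ⊕g (⊥ : SimpleGraph (Fin α))).Adj (.inl i) (.inr j) := by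
    intro i j; simp
  have hSrl : ∀ i j : Fin α,
      ¬ (SimpleGraph.completeGraph (Fin α) ⊕g (⊥ : SimpleGraph (Fin α))).Adj (.inr i) (.inl j) := by
    intro i j; simp
  have hSrr : ∀ i j : Fin α,
      ¬ (SimpleGraph.completeGraph (Fin α) ⊕g (⊥ : SimpleGraph (Fin α))).Adj (.inr i) (.inr j) := by
    intro i j; simp
  refine ⟨SimpleGraph.Iso.symm ⟨Equiv.ofBijective f hbij, ?_⟩⟩
  intro x y
  show (idealGraph (p₁ * p₂) (p₁ ^ α * p₂)).Adj (f x) (f y) ↔ _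
  rcases x with i | i <;> rcases y with j | j
  · rw [hSll]
    constructor
    · rintro ⟨h1, -⟩ h
      exact h1 (by rw [h])
    · intro hij
      refine ⟨fun h => hij (Sum.inl.inj (hbij.1 h)), fun hdvd => ?_⟩
      have h2 : p₂ ∣ Nat.lcm (p₁ ^ (i.1 + 1)) (p₁ ^ (j.1 + 1)) :=
        (dvd_mul_left p₂ p₁).trans hdvd
      have h3 : p₂ ∣ p₁ ^ (i.1 + 1) * p₁ ^ (j.1 + 1) := h2.trans (lcm_dvd_mul' _ _)
      rw [← pow_add] at h3
      exact hndvd _ h3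
  · refine iff_of_false ?_ (hSlr i j)
    rintro ⟨-, h2⟩
    refine h2 (hcop.mul_dvd_of_dvd_of_dvd ?_ ?_)
    · exact (dvd_pow_self p₁ (Nat.succ_ne_zero i.1)).trans (Nat.dvd_lcm_left _ _)
    · exact (dvd_mul_left p₂ _).trans (Nat.dvd_lcm_right _ _)
  · refine iff_of_false ?_ (hSrl i j)
    rintro ⟨-, h2⟩
    refine h2 (hcop.mul_dvd_of_dvd_of_dvd ?_ ?_)
    · exact (dvd_pow_self p₁ (Nat.succ_ne_zero j.1)).trans (Nat.dvd_lcm_right _ _)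
    · exact (dvd_mul_left p₂ _).trans (Nat.dvd_lcm_left _ _)
  · refine iff_of_false ?_ (hSrr i j)
    rintro ⟨h1, h2⟩
    have hij : i ≠ j := fun h => h1 (by rw [h])
    have hij' : i.1 ≠ j.1 := fun h => hij (Fin.ext h)
    refine h2 (hcop.mul_dvd_of_dvd_of_dvd ?_ ?_)
    · rcases Nat.eq_zero_or_pos i.1 with h0 | h0
      · have hj0 : j.1 ≠ 0 := by omega
        exact (dvd_mul_of_dvd_left (dvd_pow_self p₁ hj0) p₂).trans (Nat.dvd_lcm_right _ _)
      · exact (dvd_mul_of_dvd_left (dvd_pow_self p₁ (by omega)) p₂).trans (Nat.dvd_lcm_left _ _)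
    · exact (dvd_mul_left p₂ _).trans (Nat.dvd_lcm_left _ _)

/-- Characterization of isolated vertices of `G_n(Z_m)` when it is not a null graph:
outside the exceptional case `n = p₁p₂`, `m = p₁^{α₁}p₂` with `α₁ ≥ 2`, a vertex `dZ_m`
is isolated iff `n ∣ d`; in the exceptional case `G_n(Z_m) ≅ K_{α₁} ∪ ∅_{α₁}`. -/
theorem idealGraph_isolated_iff (n m : ℕ) (hn : 1 < n) (hm : 1 < m) (hdvd : n ∣ m)
    (hnotnull : ∃ a b : IdealVertex m, (idealGraph n m).Adj a b) :
    ((¬ ∃ p₁ p₂ α₁ : ℕ, p₁.Prime ∧ p₂.Prime ∧ p₁ ≠ p₂ ∧ 2 ≤ α₁ ∧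
        n = p₁ * p₂ ∧ m = p₁ ^ α₁ * p₂) →
      ∀ v : IdealVertex m,
        (∀ u : IdealVertex m, ¬ (idealGraph n m).Adj v u) ↔ n ∣ v.1) ∧
    (∀ p₁ p₂ α₁ : ℕ, p₁.Prime → p₂.Prime → p₁ ≠ p₂ → 2 ≤ α₁ →
      n = p₁ * p₂ → m = p₁ ^ α₁ * p₂ →
      Nonempty ((idealGraph n m) ≃g
        (SimpleGraph.completeGraph (Fin α₁) ⊕g (⊥ : SimpleGraph (Fin α₁))))) := by
  constructor
  · intro hexc v
    constructor
    · intro hiso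
      by_contra hnv
      exact hexc (key_lemma n m hn hm hdvd hnotnull v hiso hnv)
    · rintro hv u ⟨-, h2⟩
      exact h2 (hv.trans (Nat.dvd_lcm_left _ _))
  · intro p₁ p₂ α hp1 hp2 hne hα hneq hmeq
    subst hneq hmeq
    exact exceptional_iso p₁ p₂ α hp1 hp2 hne hα
end

section
/- Let n, m > 1 be integers with n dividing m, write m = p₁^{α₁}⋯p_s^{α_s} and n = p₁^{β₁}⋯p_s^{β_s} where p₁, …, p_s are distinct primes, each α_i ≥ 1 and 0 ≤ β_i ≤ α_i, let s' = |{i : β_i ≠ 0}|, and suppose G_n(Z_m) is not a null graph. Then the independence number of G_n(Z_m) equals α₁ + 1 if n = p₁p₂ and m = p₁^{α₁}p₂ with α₁ ≥ 2 (after relabeling the primes), and equals ∏_{i=1}^{s}(α_i − β_i + 1) − 1 + s' otherwise. -/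
section Aux
variable {s : ℕ} {p : Fin s → ℕ}

lemma aux_coprime (hp : ∀ i, (p i).Prime) (hinj : Function.Injective p)
    (γ δ : Fin s → ℕ) (a : Fin s) (r : Finset (Fin s)) (ha : a ∉ r) :
    Nat.Coprime (p a ^ γ a) (∏ i ∈ r, p i ^ δ i) := by
  refine Nat.Coprime.prod_right fun i hi => Nat.Coprime.pow _ _ ?_
  exact (Nat.coprime_primes (hp a) (hp i)).mpr (fun h => ha (hinj h ▸ hi))

lemma aux_card_divisors (hp : ∀ i, (p i).Prime) (hinj : Function.Injective p)
    (γ : Fin s → ℕ) (t : Finset (Fin s)) :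
    (∏ i ∈ t, p i ^ γ i).divisors.card = ∏ i ∈ t, (γ i + 1) := by
  classical
  induction t using Finset.induction_on with
  | empty => simp
  | @insert a r ha ih =>
    rw [Finset.prod_insert ha, Finset.prod_insert ha,
      (aux_coprime hp hinj γ γ a r ha).card_divisors_mul, ih,
      Nat.divisors_prime_pow (hp a)]
    simp

lemma aux_prod_dvd (hp : ∀ i, (p i).Prime) (hinj : Function.Injective p)
    (γ : Fin s → ℕ) (x : ℕ) (t : Finset (Fin s)) (h : ∀ i ∈ t, p i ^ γ i ∣ x) :
    (∏ i ∈ t, p i ^ γ i) ∣ x := by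
  classical
  induction t using Finset.induction_on with
  | empty => simp
  | @insert a r ha ih =>
    rw [Finset.prod_insert ha]
    exact (aux_coprime hp hinj γ γ a r ha).mul_dvd_of_dvd_of_dvd
      (h a (Finset.mem_insert_self a r))
      (ih fun i hi => h i (Finset.mem_insert_of_mem hi))
end Aux

lemma key (n m s : ℕ) (hn : 1 < n) (hm : 1 < m) (hdvd : n ∣ m)
    (p α β : Fin s → ℕ) (hp : ∀ i, (p i).Prime) (hinj : Function.Injective p)
    (hα : ∀ i, 1 ≤ α i) (hβα : ∀ i, β i ≤ α i)
    (hmeq : m = ∏ i, p i ^ α i) (hneq : n = ∏ i, p i ^ β i)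
    (hnotnull : ∃ a b : IdealVertex m, (idealGraph n m).Adj a b) :
    IsGreatest {k : ℕ | ∃ t : Set (IdealVertex m),
        (∀ u ∈ t, ∀ v ∈ t, ¬ (idealGraph n m).Adj u v) ∧ t.ncard = k}
      ((∏ i, (α i - β i + 1)) - 1 + (Finset.univ.filter fun i => β i ≠ 0).card) := by
  classical
  have hm0 : m ≠ 0 := by omega
  have hn0 : n ≠ 0 := by omega
  -- finiteness of the vertex type
  haveI : Finite (IdealVertex m) := by
    refine Finite.of_injective (fun v : IdealVertex m =>
      (⟨v.1, Nat.lt_succ_of_le (Nat.le_of_dvd (by omega) v.2.1)⟩ : Fin (m+1))) ?_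
    intro a b h
    exact Subtype.ext (by simpa [Fin.ext_iff] using h)
  -- basic divisibility facts
  have hpβn : ∀ i, p i ^ β i ∣ n := fun i => hneq ▸ Finset.dvd_prod_of_mem _ (Finset.mem_univ i)
  have hpαm : ∀ i, p i ^ α i ∣ m := fun i => hmeq ▸ Finset.dvd_prod_of_mem _ (Finset.mem_univ i)
  -- the quotient M = m / n
  set M : ℕ := ∏ i, p i ^ (α i - β i) with hMdef
  have hmM : m = n * M := by
    rw [hmeq, hneq, hMdef, ← Finset.prod_mul_distrib]
    refine Finset.prod_congr rfl fun i _ => ?_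
    rw [← pow_add]
    congr 1
    have := hβα i
    omega
  have hM0 : M ≠ 0 := by
    rintro h
    rw [h, mul_zero] at hmM
    omega
  have hτ : M.divisors.card = ∏ i, (α i - β i + 1) := aux_card_divisors hp hinj _ _
  have hP1 : 1 ≤ ∏ i, (α i - β i + 1) := Finset.one_le_prod' fun i _ => by omega
  obtain ⟨v₀, w₀, hvw₀⟩ := hnotnull
  -- the special vertices D i
  set D : Fin s → ℕ := fun i => (∏ j ∈ Finset.univ.erase i, p j ^ α j) * p i ^ (β i - 1)
    with hDdef
  have hDm : ∀ i, β i ≠ 0 → D i * p i ^ (α i - β i + 1) = m := by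
    intro i hi
    show ((∏ j ∈ Finset.univ.erase i, p j ^ α j) * p i ^ (β i - 1)) * p i ^ (α i - β i + 1) = m
    rw [mul_assoc, ← pow_add, hmeq, ← Finset.prod_erase_mul _ _ (Finset.mem_univ i)]
    congr 2
    have := hβα i
    omega
  have hDdvd : ∀ i, D i ∣ m := by
    intro i
    rcases Nat.eq_zero_or_pos (β i) with h | h
    · rw [hDdef]
      simp only [h, Nat.zero_sub, pow_zero, mul_one]
      exact hmeq ▸ Finset.prod_dvd_prod_of_subset _ _ _ (Finset.erase_subset _ _)
    · exact ⟨p i ^ (α i - β i + 1), (hDm i (by omega)).symm⟩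
  have hDnd : ∀ i, β i ≠ 0 → ¬ p i ^ β i ∣ D i := by
    intro i hi hdvdD
    have hcop : Nat.Coprime (p i ^ β i) (∏ j ∈ Finset.univ.erase i, p j ^ α j) :=
      aux_coprime hp hinj β α i _ (Finset.notMem_erase i _)
    have : p i ^ β i ∣ p i ^ (β i - 1) := by
      exact Nat.Coprime.dvd_of_dvd_mul_left hcop hdvdD
    rw [Nat.pow_dvd_pow_iff_le_right (hp i).one_lt] at this
    omega
  have hDne_m : ∀ i, β i ≠ 0 → D i ≠ m := by
    intro i hi h
    exact hDnd i hi (h ▸ dvd_trans (pow_dvd_pow _ (hβα i)) (hpαm i))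
  have hDnn : ∀ i, β i ≠ 0 → ¬ n ∣ D i := by
    intro i hi h
    exact hDnd i hi (dvd_trans (hpβn i) h)
  -- D i ≠ 1, using non-nullity of the graph
  have hDne_1 : ∀ i, β i ≠ 0 → D i ≠ 1 := by
    intro i hi h
    have h' : (∏ j ∈ Finset.univ.erase i, p j ^ α j) * p i ^ (β i - 1) = 1 := h
    have h1 : (∏ j ∈ Finset.univ.erase i, p j ^ α j) = 1 := Nat.eq_one_of_mul_eq_one_right h'
    have h2 : p i ^ (β i - 1) = 1 := Nat.eq_one_of_mul_eq_one_left h'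
    have herase_empty : Finset.univ.erase i = ∅ := by
      by_contra hne
      obtain ⟨j, hj⟩ := Finset.nonempty_iff_ne_empty.mpr hne
      have h2le : 2 ≤ p j ^ α j := by
        calc 2 ≤ p j := (hp j).two_le
        _ = p j ^ 1 := (pow_one _).symm
        _ ≤ p j ^ α j := Nat.pow_le_pow_right (by have := (hp j).two_le; omega) (hα j)
      have := Finset.single_le_prod' (f := fun j => p j ^ α j)
        (fun k _ => Nat.one_le_iff_ne_zero.mpr (pow_ne_zero _ (hp k).ne_zero)) hj
      omega
    have hβ1 : β i = 1 := by
      have hp1 : 1 < p i := (hp i).one_lt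
      rcases Nat.eq_zero_or_pos (β i - 1) with h' | h'
      · omega
      · exfalso
        have : 1 < p i ^ (β i - 1) := Nat.one_lt_pow (by omega) hp1
        omega
    have huniv : (Finset.univ : Finset (Fin s)) = {i} := by
      have := (Finset.erase_eq_empty_iff _ _).mp herase_empty
      rcases this with h' | h'
      · have hmem := Finset.mem_univ i
        rw [h'] at hmem
        simp at hmem
      · exact h'
    have hnp : n = p i := by rw [hneq, huniv, Finset.prod_singleton, hβ1, pow_one]
    have hmp : m = p i ^ α i := by rw [hmeq, huniv, Finset.prod_singleton]
    -- every vertex is divisible by p i, contradicting the existing edge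
    obtain ⟨hne, hlcm⟩ := hvw₀
    apply hlcm
    rw [hnp]
    have hv₀ : (v₀ : ℕ) ∣ p i ^ α i := by rw [← hmp]; exact v₀.2.1
    obtain ⟨k, hk, hvk⟩ := (Nat.dvd_prime_pow (hp i)).mp hv₀
    have hk0 : k ≠ 0 := by
      rintro rfl
      rw [pow_zero] at hvk
      exact v₀.2.2.1 hvk
    have h5 : p i ∣ v₀.1 := by rw [hvk]; exact dvd_pow_self _ hk0
    exact h5.trans (Nat.dvd_lcm_left _ _)
  constructor
  · -- membership: construct the independent set
    refine ⟨{v : IdealVertex m | n ∣ v.1 ∨ ∃ i, β i ≠ 0 ∧ v.1 = D i}, ?_, ?_⟩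
    · -- independence
      rintro u hu v hv ⟨hne, hlcm⟩
      apply hlcm
      rcases hu with hu | ⟨i, hi, hui⟩
      · exact dvd_trans hu (Nat.dvd_lcm_left _ _)
      rcases hv with hv | ⟨j, hj, hvj⟩
      · exact dvd_trans hv (Nat.dvd_lcm_right _ _)
      have hij : i ≠ j := by
        rintro rfl
        exact hne (Subtype.ext (hui.trans hvj.symm))
      rw [hneq]
      refine aux_prod_dvd hp hinj β _ Finset.univ fun k _ => ?_
      by_cases hk : k = i
      · subst hk
        have hd : p k ^ α k ∣ D j := dvd_mul_of_dvd_left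
          (Finset.dvd_prod_of_mem _ (Finset.mem_erase.mpr ⟨hij, Finset.mem_univ _⟩)) _
        have hd2 : p k ^ β k ∣ v.1 := by
          rw [hvj]
          exact dvd_trans (pow_dvd_pow _ (hβα k)) hd
        exact hd2.trans (Nat.dvd_lcm_right _ _)
      · have hd : p k ^ α k ∣ D i := dvd_mul_of_dvd_left
          (Finset.dvd_prod_of_mem _ (Finset.mem_erase.mpr ⟨hk, Finset.mem_univ _⟩)) _
        have hd2 : p k ^ β k ∣ u.1 := by
          rw [hui]
          exact dvd_trans (pow_dvd_pow _ (hβα k)) hd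
        exact hd2.trans (Nat.dvd_lcm_left _ _)
    · -- cardinality
      have hAB : {v : IdealVertex m | n ∣ v.1 ∨ ∃ i, β i ≠ 0 ∧ v.1 = D i}
          = {v : IdealVertex m | n ∣ v.1} ∪ {v : IdealVertex m | ∃ i, β i ≠ 0 ∧ v.1 = D i} :=
        Set.setOf_or
      have hinjA : Set.InjOn (fun v : IdealVertex m => v.1 / n)
          {v : IdealVertex m | n ∣ v.1} := by
        rintro u hu v hv h
        simp only [Set.mem_setOf_eq] at hu hv h
        have h' : n * (u.1 / n) = n * (v.1 / n) := by rw [h]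
        rw [Nat.mul_div_cancel' hu, Nat.mul_div_cancel' hv] at h'
        exact Subtype.ext h'
      have himg : (fun v : IdealVertex m => v.1 / n) '' {v : IdealVertex m | n ∣ v.1}
          = ((M.divisors.erase M : Finset ℕ) : Set ℕ) := by
        ext e
        simp only [Set.mem_image, Set.mem_setOf_eq, Finset.coe_erase, Set.mem_diff,
          Finset.mem_coe, Nat.mem_divisors, Set.mem_singleton_iff]
        constructor
        · rintro ⟨v, hv, rfl⟩
          obtain ⟨c, hc⟩ := hv
          have hcv : v.1 / n = c := by rw [hc, Nat.mul_div_cancel_left _ (by omega)]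
          have hcM : c ∣ M := by
            have h2 : n * c ∣ n * M := by rw [← hc, ← hmM]; exact v.2.1
            exact (mul_dvd_mul_iff_left (a := n) (by omega : n ≠ 0)).mp h2
          have hcne : c ≠ M := by
            rintro rfl
            exact v.2.2.2 (by rw [hc, ← hmM])
          rw [hcv]
          exact ⟨⟨hcM, hM0⟩, hcne⟩
        · rintro ⟨⟨heDvd, -⟩, heM⟩
          have he0 : e ≠ 0 := fun h0 => hM0 (Nat.eq_zero_of_zero_dvd (h0 ▸ heDvd))
          have hdvdm : n * e ∣ m := by rw [hmM]; exact mul_dvd_mul_left n heDvd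
          have h1 : n * e ≠ 1 := by
            have h2 : n ≤ n * e := Nat.le_mul_of_pos_right n (by omega)
            omega
          have hm' : n * e ≠ m := by
            intro h
            rw [hmM] at h
            exact heM (Nat.eq_of_mul_eq_mul_left (by omega) h)
          refine ⟨⟨n * e, hdvdm, h1, hm'⟩, dvd_mul_right n e, ?_⟩
          simp [Nat.mul_div_cancel_left _ (by omega : 0 < n)]
      have hAcard : {v : IdealVertex m | n ∣ v.1}.ncard = (∏ i, (α i - β i + 1)) - 1 := by
        have h2 := Set.ncard_image_of_injOn hinjA
        rw [himg, Set.ncard_coe_finset,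
          Finset.card_erase_of_mem (Nat.mem_divisors_self M hM0), hτ] at h2
        exact h2.symm
      -- the B part
      set gv : Fin s → IdealVertex m := fun i =>
        if h : β i ≠ 0 then ⟨D i, hDdvd i, hDne_1 i h, hDne_m i h⟩ else v₀ with hgv
      have hgvval : ∀ i, β i ≠ 0 → (gv i).1 = D i := by
        intro i hi
        simp only [hgv, dif_pos hi]
      have hBimg : {v : IdealVertex m | ∃ i, β i ≠ 0 ∧ v.1 = D i}
          = gv '' (((Finset.univ.filter fun i => β i ≠ 0) : Finset (Fin s)) : Set (Fin s)) := by
        ext v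
        simp only [Set.mem_setOf_eq, Set.mem_image, Finset.coe_filter, Finset.mem_univ, true_and]
        constructor
        · rintro ⟨i, hi, hvi⟩
          exact ⟨i, hi, Subtype.ext (by rw [hgvval i hi, hvi])⟩
        · rintro ⟨i, hi, rfl⟩
          exact ⟨i, hi, hgvval i hi⟩
      have hpD : ∀ i j : Fin s, i ≠ j → p i ^ β i ∣ D j := by
        intro i j hij
        exact dvd_trans (pow_dvd_pow _ (hβα i)) (dvd_mul_of_dvd_left
          (Finset.dvd_prod_of_mem _ (Finset.mem_erase.mpr ⟨hij, Finset.mem_univ _⟩)) _)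
      have hinjB : Set.InjOn gv
          (((Finset.univ.filter fun i => β i ≠ 0) : Finset (Fin s)) : Set (Fin s)) := by
        intro i hi j hj h
        simp only [Finset.coe_filter, Set.mem_setOf_eq, Finset.mem_univ, true_and] at hi hj
        by_contra hne
        apply hDnd i hi
        have hDij : D i = D j := by rw [← hgvval i hi, h, hgvval j hj]
        rw [hDij]
        exact hpD i j hne
      have hBcard : {v : IdealVertex m | ∃ i, β i ≠ 0 ∧ v.1 = D i}.ncard
          = (Finset.univ.filter fun i => β i ≠ 0).card := by
        rw [hBimg, Set.ncard_image_of_injOn hinjB, Set.ncard_coe_finset]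
      have hdisjAB : Disjoint {v : IdealVertex m | n ∣ v.1}
          {v : IdealVertex m | ∃ i, β i ≠ 0 ∧ v.1 = D i} := by
        rw [Set.disjoint_left]
        rintro v hv ⟨i, hi, hvi⟩
        simp only [Set.mem_setOf_eq] at hv
        exact hDnn i hi (hvi ▸ hv)
      rw [hAB, Set.ncard_union_eq hdisjAB (Set.toFinite _) (Set.toFinite _), hAcard, hBcard]
  · -- upper bound
    rintro k ⟨t, hind, rfl⟩
    have htun : t = {v ∈ t | n ∣ v.1} ∪ {v ∈ t | ¬ n ∣ v.1} := by
      ext v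
      simp only [Set.mem_union, Set.mem_setOf_eq]
      tauto
    have hdisj : Disjoint {v ∈ t | n ∣ v.1} {v ∈ t | ¬ n ∣ v.1} := by
      rw [Set.disjoint_left]
      rintro v ⟨-, hv⟩ ⟨-, hv'⟩
      exact hv' hv
    have h0 : {v ∈ t | n ∣ v.1}.ncard ≤ (∏ i, (α i - β i + 1)) - 1 := by
      have hmap : ∀ v ∈ {v ∈ t | n ∣ v.1}, v.1 / n ∈ ((M.divisors.erase M : Finset ℕ) : Set ℕ) := by
        rintro v ⟨-, hnv⟩
        obtain ⟨c, hc⟩ := hnv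
        have hcv : v.1 / n = c := by rw [hc, Nat.mul_div_cancel_left _ (by omega)]
        have hcM : c ∣ M := by
          have h2 : n * c ∣ n * M := by rw [← hc, ← hmM]; exact v.2.1
          exact (mul_dvd_mul_iff_left (a := n) (by omega : n ≠ 0)).mp h2
        have hcne : c ≠ M := by
          rintro rfl
          exact v.2.2.2 (by rw [hc, ← hmM])
        simp only [Finset.coe_erase, Set.mem_diff, Finset.mem_coe, Nat.mem_divisors,
          Set.mem_singleton_iff, hcv]
        exact ⟨⟨hcM, hM0⟩, hcne⟩
      have hinj' : Set.InjOn (fun v : IdealVertex m => v.1 / n) {v ∈ t | n ∣ v.1} := by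
        rintro u ⟨-, hu⟩ v ⟨-, hv⟩ h
        simp only at h
        have h' : n * (u.1 / n) = n * (v.1 / n) := by rw [h]
        rw [Nat.mul_div_cancel' hu, Nat.mul_div_cancel' hv] at h'
        exact Subtype.ext h'
      have h2 := Set.ncard_le_ncard_of_injOn _ hmap hinj' (Set.toFinite _)
      rwa [Set.ncard_coe_finset,
        Finset.card_erase_of_mem (Nat.mem_divisors_self M hM0), hτ] at h2
    have h1 : {v ∈ t | ¬ n ∣ v.1}.ncard ≤ (Finset.univ.filter fun i => β i ≠ 0).card := by
      have hex : ∀ v : IdealVertex m, v ∈ {v ∈ t | ¬ n ∣ v.1} → ∃ i, ¬ p i ^ β i ∣ v.1 := by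
        rintro v ⟨-, hnv⟩
        by_contra hc
        push_neg at hc
        exact hnv (hneq ▸ aux_prod_dvd hp hinj β v.1 Finset.univ (fun i _ => hc i))
      have hs0 : s ≠ 0 := by
        rintro rfl
        rw [Finset.univ_eq_empty, Finset.prod_empty] at hneq
        omega
      have i₀ : Fin s := ⟨0, by omega⟩
      set g : IdealVertex m → Fin s := fun v =>
        if h : ∃ i, ¬ p i ^ β i ∣ v.1 then h.choose else i₀ with hg
      have hgspec : ∀ v ∈ {v ∈ t | ¬ n ∣ v.1}, ¬ p (g v) ^ β (g v) ∣ v.1 := by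
        intro v hv
        have h := hex v hv
        simp only [hg, dif_pos h]
        exact h.choose_spec
      have hmap : ∀ v ∈ {v ∈ t | ¬ n ∣ v.1},
          g v ∈ (((Finset.univ.filter fun i => β i ≠ 0) : Finset (Fin s)) : Set (Fin s)) := by
        intro v hv
        have h2 := hgspec v hv
        simp only [Finset.coe_filter, Set.mem_setOf_eq, Finset.mem_univ, true_and]
        intro hβ0
        rw [hβ0, pow_zero] at h2
        exact h2 (one_dvd _)
      have hinj' : Set.InjOn g {v ∈ t | ¬ n ∣ v.1} := by
        rintro u hu v hv h
        by_contra hne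
        refine hind u hu.1 v hv.1 ⟨fun h' => hne h', fun hdl => ?_⟩
        have ha : u.1 ≠ 0 := fun h0 => hm0 (Nat.eq_zero_of_zero_dvd (h0 ▸ u.2.1))
        have hb : v.1 ≠ 0 := fun h0 => hm0 (Nat.eq_zero_of_zero_dvd (h0 ▸ v.2.1))
        have hpd : p (g u) ^ β (g u) ∣ Nat.lcm u.1 v.1 := dvd_trans (hpβn _) hdl
        have hl : Nat.lcm u.1 v.1 ≠ 0 := Nat.lcm_ne_zero ha hb
        rw [Nat.Prime.pow_dvd_iff_le_factorization (hp (g u)) hl,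
          Nat.factorization_lcm ha hb, Finsupp.sup_apply, le_sup_iff] at hpd
        rcases hpd with h' | h'
        · exact hgspec u hu ((Nat.Prime.pow_dvd_iff_le_factorization (hp _) ha).mpr h')
        · exact hgspec v hv
            (h ▸ (Nat.Prime.pow_dvd_iff_le_factorization (hp _) hb).mpr h')
      have h2 := Set.ncard_le_ncard_of_injOn _ hmap hinj' (Set.toFinite _)
      rwa [Set.ncard_coe_finset] at h2
    rw [htun, Set.ncard_union_eq hdisj (Set.toFinite _) (Set.toFinite _)]
    omega


/-- The independence number of `G_n(Z_m)` (when it is not a null graph):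
`α₁ + 1` in the exceptional case `n = p₁p₂`, `m = p₁^{α₁}p₂` with `α₁ ≥ 2`,
and `∏(αᵢ - βᵢ + 1) - 1 + s'` otherwise, where `s' = |{i : βᵢ ≠ 0}|`. -/
theorem idealGraph_indepNum (n m s : ℕ) (hn : 1 < n) (hm : 1 < m) (hdvd : n ∣ m)
    (p α β : Fin s → ℕ) (hp : ∀ i, (p i).Prime) (hinj : Function.Injective p)
    (hα : ∀ i, 1 ≤ α i) (hβα : ∀ i, β i ≤ α i)
    (hmeq : m = ∏ i, p i ^ α i) (hneq : n = ∏ i, p i ^ β i)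
    (hnotnull : ∃ a b : IdealVertex m, (idealGraph n m).Adj a b) :
    (∀ q₁ q₂ a : ℕ, q₁.Prime → q₂.Prime → q₁ ≠ q₂ → 2 ≤ a →
      n = q₁ * q₂ → m = q₁ ^ a * q₂ →
      IsGreatest {k : ℕ | ∃ t : Set (IdealVertex m),
        (∀ u ∈ t, ∀ v ∈ t, ¬ (idealGraph n m).Adj u v) ∧ t.ncard = k} (a + 1)) ∧
    ((¬ ∃ q₁ q₂ a : ℕ, q₁.Prime ∧ q₂.Prime ∧ q₁ ≠ q₂ ∧ 2 ≤ a ∧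
        n = q₁ * q₂ ∧ m = q₁ ^ a * q₂) →
      IsGreatest {k : ℕ | ∃ t : Set (IdealVertex m),
        (∀ u ∈ t, ∀ v ∈ t, ¬ (idealGraph n m).Adj u v) ∧ t.ncard = k}
        ((∏ i, (α i - β i + 1)) - 1 + (Finset.univ.filter fun i => β i ≠ 0).card)) := by
  constructor
  · intro q₁ q₂ a hq₁ hq₂ hne ha hn2 hm2
    have hkey := key n m 2 hn hm hdvd ![q₁, q₂] ![a, 1] ![1, 1]
      (by intro i; fin_cases i <;> simpa)
      (by intro i j h; fin_cases i <;> fin_cases j <;> simp_all)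
      (by intro i; fin_cases i <;> simp <;> omega)
      (by intro i; fin_cases i <;> simp <;> omega)
      (by rw [Fin.prod_univ_two]; simpa using hm2)
      (by rw [Fin.prod_univ_two]; simpa using hn2)
      hnotnull
    have hval : (∏ i, (![a, 1] i - ![1, 1] i + 1)) - 1
        + (Finset.univ.filter fun i => ![1, 1] i ≠ 0).card = a + 1 := by
      have h1 : (Finset.univ.filter fun i : Fin 2 => (![1, 1] : Fin 2 → ℕ) i ≠ 0)
          = Finset.univ := by
        apply Finset.filter_true_of_mem
        intro i _
        fin_cases i <;> simp
      rw [h1, Fin.prod_univ_two]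
      simp only [Matrix.cons_val_zero, Matrix.cons_val_one, Matrix.head_cons,
        Finset.card_univ, Fintype.card_fin]
      omega
    exact hval ▸ hkey
  · intro _
    exact key n m s hn hm hdvd p α β hp hinj hα hβα hmeq hneq hnotnull
end

section
/- Let n, m > 1 be integers with n dividing m, write m = p₁^{α₁}⋯p_s^{α_s} and n = p₁^{β₁}⋯p_s^{β_s} where p₁, …, p_s are distinct primes, each α_i ≥ 1 and 0 ≤ β_i ≤ α_i. Let d = p₁^{r₁}⋯p_s^{r_s} be a divisor of m with d ≠ 1, m, and set D_d = {i : r_i < β_i}. If n divides d, then the degree of the vertex dZ_m in G_n(Z_m) is 0; otherwise, deg(dZ_m) = ∏_{i=1}^{s}(α_i + 1) − 2 − ∏_{i ∉ D_d}(α_i + 1) · ∏_{i ∈ D_d}(α_i − β_i + 1). -/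
section aux


variable {s : ℕ} {p : Fin s → ℕ} (hp : ∀ i, (p i).Prime) (hinj : Function.Injective p)
include hp

include hinj in
lemma fact_prod_pow (f : Fin s → ℕ) (j : Fin s) :
    (∏ i, p i ^ f i).factorization (p j) = f j := by
  rw [Nat.factorization_prod (fun i _ => pow_ne_zero _ (hp i).pos.ne')]
  rw [Finsupp.finset_sum_apply]
  rw [Finset.sum_eq_single j]
  · rw [(hp j).factorization_pow, Finsupp.single_apply, if_pos rfl]
  · intro i _ hij
    rw [(hp i).factorization_pow, Finsupp.single_apply,
      if_neg (fun h => hij (hinj h))]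
  · simp

lemma fact_prod_pow_ne (f : Fin s → ℕ) {q : ℕ} (hq : ∀ j, q ≠ p j) :
    (∏ i, p i ^ f i).factorization q = 0 := by
  rw [Nat.factorization_prod (fun i _ => pow_ne_zero _ (hp i).pos.ne')]
  rw [Finsupp.finset_sum_apply]
  refine Finset.sum_eq_zero fun i _ => ?_
  rw [(hp i).factorization_pow, Finsupp.single_apply, if_neg (fun h => hq i h.symm)]

lemma prod_pow_ne_zero (f : Fin s → ℕ) : (∏ i, p i ^ f i) ≠ 0 :=
  (Finset.prod_pos fun i _ => pow_pos (hp i).pos _).ne'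

include hinj in
lemma prod_pow_dvd_iff (f g : Fin s → ℕ) :
    (∏ i, p i ^ f i) ∣ (∏ i, p i ^ g i) ↔ ∀ i, f i ≤ g i := by
  constructor
  · intro h i
    have := (Nat.factorization_le_iff_dvd (prod_pow_ne_zero hp f)
      (prod_pow_ne_zero hp g)).mpr h
    have := Finsupp.le_def.mp this (p i)
    rwa [fact_prod_pow hp hinj, fact_prod_pow hp hinj] at this
  · intro h
    exact Finset.prod_dvd_prod_of_dvd _ _ fun i _ => pow_dvd_pow _ (h i)

include hinj in
lemma lcm_prod_pow (f g : Fin s → ℕ) :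
    Nat.lcm (∏ i, p i ^ f i) (∏ i, p i ^ g i) = ∏ i, p i ^ max (f i) (g i) := by
  refine Nat.dvd_antisymm (Nat.lcm_dvd ?_ ?_) ?_
  · exact (prod_pow_dvd_iff hp hinj _ _).mpr fun i => le_max_left _ _
  · exact (prod_pow_dvd_iff hp hinj _ _).mpr fun i => le_max_right _ _
  · rw [← Nat.factorization_le_iff_dvd (prod_pow_ne_zero hp _)
      (Nat.lcm_ne_zero (prod_pow_ne_zero hp f) (prod_pow_ne_zero hp g))]
    rw [Nat.factorization_lcm (prod_pow_ne_zero hp f) (prod_pow_ne_zero hp g)]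
    rw [Finsupp.le_def]
    intro q
    by_cases hq : ∃ j, q = p j
    · obtain ⟨j, rfl⟩ := hq
      rw [fact_prod_pow hp hinj, Finsupp.sup_apply, fact_prod_pow hp hinj,
        fact_prod_pow hp hinj]
    · push_neg at hq
      rw [fact_prod_pow_ne hp _ hq]
      exact Nat.zero_le _

include hinj in
lemma mem_divisors_prod_pow (α : Fin s → ℕ) {e : ℕ} :
    e ∈ (∏ i, p i ^ α i).divisors ↔
      ∃ f ∈ Fintype.piFinset (fun i => Finset.range (α i + 1)), (∏ i, p i ^ f i) = e := by
  rw [Nat.mem_divisors]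
  constructor
  · rintro ⟨hdvd, hm0⟩
    have he0 : e ≠ 0 := by rintro rfl; exact hm0 (Nat.eq_zero_of_zero_dvd hdvd)
    refine ⟨fun i => e.factorization (p i), ?_, ?_⟩
    · rw [Fintype.mem_piFinset]
      intro i
      rw [Finset.mem_range, Nat.lt_succ_iff]
      have := Finsupp.le_def.mp ((Nat.factorization_le_iff_dvd he0 hm0).mpr hdvd) (p i)
      rwa [fact_prod_pow hp hinj] at this
    · have hsupp : e.factorization.support ⊆ Finset.image p Finset.univ := by
        intro q hq
        rw [Nat.support_factorization] at hq
        have hqm := Nat.primeFactors_mono hdvd hm0 hq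
        have hqp : q.Prime := Nat.prime_of_mem_primeFactors hqm
        have hqd : q ∣ ∏ i, p i ^ α i := Nat.dvd_of_mem_primeFactors hqm
        obtain ⟨i, -, hqi⟩ := hqp.prime.exists_mem_finset_dvd hqd
        have hq2 : q ∣ p i := hqp.prime.dvd_of_dvd_pow hqi
        have := (Nat.prime_dvd_prime_iff_eq hqp (hp i)).mp hq2
        exact Finset.mem_image.mpr ⟨i, Finset.mem_univ i, this.symm⟩
      conv_rhs => rw [← Nat.factorization_prod_pow_eq_self he0]
      rw [Finsupp.prod_of_support_subset _ hsupp _ (fun q _ => pow_zero q)]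
      rw [Finset.prod_image (fun a _ b _ h => hinj h)]
  · rintro ⟨f, hf, rfl⟩
    rw [Fintype.mem_piFinset] at hf
    refine ⟨(prod_pow_dvd_iff hp hinj _ _).mpr fun i => ?_, prod_pow_ne_zero hp _⟩
    have := hf i
    rw [Finset.mem_range] at this
    omega

end aux

/-- The degree of the vertex `dZ_m` in `G_n(Z_m)`, where `d = ∏ pᵢ^{rᵢ}`:
it is `0` if `n ∣ d`, and otherwise
`∏(αᵢ+1) - 2 - ∏_{i ∉ D_d}(αᵢ+1) · ∏_{i ∈ D_d}(αᵢ-βᵢ+1)` where `D_d = {i : rᵢ < βᵢ}`. -/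
theorem idealGraph_degree (n m s : ℕ) (hn : 1 < n) (hm : 1 < m) (hdvd : n ∣ m)
    (p α β : Fin s → ℕ) (hp : ∀ i, (p i).Prime) (hinj : Function.Injective p)
    (hα : ∀ i, 1 ≤ α i) (hβα : ∀ i, β i ≤ α i)
    (hmeq : m = ∏ i, p i ^ α i) (hneq : n = ∏ i, p i ^ β i)
    (r : Fin s → ℕ) (hr : ∀ i, r i ≤ α i)
    (d : ℕ) (hdeq : d = ∏ i, p i ^ r i) (hddvd : d ∣ m) (hd1 : d ≠ 1) (hdm : d ≠ m) :
    (n ∣ d →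
      ((idealGraph n m).neighborSet ⟨d, hddvd, hd1, hdm⟩).ncard = 0) ∧
    (¬ n ∣ d →
      ((idealGraph n m).neighborSet ⟨d, hddvd, hd1, hdm⟩).ncard =
        (∏ i, (α i + 1)) - 2 -
          (∏ i ∈ Finset.univ.filter fun i => ¬ r i < β i, (α i + 1)) *
            ∏ i ∈ Finset.univ.filter fun i => r i < β i, (α i - β i + 1)) := by

  classical
  have hm0 : m ≠ 0 := by omega
  have hlcm_dm : Nat.lcm d m = m :=
    Nat.dvd_antisymm (Nat.lcm_dvd hddvd dvd_rfl) (Nat.dvd_lcm_right _ _)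
  constructor
  · intro hnd
    have hempty : (idealGraph n m).neighborSet ⟨d, hddvd, hd1, hdm⟩ = ∅ := by
      ext w
      simp only [SimpleGraph.mem_neighborSet, Set.mem_empty_iff_false, iff_false]
      rintro ⟨-, h2⟩
      exact h2 (hnd.trans (Nat.dvd_lcm_left _ _))
    rw [hempty, Set.ncard_empty]
  · intro hnd
    set v : IdealVertex m := ⟨d, hddvd, hd1, hdm⟩ with hv
    -- the finset of neighbors, as naturals
    set FS : Finset ℕ :=
      m.divisors.filter (fun e => ¬ n ∣ Nat.lcm d e ∧ e ≠ 1 ∧ e ≠ d) with hFS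
    have himg : Subtype.val '' ((idealGraph n m).neighborSet v) = ↑FS := by
      ext x
      simp only [Set.mem_image, SimpleGraph.mem_neighborSet, hFS, Finset.coe_filter,
        Set.mem_setOf_eq, Nat.mem_divisors]
      constructor
      · rintro ⟨⟨e, he⟩, ⟨hne, hlcm⟩, rfl⟩
        refine ⟨⟨he.1, hm0⟩, hlcm, he.2.1, ?_⟩
        intro heq
        exact hne (Subtype.ext heq.symm)
      · rintro ⟨⟨hxm, -⟩, hlcm, hx1, hxd⟩
        have hxm' : x ≠ m := by
          rintro rfl
          exact hlcm (by rw [hlcm_dm]; exact hdvd)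
        refine ⟨⟨x, hxm, hx1, hxm'⟩, ⟨?_, hlcm⟩, rfl⟩
        exact fun hvx => hxd (congrArg Subtype.val hvx).symm
    have hncard : ((idealGraph n m).neighborSet v).ncard = FS.card := by
      rw [← Set.ncard_coe_finset, ← himg,
        Set.ncard_image_of_injective _ Subtype.val_injective]
    rw [hncard]
    -- D2 : divisors e with ¬ n ∣ lcm d e
    set D2 : Finset ℕ := m.divisors.filter (fun e => ¬ n ∣ Nat.lcm d e) with hD2
    have hFSD2 : FS = D2 \ {1, d} := by
      ext e
      simp only [hFS, hD2, Finset.mem_filter, Finset.mem_sdiff, Finset.mem_insert,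
        Finset.mem_singleton]
      tauto
    have h1D2 : (1 : ℕ) ∈ D2 := by
      simp only [hD2, Finset.mem_filter, Nat.mem_divisors]
      exact ⟨⟨one_dvd m, hm0⟩, by rwa [Nat.lcm_one_right]⟩
    have hdD2 : d ∈ D2 := by
      simp only [hD2, Finset.mem_filter, Nat.mem_divisors]
      exact ⟨⟨hddvd, hm0⟩, by rwa [Nat.lcm_self]⟩
    have hsub : {1, d} ⊆ D2 := by
      intro x hx
      simp only [Finset.mem_insert, Finset.mem_singleton] at hx
      rcases hx with rfl | rfl
      · exact h1D2
      · exact hdD2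
    have hcard12 : ({1, d} : Finset ℕ).card = 2 := by
      rw [Finset.card_insert_of_notMem (by simpa using Ne.symm hd1), Finset.card_singleton]
    have hFScard : FS.card = D2.card - 2 := by
      rw [hFSD2, Finset.card_sdiff_of_subset hsub, hcard12]
    -- counting D2 via the bijection
    set A : Finset (Fin s → ℕ) := Fintype.piFinset (fun i => Finset.range (α i + 1)) with hA
    set F : (Fin s → ℕ) → ℕ := fun f => ∏ i, p i ^ f i with hF
    have hFinj : Function.Injective F := by
      intro f g h
      funext j
      have := congrArg (fun x => x.factorization (p j)) h
      simpa only [hF, fact_prod_pow hp hinj] using this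
    have hdivimg : m.divisors = A.image F := by
      ext e
      rw [hmeq, mem_divisors_prod_pow hp hinj, Finset.mem_image]
    have hlcm_iff : ∀ f : Fin s → ℕ,
        (n ∣ Nat.lcm d (F f) ↔ ∀ i, β i ≤ max (r i) (f i)) := by
      intro f
      rw [hdeq, hF, lcm_prod_pow hp hinj, hneq, prod_pow_dvd_iff hp hinj]
    have hD2card : D2.card = (∏ i, (α i + 1)) -
        (∏ i ∈ Finset.univ.filter fun i => ¬ r i < β i, (α i + 1)) *
          ∏ i ∈ Finset.univ.filter fun i => r i < β i, (α i - β i + 1) := by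
      rw [hD2, hdivimg, Finset.filter_image,
        Finset.card_image_of_injective _ hFinj]
      have hAcard : A.card = ∏ i, (α i + 1) := by
        rw [hA, Fintype.card_piFinset]
        simp
      -- the positive part
      have hpos : (A.filter fun f => n ∣ Nat.lcm d (F f)).card =
          (∏ i ∈ Finset.univ.filter fun i => ¬ r i < β i, (α i + 1)) *
            ∏ i ∈ Finset.univ.filter fun i => r i < β i, (α i - β i + 1) := by
        have : (A.filter fun f => n ∣ Nat.lcm d (F f)) =
            Fintype.piFinset (fun i =>
              if r i < β i then Finset.Ico (β i) (α i + 1) else Finset.range (α i + 1)) := by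
          ext f
          rw [Finset.mem_filter, hlcm_iff f, hA, Fintype.mem_piFinset,
            Fintype.mem_piFinset]
          constructor
          · rintro ⟨h1, h2⟩ i
            have h1i := h1 i
            have h2i := h2 i
            rw [Finset.mem_range] at h1i
            rw [le_max_iff] at h2i
            by_cases hc : r i < β i
            · rw [if_pos hc, Finset.mem_Ico]; omega
            · rw [if_neg hc, Finset.mem_range]; omega
          · intro h
            constructor
            · intro i
              have hi := h i
              by_cases hc : r i < β i
              · rw [if_pos hc, Finset.mem_Ico] at hi
                rw [Finset.mem_range]; omega
              · rwa [if_neg hc] at hi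
            · intro i
              have hi := h i
              rw [le_max_iff]
              by_cases hc : r i < β i
              · rw [if_pos hc, Finset.mem_Ico] at hi; omega
              · rw [if_neg hc, Finset.mem_range] at hi; omega
        rw [this, Fintype.card_piFinset]
        have hc : ∀ i, ((if r i < β i then Finset.Ico (β i) (α i + 1)
            else Finset.range (α i + 1)).card)
            = if r i < β i then α i - β i + 1 else α i + 1 := by
          intro i
          have := hβα i
          split
          · rw [Nat.card_Ico]; omega
          · rw [Finset.card_range]
        rw [Finset.prod_congr rfl fun i _ => hc i, Finset.prod_ite, mul_comm]
      have htotal := Finset.card_filter_add_card_filter_not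
        (s := A) (fun f => n ∣ Nat.lcm d (F f))
      omega
    rw [hFScard, hD2card]
    omega
end

section
/- Let n, m > 1 be integers with n dividing m, write m = p₁^{α₁}⋯p_s^{α_s} and n = p₁^{β₁}⋯p_s^{β_s} where p₁, …, p_s are distinct primes, each α_i ≥ 1 and 0 ≤ β_i ≤ α_i, and suppose G_n(Z_m) is not a null graph. If n = p₁⋯p_s (i.e. every β_i = 1) and the primes are ordered so that α₁ ≥ α₂ ≥ ⋯ ≥ α_s, then the maximum degree of G_n(Z_m) is ∏_{i=1}^{s}(α_i + 1) − 2 − (α₁ + 1)∏_{i=2}^{s}α_i. Otherwise (i.e. if β_j ≠ 1 for some j), the maximum degree of G_n(Z_m) is ∏_{i=1}^{s}(α_i + 1) − 2 − ∏_{i=1}^{s}(α_i − β_i + 1). -/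
private lemma fact_apply {s : ℕ} {p : Fin s → ℕ} (hp : ∀ i, (p i).Prime)
    (e : Fin s → ℕ) (q : ℕ) :
    (∏ i, p i ^ e i).factorization q = ∑ i, if p i = q then e i else 0 := by
  classical
  rw [Nat.factorization_prod (fun i _ => pow_ne_zero _ (hp i).ne_zero),
    Finsupp.finset_sum_apply]
  exact Finset.sum_congr rfl fun i _ => by
    rw [(hp i).factorization_pow, Finsupp.single_apply]

private lemma fact_apply_self {s : ℕ} {p : Fin s → ℕ} (hp : ∀ i, (p i).Prime)
    (hinj : Function.Injective p) (e : Fin s → ℕ) (j : Fin s) :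
    (∏ i, p i ^ e i).factorization (p j) = e j := by
  classical
  rw [fact_apply hp]
  rw [Finset.sum_eq_single_of_mem j (Finset.mem_univ j)
    (fun i _ hij => if_neg (fun h => hij (hinj h)))]
  exact if_pos rfl

private lemma fact_apply_other {s : ℕ} {p : Fin s → ℕ} (hp : ∀ i, (p i).Prime)
    (e : Fin s → ℕ) {q : ℕ} (hq : ∀ i, p i ≠ q) :
    (∏ i, p i ^ e i).factorization q = 0 := by
  classical
  rw [fact_apply hp]
  exact Finset.sum_eq_zero fun i _ => if_neg (hq i)

private lemma Dne {s : ℕ} {p : Fin s → ℕ} (hp : ∀ i, (p i).Prime) (e : Fin s → ℕ) :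
    (∏ i, p i ^ e i) ≠ 0 :=
  (Finset.prod_pos fun i _ => pow_pos (hp i).pos _).ne'

private lemma Dinj {s : ℕ} {p : Fin s → ℕ} (hp : ∀ i, (p i).Prime)
    (hinj : Function.Injective p) :
    Function.Injective (fun e : Fin s → ℕ => ∏ i, p i ^ e i) := by
  intro e f h
  have h' : (∏ i, p i ^ e i) = ∏ i, p i ^ f i := h
  funext j
  have h1 := fact_apply_self hp hinj e j
  rw [h', fact_apply_self hp hinj f j] at h1
  exact h1.symm

private lemma dvd_char {s : ℕ} {p α : Fin s → ℕ} (hp : ∀ i, (p i).Prime)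
    (hinj : Function.Injective p) (d : ℕ) :
    d ∣ (∏ i, p i ^ α i) ↔ ∃ e : Fin s → ℕ, (∀ i, e i ≤ α i) ∧ (∏ i, p i ^ e i) = d := by
  classical
  constructor
  · intro hd
    have hd0 : d ≠ 0 := fun h => Dne hp α (Nat.eq_zero_of_zero_dvd (h ▸ hd))
    have hle : d.factorization ≤ (∏ i, p i ^ α i).factorization :=
      (Nat.factorization_le_iff_dvd hd0 (Dne hp α)).2 hd
    refine ⟨fun i => d.factorization (p i), fun i => ?_, ?_⟩
    · have := hle (p i)
      rwa [fact_apply_self hp hinj α i] at this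
    · refine Nat.factorization_inj (by simp [Dne hp]) (by simpa using hd0) ?_
      ext q
      by_cases hq : ∃ j, p j = q
      · obtain ⟨j, rfl⟩ := hq
        rw [fact_apply_self hp hinj _ j]
      · push_neg at hq
        rw [fact_apply_other hp _ hq]
        have h2 := hle q
        rw [fact_apply_other hp _ hq] at h2
        omega
  · rintro ⟨e, he, rfl⟩
    exact Finset.prod_dvd_prod_of_dvd _ _ fun i _ => pow_dvd_pow _ (he i)

private lemma lcm_char {s : ℕ} {p β : Fin s → ℕ} (hp : ∀ i, (p i).Prime)
    (hinj : Function.Injective p) (e f : Fin s → ℕ) :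
    (∏ i, p i ^ β i) ∣ Nat.lcm (∏ i, p i ^ e i) (∏ i, p i ^ f i) ↔
      ∀ i, β i ≤ max (e i) (f i) := by
  classical
  have hl : Nat.lcm (∏ i, p i ^ e i) (∏ i, p i ^ f i) ≠ 0 :=
    Nat.lcm_ne_zero (Dne hp e) (Dne hp f)
  rw [← Nat.factorization_le_iff_dvd (Dne hp β) hl,
    Nat.factorization_lcm (Dne hp e) (Dne hp f), Finsupp.le_def]
  constructor
  · intro h i
    have := h (p i)
    rwa [fact_apply_self hp hinj β i, Finsupp.sup_apply,
      fact_apply_self hp hinj e i, fact_apply_self hp hinj f i] at this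
  · intro h q
    by_cases hq : ∃ j, p j = q
    · obtain ⟨j, rfl⟩ := hq
      rw [fact_apply_self hp hinj β j, Finsupp.sup_apply,
        fact_apply_self hp hinj e j, fact_apply_self hp hinj f j]
      exact h j
    · push_neg at hq
      rw [fact_apply_other hp _ hq]
      exact Nat.zero_le _



private lemma degree_formula (n m s : ℕ)
    (p α β : Fin s → ℕ) (hp : ∀ i, (p i).Prime) (hinj : Function.Injective p)
    (hβα : ∀ i, β i ≤ α i)
    (hmeq : m = ∏ i, p i ^ α i) (hneq : n = ∏ i, p i ^ β i)
    (v : IdealVertex m) (e : Fin s → ℕ) (he : ∀ i, e i ≤ α i) (hve : v.1 = ∏ i, p i ^ e i) :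
    ((idealGraph n m).neighborSet v).ncard =
      if ∃ i, e i < β i then
        (∏ i, (α i + 1)) - 2 - ∏ i, (if e i < β i then α i + 1 - β i else α i + 1)
      else 0 := by
  classical
  obtain ⟨hvm, hv1, hvm'⟩ := v.2
  -- e is not 0 and not α
  have he0 : e ≠ 0 := by
    rintro rfl
    exact hv1 (by simpa using hve)
  have heα : e ≠ α := by
    rintro rfl
    exact hvm' (hve.trans hmeq.symm)
  have hα0 : α ≠ 0 := fun h => heα (le_antisymm (fun i => h ▸ he i) (h ▸ fun i => Nat.zero_le _))
  set D : (Fin s → ℕ) → ℕ := fun g => ∏ i, p i ^ g i with hD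
  set B : Finset (Fin s → ℕ) := Fintype.piFinset fun i => Finset.range (α i + 1) with hB
  set P : (Fin s → ℕ) → Prop := fun f => ∃ i, e i < β i ∧ f i < β i with hP
  set C : Finset (Fin s → ℕ) := B.filter (fun f => f ≠ 0 ∧ f ≠ α ∧ f ≠ e ∧ P f) with hC
  -- the image description of the neighbor set
  have key : Subtype.val '' ((idealGraph n m).neighborSet v) = ↑(C.image D) := by
    ext w
    simp only [Set.mem_image, SimpleGraph.mem_neighborSet, Finset.coe_image, Finset.mem_coe]
    constructor
    · rintro ⟨⟨w', hw'⟩, ⟨hne, hndvd⟩, rfl⟩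
      obtain ⟨f, hf, hDf⟩ := (dvd_char hp hinj w').1 (hmeq ▸ hw'.1)
      refine ⟨f, ?_, hDf⟩
      rw [hC, Finset.mem_filter]
      refine ⟨by simp [hB, Fintype.mem_piFinset, Finset.mem_range, Nat.lt_succ_iff, hf], ?_, ?_, ?_, ?_⟩
      · rintro rfl; exact hw'.2.1 (by simpa using hDf.symm)
      · rintro rfl; exact hw'.2.2 (hDf ▸ hmeq.symm)
      · rintro rfl
        exact hne (Subtype.ext (hve.trans hDf))
      · have hndvd' : ¬ n ∣ Nat.lcm v.1 w' := hndvd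
        rw [hve, ← hDf, hneq, lcm_char hp hinj] at hndvd'
        push_neg at hndvd'
        obtain ⟨i, hi⟩ := hndvd'
        show ∃ i, e i < β i ∧ f i < β i
        exact ⟨i, by omega, by omega⟩
    · rintro ⟨f, hfC, rfl⟩
      rw [hC, Finset.mem_filter] at hfC
      obtain ⟨hfB, hf0, hfα, hfe, hfP⟩ := hfC
      have hfle : ∀ i, f i ≤ α i := by
        intro i
        have := (Fintype.mem_piFinset.1 hfB) i
        simpa [Nat.lt_succ_iff] using this
      have hdvd' : D f ∣ m := hmeq ▸ (dvd_char hp hinj (D f)).2 ⟨f, hfle, rfl⟩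
      have hne1 : D f ≠ 1 := by
        intro h
        exact hf0 (Dinj hp hinj (h.trans (by simp [hD])))
      have hnem : D f ≠ m := by
        intro h
        exact hfα (Dinj hp hinj (h.trans hmeq))
      refine ⟨⟨D f, hdvd', hne1, hnem⟩, ⟨?_, ?_⟩, rfl⟩
      · intro h
        have : v.1 = D f := by rw [h]
        exact hfe (Dinj hp hinj ((hve ▸ this).symm))
      · rw [hve, hneq, lcm_char hp hinj]
        obtain ⟨i, hi1, hi2⟩ := hfP
        intro h
        have := h i
        omega
  -- cardinalities
  have hcard : ((idealGraph n m).neighborSet v).ncard = C.card := by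
    rw [← Set.ncard_image_of_injective _ (Subtype.val_injective), key,
      Set.ncard_coe_finset, Finset.card_image_of_injOn ((Dinj hp hinj).injOn)]
  rw [hcard]
  by_cases hS : ∃ i, e i < β i
  · rw [if_pos hS]
    set T : Finset (Fin s → ℕ) := B.filter P with hT
    have hαT : α ∉ T := by
      rw [hT, Finset.mem_filter]
      rintro ⟨-, i, hi1, hi2⟩
      exact absurd hi2 (by have := hβα i; omega)
    have hCT : C = T \ {0, e} := by
      ext f
      rw [hC, hT, Finset.mem_sdiff, Finset.mem_filter, Finset.mem_filter]
      simp only [Finset.mem_insert, Finset.mem_singleton]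
      constructor
      · rintro ⟨hB', h0, hα', he', hP'⟩
        exact ⟨⟨hB', hP'⟩, by tauto⟩
      · rintro ⟨⟨hB', hP'⟩, hne⟩
        push_neg at hne
        refine ⟨hB', hne.1, ?_, hne.2, hP'⟩
        rintro rfl
        exact hαT (Finset.mem_filter.2 ⟨hB', hP'⟩)
    have hsub : ({0, e} : Finset (Fin s → ℕ)) ⊆ T := by
      intro f hf
      simp only [Finset.mem_insert, Finset.mem_singleton] at hf
      obtain ⟨i, hi⟩ := hS
      rcases hf with rfl | hfe
      · refine Finset.mem_filter.2 ⟨?_, ?_⟩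
        · simp [hB, Fintype.mem_piFinset]
        · show ∃ i, e i < β i ∧ (0 : Fin s → ℕ) i < β i
          exact ⟨i, hi, by simp only [Pi.zero_apply]; omega⟩
      · subst hfe
        refine Finset.mem_filter.2 ⟨?_, ?_⟩
        · simp [hB, Fintype.mem_piFinset, Nat.lt_succ_iff, he]
        · show ∃ i, f i < β i ∧ f i < β i
          exact ⟨i, hi, hi⟩
    have hc2 : ({0, e} : Finset (Fin s → ℕ)).card = 2 := by
      rw [Finset.card_insert_of_notMem (by simpa using (Ne.symm he0)), Finset.card_singleton]
    have hBcard : B.card = ∏ i, (α i + 1) := by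
      rw [hB, Fintype.card_piFinset]
      simp
    have hnegcard : (B.filter (fun f => ¬ P f)).card =
        ∏ i, (if e i < β i then α i + 1 - β i else α i + 1) := by
      have heq : B.filter (fun f => ¬ P f) =
          Fintype.piFinset fun i => (Finset.range (α i + 1)).filter
            (fun x => ¬ (e i < β i ∧ x < β i)) := by
        ext f
        simp only [Finset.mem_filter, hB, Fintype.mem_piFinset, Finset.mem_filter, hP,
          not_exists, not_and]
        constructor
        · rintro ⟨h1, h2⟩ i
          exact ⟨h1 i, fun ha hb => (h2 i ha) hb⟩
        · intro h
          exact ⟨fun i => (h i).1, fun i ha hb => (h i).2 ha hb⟩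
      rw [heq, Fintype.card_piFinset]
      refine Finset.prod_congr rfl fun i _ => ?_
      by_cases hi : e i < β i
      · rw [if_pos hi]
        have : (Finset.range (α i + 1)).filter (fun x => ¬ (e i < β i ∧ x < β i)) =
            Finset.Ico (β i) (α i + 1) := by
          ext x
          simp only [Finset.mem_filter, Finset.mem_range, Finset.mem_Ico, not_and]
          constructor
          · rintro ⟨h1, h2⟩; exact ⟨by have := h2 hi; omega, h1⟩
          · rintro ⟨h1, h2⟩; exact ⟨h2, fun _ => by omega⟩
        rw [this, Nat.card_Ico]
      · rw [if_neg hi, Finset.filter_true_of_mem (fun x _ => by tauto), Finset.card_range]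
    have hTcard : T.card + (B.filter (fun f => ¬ P f)).card = B.card :=
      Finset.card_filter_add_card_filter_not P
    rw [hCT, Finset.card_sdiff_of_subset hsub, hc2]
    omega
  · rw [if_neg hS]
    rw [Finset.card_eq_zero, Finset.eq_empty_iff_forall_notMem]
    intro f hf
    rw [hC, Finset.mem_filter] at hf
    obtain ⟨i, hi, -⟩ := hf.2.2.2.2
    exact hS ⟨i, hi⟩

/-- The maximum degree of `G_n(Z_m)` (when it is not a null graph):
if `n = p₁⋯p_s` and `α₁ ≥ ⋯ ≥ α_s`, it is `∏(αᵢ+1) - 2 - (α₁+1)∏_{i≥2}αᵢ`;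
otherwise it is `∏(αᵢ+1) - 2 - ∏(αᵢ-βᵢ+1)`. -/
theorem idealGraph_maxDegree (n m s : ℕ) (hs : 0 < s) (hn : 1 < n) (hm : 1 < m) (hdvd : n ∣ m)
    (p α β : Fin s → ℕ) (hp : ∀ i, (p i).Prime) (hinj : Function.Injective p)
    (hα : ∀ i, 1 ≤ α i) (hβα : ∀ i, β i ≤ α i)
    (hmeq : m = ∏ i, p i ^ α i) (hneq : n = ∏ i, p i ^ β i)
    (hnotnull : ∃ a b : IdealVertex m, (idealGraph n m).Adj a b) :
    ((∀ i, β i = 1) → (∀ i j : Fin s, i ≤ j → α j ≤ α i) →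
      IsGreatest {k : ℕ | ∃ v : IdealVertex m, ((idealGraph n m).neighborSet v).ncard = k}
        ((∏ i, (α i + 1)) - 2 -
          (α ⟨0, hs⟩ + 1) * ∏ i ∈ Finset.univ.erase ⟨0, hs⟩, α i)) ∧
    ((∃ j, β j ≠ 1) →
      IsGreatest {k : ℕ | ∃ v : IdealVertex m, ((idealGraph n m).neighborSet v).ncard = k}
        ((∏ i, (α i + 1)) - 2 - ∏ i, (α i - β i + 1))) := by
  classical
  have mkv : ∀ e : Fin s → ℕ, (∀ i, e i ≤ α i) → e ≠ 0 → e ≠ α →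
      ∃ v : IdealVertex m, v.1 = ∏ i, p i ^ e i := by
    intro e he h0 hα'
    refine ⟨⟨∏ i, p i ^ e i, ?_, ?_, ?_⟩, rfl⟩
    · rw [hmeq]; exact (dvd_char hp hinj _).2 ⟨e, he, rfl⟩
    · intro h; exact h0 (Dinj hp hinj (h.trans (by simp)))
    · intro h; exact hα' (Dinj hp hinj (h.trans hmeq))
  have getv : ∀ v : IdealVertex m, ∃ e : Fin s → ℕ,
      (∀ i, e i ≤ α i) ∧ e ≠ 0 ∧ e ≠ α ∧ v.1 = ∏ i, p i ^ e i := by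
    intro v
    obtain ⟨hd, h1, hm'⟩ := v.2
    obtain ⟨e, he, hDe⟩ := (dvd_char hp hinj v.1).1 (by rw [← hmeq]; exact hd)
    refine ⟨e, he, ?_, ?_, hDe.symm⟩
    · rintro rfl; exact h1 (by simpa using hDe.symm)
    · rintro rfl; exact hm' (hDe.symm.trans hmeq.symm)
  have hβ1 : ∃ i, 1 ≤ β i := by
    by_contra h
    push_neg at h
    have hb : ∀ i, β i = 0 := fun i => by have := h i; omega
    have : n = 1 := by rw [hneq]; simp [hb]
    omega
  constructor
  · -- case 1 : all β i = 1, α sorted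
    intro hb1 hsort
    set z : Fin s := ⟨0, hs⟩ with hz
    -- find two distinct indices using hnotnull
    obtain ⟨a, b, hab⟩ := hnotnull
    obtain ⟨ea, hea, hea0, heaα, hvea⟩ := getv a
    obtain ⟨eb, heb, heb0, hebα, hveb⟩ := getv b
    have hadj2 := hab.2
    rw [hvea, hveb, hneq, lcm_char hp hinj] at hadj2
    push_neg at hadj2
    obtain ⟨i, hi⟩ := hadj2
    have hbi := hb1 i
    have hk : ∃ k, ea k ≠ 0 := by
      by_contra h; push_neg at h; exact hea0 (funext h)
    obtain ⟨k, hk⟩ := hk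
    have hik : i ≠ k := by rintro rfl; omega
    -- a witness index different from z
    set w : Fin s := if i = z then k else i with hw
    have hwz : w ≠ z := by
      rw [hw]; split
      · rename_i hiz; rw [← hiz]; exact Ne.symm hik
      · assumption
    -- the witness vertex
    set e₁ : Fin s → ℕ := fun i => if i = z then 1 else 0 with he₁def
    have he₁ : ∀ i, e₁ i ≤ α i := by
      intro i; rw [he₁def]; dsimp only; split <;> [exact hα i; exact Nat.zero_le _]
    have h10 : e₁ ≠ 0 := by
      intro h
      have := congrFun h z
      simp [he₁def] at this
    have h1α : e₁ ≠ α := by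
      intro h
      have := congrFun h w
      rw [he₁def] at this
      simp only [if_neg hwz] at this
      have := hα w
      omega
    obtain ⟨v, hv⟩ := mkv e₁ he₁ h10 h1α
    have hprod : (∏ i, (if e₁ i < β i then α i + 1 - β i else α i + 1)) =
        (α z + 1) * ∏ i ∈ Finset.univ.erase z, α i := by
      rw [← Finset.mul_prod_erase Finset.univ _ (Finset.mem_univ z)]
      congr 1
      · have : ¬ e₁ z < β z := by rw [he₁def, hb1 z]; simp
        rw [if_neg this]
      · refine Finset.prod_congr rfl fun i hi' => ?_
        have hiz : i ≠ z := (Finset.mem_erase.1 hi').1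
        have : e₁ i < β i := by rw [he₁def, hb1 i]; simp [hiz]
        rw [if_pos this, hb1 i]
        omega
    constructor
    · exact ⟨v, by rw [degree_formula n m s p α β hp hinj hβα hmeq hneq v e₁ he₁ hv,
        if_pos ⟨w, by rw [he₁def, hb1 w]; simp [hwz]⟩, hprod]⟩
    · rintro x ⟨v', rfl⟩
      obtain ⟨e, he, he0, heα, hve⟩ := getv v'
      rw [degree_formula n m s p α β hp hinj hβα hmeq hneq v' e he hve]
      by_cases hS : ∃ i, e i < β i
      · rw [if_pos hS]
        have hj : ∃ j, e j ≠ 0 := by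
          by_contra h; push_neg at h; exact he0 (funext h)
        obtain ⟨j, hj⟩ := hj
        have hzj : α j ≤ α z := hsort z j (by simp [Fin.le_def, hz])
        have step1 : (α z + 1) * ∏ i ∈ Finset.univ.erase z, α i ≤
            (α j + 1) * ∏ i ∈ Finset.univ.erase j, α i := by
          by_cases hjz : j = z
          · rw [hjz]
          · have h0j : z ∈ Finset.univ.erase j := Finset.mem_erase.2 ⟨Ne.symm hjz, Finset.mem_univ _⟩
            have hjz' : j ∈ Finset.univ.erase z := Finset.mem_erase.2 ⟨hjz, Finset.mem_univ _⟩
            have hre : ((Finset.univ.erase j).erase z) = ((Finset.univ.erase z).erase j) :=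
              Finset.erase_right_comm
            rw [← Finset.mul_prod_erase _ α h0j, ← Finset.mul_prod_erase _ α hjz', hre]
            set C := ∏ i ∈ (Finset.univ.erase z).erase j, α i with hCdef
            calc (α z + 1) * (α j * C) = ((α z + 1) * α j) * C := (mul_assoc _ _ _).symm
              _ ≤ ((α j + 1) * α z) * C := by
                  have : (α z + 1) * α j ≤ (α j + 1) * α z := by nlinarith
                  exact mul_le_mul_left this C
              _ = (α j + 1) * (α z * C) := mul_assoc _ _ _
        have step2 : (α j + 1) * ∏ i ∈ Finset.univ.erase j, α i ≤
            ∏ i, (if e i < β i then α i + 1 - β i else α i + 1) := by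
          rw [← Finset.mul_prod_erase Finset.univ _ (Finset.mem_univ j)]
          refine Nat.mul_le_mul ?_ (Finset.prod_le_prod' fun i _ => ?_)
          · have : ¬ e j < β j := by rw [hb1 j]; omega
            rw [if_neg this]
          · have := hb1 i
            split <;> omega
        exact Nat.sub_le_sub_left (step1.trans step2) _
      · rw [if_neg hS]
        exact Nat.zero_le _
  · -- case 2 : some β j ≠ 1
    rintro ⟨j, hj⟩
    obtain ⟨i₀, hi₀⟩ := hβ1
    set e₂ : Fin s → ℕ := fun i => if i = j then (if β j = 0 then α j else β j - 1) else 0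
      with he₂def
    have he₂ : ∀ i, e₂ i ≤ α i := by
      intro i; rw [he₂def]; dsimp only
      have := hβα j; have := hα j
      split
      · rename_i h; subst h; split <;> omega
      · exact Nat.zero_le _
    have key : ∀ i, (e₂ i < β i ↔ 1 ≤ β i) := by
      intro i; rw [he₂def]; dsimp only
      by_cases hij : i = j
      · subst hij
        rw [if_pos rfl]
        by_cases h0 : β i = 0
        · rw [if_pos h0]; omega
        · rw [if_neg h0]; omega
      · rw [if_neg hij]; omega
    have hvalj : e₂ j = if β j = 0 then α j else β j - 1 := by simp [he₂def]
    have hval0 : ∀ i, i ≠ j → e₂ i = 0 := by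
      intro i hij; simp [he₂def, hij]
    have h20 : e₂ ≠ 0 := by
      intro h
      have h' := congrFun h j
      rw [hvalj] at h'
      simp only [Pi.zero_apply] at h'
      have := hα j
      split at h' <;> omega
    have h2α : e₂ ≠ α := by
      intro h
      by_cases hbj : β j = 0
      · have hij : i₀ ≠ j := by rintro rfl; omega
        have h' := congrFun h i₀
        rw [hval0 i₀ hij] at h'
        have := hα i₀
        omega
      · have h' := congrFun h j
        rw [hvalj, if_neg hbj] at h'
        have := hβα j
        omega
    obtain ⟨v, hv⟩ := mkv e₂ he₂ h20 h2α
    have hprod : (∏ i, (if e₂ i < β i then α i + 1 - β i else α i + 1)) =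
        ∏ i, (α i - β i + 1) := by
      refine Finset.prod_congr rfl fun i _ => ?_
      have hk := key i
      have := hβα i
      by_cases h1 : 1 ≤ β i
      · rw [if_pos (hk.2 h1)]; omega
      · rw [if_neg (fun hc => h1 (hk.1 hc))]; omega
    constructor
    · exact ⟨v, by rw [degree_formula n m s p α β hp hinj hβα hmeq hneq v e₂ he₂ hv,
        if_pos ⟨i₀, (key i₀).2 hi₀⟩, hprod]⟩
    · rintro x ⟨v', rfl⟩
      obtain ⟨e, he, he0, heα, hve⟩ := getv v'
      rw [degree_formula n m s p α β hp hinj hβα hmeq hneq v' e he hve]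
      by_cases hS : ∃ i, e i < β i
      · rw [if_pos hS]
        refine Nat.sub_le_sub_left (Finset.prod_le_prod' fun i _ => ?_) _
        have := hβα i
        split <;> omega
      · rw [if_neg hS]
        exact Nat.zero_le _
end

section
/- Let n, m > 1 be integers with n dividing m, write m = p₁^{α₁}⋯p_s^{α_s} and n = p₁^{β₁}⋯p_s^{β_s} where p₁, …, p_s are distinct primes, each α_i ≥ 1 and 0 ≤ β_i ≤ α_i, and suppose G_n(Z_m) is not a null graph. Let 𝔄 be the set of isolated vertices of G_n(Z_m). If n ≠ p₁⋯p_s (i.e. not all β_i equal 1), or if n = p₁p₂ and m = p₁^{α₁}p₂ with α₁ ≥ 2 (after relabeling the primes), then the domination number of G_n(Z_m) equals |𝔄| + 1; otherwise it equals |𝔄| + 2. -/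
namespace DomAux

variable {n m : ℕ}

def Isol (n m : ℕ) (v : IdealVertex m) : Prop := ∀ u, ¬ (idealGraph n m).Adj v u

lemma finite_iv (hm : 0 < m) : Finite (IdealVertex m) := by
  apply Finite.of_injective
    (fun v : IdealVertex m => (⟨v.1, Nat.lt_succ_of_le (Nat.le_of_dvd hm v.2.1)⟩ : Fin (m+1)))
  intro a b h
  exact Subtype.ext (congrArg Fin.val h)

lemma not_isol_of_adj {u v : IdealVertex m} (h : (idealGraph n m).Adj u v) : ¬ Isol n m u :=
  fun hi => hi v h

lemma isol_subset {t : Set (IdealVertex m)}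
    (ht : ∀ v ∉ t, ∃ u ∈ t, (idealGraph n m).Adj u v) :
    {v : IdealVertex m | ∀ u, ¬ (idealGraph n m).Adj v u} ⊆ t := by
  intro v hv
  by_contra hvt
  obtain ⟨u, _, hadj⟩ := ht v hvt
  exact hv u hadj.symm

lemma exists_nonisol_mem {t : Set (IdealVertex m)}
    (hnotnull : ∃ a b : IdealVertex m, (idealGraph n m).Adj a b)
    (ht : ∀ v ∉ t, ∃ u ∈ t, (idealGraph n m).Adj u v) :
    ∃ x ∈ t, ¬ Isol n m x := by
  obtain ⟨a, b, hab⟩ := hnotnull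
  by_cases hat : a ∈ t
  · exact ⟨a, hat, not_isol_of_adj hab⟩
  · obtain ⟨u, hut, hadj⟩ := ht a hat
    exact ⟨u, hut, not_isol_of_adj hadj⟩

lemma isLeast_one (hm : 0 < m)
    (hnotnull : ∃ a b : IdealVertex m, (idealGraph n m).Adj a b)
    (d₀ : IdealVertex m)
    (hdom : ∀ v, v ≠ d₀ → ¬ Isol n m v → (idealGraph n m).Adj d₀ v) :
    IsLeast {k : ℕ | ∃ t : Set (IdealVertex m),
        (∀ v ∉ t, ∃ u ∈ t, (idealGraph n m).Adj u v) ∧ t.ncard = k}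
      ({v : IdealVertex m | ∀ u : IdealVertex m, ¬ (idealGraph n m).Adj v u}.ncard + 1) := by
  have : Finite (IdealVertex m) := finite_iv hm
  set A := {v : IdealVertex m | ∀ u : IdealVertex m, ¬ (idealGraph n m).Adj v u} with hA
  have hd₀ : ¬ Isol n m d₀ := by
    obtain ⟨a, b, hab⟩ := hnotnull
    by_cases ha : a = d₀
    · subst ha; exact not_isol_of_adj hab
    · exact not_isol_of_adj (hdom a ha (not_isol_of_adj hab))
  have hd₀A : d₀ ∉ A := hd₀
  constructor
  · refine ⟨insert d₀ A, ?_, ?_⟩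
    · intro v hv
      exact ⟨d₀, Set.mem_insert _ _,
        hdom v (fun h => hv (h ▸ Set.mem_insert _ _))
          (fun h => hv (Set.mem_insert_of_mem _ h))⟩
    · rw [Set.ncard_insert_of_notMem hd₀A A.toFinite]
  · rintro k ⟨t, ht, rfl⟩
    have hAt : A ⊆ t := isol_subset ht
    obtain ⟨x, hxt, hx⟩ := exists_nonisol_mem hnotnull ht
    have hsub : insert x A ⊆ t := Set.insert_subset hxt hAt
    calc A.ncard + 1 = (insert x A).ncard :=
          (Set.ncard_insert_of_notMem hx A.toFinite).symm
      _ ≤ t.ncard := Set.ncard_le_ncard hsub t.toFinite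

lemma isLeast_two (hm : 0 < m)
    (hnotnull : ∃ a b : IdealVertex m, (idealGraph n m).Adj a b)
    (d₁ d₂ : IdealVertex m) (hne : d₁ ≠ d₂)
    (h1 : ¬ Isol n m d₁) (h2 : ¬ Isol n m d₂)
    (hdom : ∀ v, v ≠ d₁ → v ≠ d₂ → ¬ Isol n m v →
      (idealGraph n m).Adj d₁ v ∨ (idealGraph n m).Adj d₂ v)
    (hno1 : ∀ d : IdealVertex m, ¬ Isol n m d →
      ∃ v, ¬ Isol n m v ∧ v ≠ d ∧ ¬ (idealGraph n m).Adj d v) :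
    IsLeast {k : ℕ | ∃ t : Set (IdealVertex m),
        (∀ v ∉ t, ∃ u ∈ t, (idealGraph n m).Adj u v) ∧ t.ncard = k}
      ({v : IdealVertex m | ∀ u : IdealVertex m, ¬ (idealGraph n m).Adj v u}.ncard + 2) := by
  have : Finite (IdealVertex m) := finite_iv hm
  set A := {v : IdealVertex m | ∀ u : IdealVertex m, ¬ (idealGraph n m).Adj v u} with hA
  have h1A : d₁ ∉ A := h1
  have h2A : d₂ ∉ A := h2
  constructor
  · refine ⟨insert d₁ (insert d₂ A), ?_, ?_⟩
    · intro v hv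
      have hv1 : v ≠ d₁ := fun h => hv (h ▸ Set.mem_insert _ _)
      have hv2 : v ≠ d₂ := fun h => hv (h ▸ Set.mem_insert_of_mem _ (Set.mem_insert _ _))
      have hvA : ¬ Isol n m v := fun h =>
        hv (Set.mem_insert_of_mem _ (Set.mem_insert_of_mem _ h))
      rcases hdom v hv1 hv2 hvA with h | h
      · exact ⟨d₁, Set.mem_insert _ _, h⟩
      · exact ⟨d₂, Set.mem_insert_of_mem _ (Set.mem_insert _ _), h⟩
    · rw [Set.ncard_insert_of_notMem (fun h => (Set.mem_insert_iff.mp h).elim hne h1A) (A.toFinite.insert d₂),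
        Set.ncard_insert_of_notMem h2A A.toFinite]
  · rintro k ⟨t, ht, rfl⟩
    have hAt : A ⊆ t := isol_subset ht
    obtain ⟨x, hxt, hx⟩ := exists_nonisol_mem hnotnull ht
    obtain ⟨v, hvn, hvx, hvadj⟩ := hno1 x hx
    obtain ⟨y, hyt, hy, hyx⟩ : ∃ y ∈ t, ¬ Isol n m y ∧ y ≠ x := by
      by_cases hvt : v ∈ t
      · exact ⟨v, hvt, hvn, hvx⟩
      · obtain ⟨u, hut, hadj⟩ := ht v hvt
        refine ⟨u, hut, not_isol_of_adj hadj, ?_⟩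
        rintro rfl; exact hvadj hadj
    have hsub : insert x (insert y A) ⊆ t :=
      Set.insert_subset hxt (Set.insert_subset hyt hAt)
    calc A.ncard + 2 = (insert x (insert y A)).ncard := by
          rw [Set.ncard_insert_of_notMem (fun h => (Set.mem_insert_iff.mp h).elim (fun h' => hyx h'.symm) hx) (A.toFinite.insert y),
            Set.ncard_insert_of_notMem hy A.toFinite]
      _ ≤ t.ncard := Set.ncard_le_ncard hsub t.toFinite

end DomAux

namespace DomAux2

lemma pow_dvd_lcm_iff {q b x y : ℕ} (hq : q.Prime) (hx : x ≠ 0) (hy : y ≠ 0) :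
    q ^ b ∣ Nat.lcm x y ↔ q ^ b ∣ x ∨ q ^ b ∣ y := by
  rw [Nat.Prime.pow_dvd_iff_le_factorization hq (Nat.lcm_ne_zero hx hy),
    Nat.factorization_lcm hx hy, Finsupp.sup_apply, le_sup_iff,
    ← Nat.Prime.pow_dvd_iff_le_factorization hq hx,
    ← Nat.Prime.pow_dvd_iff_le_factorization hq hy]

lemma prime_dvd_lcm {q x y : ℕ} (hq : q.Prime) (h : q ∣ Nat.lcm x y) : q ∣ x ∨ q ∣ y :=
  (Nat.Prime.dvd_mul hq).mp
    (h.trans (Nat.lcm_dvd (dvd_mul_right x y) (dvd_mul_left y x)))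

lemma not_pow_two_dvd {q : ℕ} (hq : q.Prime) : ¬ q ^ 2 ∣ q := by
  intro h
  have h1 := Nat.le_of_dvd hq.pos h
  nlinarith [hq.two_le]

section Primes

variable {s : ℕ} {p : Fin s → ℕ} (hp : ∀ i, (p i).Prime) (hinj : Function.Injective p)

include hp in
lemma eq_of_prime_dvd_pow {q : ℕ} (hq : q.Prime) {i : Fin s} {k : ℕ} (h : q ∣ p i ^ k) :
    q = p i :=
  (Nat.prime_dvd_prime_iff_eq hq (hp i)).mp (hq.dvd_of_dvd_pow h)

include hp hinj in
lemma prod_pow_dvd {e : Fin s → ℕ} {t : Finset (Fin s)} {x : ℕ}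
    (h : ∀ i ∈ t, p i ^ e i ∣ x) : (∏ i ∈ t, p i ^ e i) ∣ x := by
  classical
  induction t using Finset.induction_on with
  | empty => simp
  | @insert a t hat ih =>
    rw [Finset.prod_insert hat]
    refine Nat.Coprime.mul_dvd_of_dvd_of_dvd ?_ (h a (Finset.mem_insert_self a t))
      (ih fun i hi => h i (Finset.mem_insert_of_mem hi))
    refine Nat.Coprime.prod_right fun i hi => ?_
    exact Nat.Coprime.pow _ _ ((Nat.coprime_primes (hp a) (hp i)).mpr
      (fun hpe => hat (hinj hpe ▸ hi)))

include hp in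
lemma exists_p_dvd {α : Fin s → ℕ} {x : ℕ} (hx : x ∣ ∏ i, p i ^ α i) (hx1 : x ≠ 1) :
    ∃ i, p i ∣ x := by
  obtain ⟨q, hq, hqx⟩ := Nat.exists_prime_and_dvd hx1
  obtain ⟨i, _, hqp⟩ := (Prime.dvd_finset_prod_iff hq.prime _).mp (hqx.trans hx)
  exact ⟨i, eq_of_prime_dvd_pow hp hq hqp ▸ hqx⟩

include hp hinj in
lemma not_dvd_prod_erase {α : Fin s → ℕ} (j : Fin s) :
    ¬ p j ∣ ∏ k ∈ Finset.univ.erase j, p k ^ α k := by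
  intro h
  obtain ⟨i, hi, hd⟩ := (Prime.dvd_finset_prod_iff (hp j).prime _).mp h
  exact (Finset.mem_erase.mp hi).1 (hinj (eq_of_prime_dvd_pow hp (hp j) hd)).symm

include hp in
lemma dvd_prod_erase_of_not_dvd {α : Fin s → ℕ} {x : ℕ} (hx : x ∣ ∏ i, p i ^ α i)
    (i : Fin s) (h : ¬ p i ∣ x) : x ∣ ∏ k ∈ Finset.univ.erase i, p k ^ α k := by
  have hco : Nat.Coprime x (p i ^ α i) :=
    Nat.Coprime.pow_right _ (Nat.coprime_comm.mp ((hp i).coprime_iff_not_dvd.mpr h))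
  have hmfac : (∏ k, p k ^ α k) = p i ^ α i * ∏ k ∈ Finset.univ.erase i, p k ^ α k :=
    (Finset.mul_prod_erase _ _ (Finset.mem_univ i)).symm
  exact hco.dvd_of_dvd_mul_left (hmfac ▸ hx)

end Primes
end DomAux2

/-- The domination number of `G_n(Z_m)` (when it is not a null graph): it is `|𝔄| + 1`
if `n ≠ p₁⋯p_s`, or in the exceptional case `n = p₁p₂`, `m = p₁^{α₁}p₂`, `α₁ ≥ 2`;
otherwise it is `|𝔄| + 2`, where `𝔄` is the set of isolated vertices. -/
theorem idealGraph_dominationNumber (n m s : ℕ) (hn : 1 < n) (hm : 1 < m) (hdvd : n ∣ m)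
    (p α β : Fin s → ℕ) (hp : ∀ i, (p i).Prime) (hinj : Function.Injective p)
    (hα : ∀ i, 1 ≤ α i) (hβα : ∀ i, β i ≤ α i)
    (hmeq : m = ∏ i, p i ^ α i) (hneq : n = ∏ i, p i ^ β i)
    (hnotnull : ∃ a b : IdealVertex m, (idealGraph n m).Adj a b) :
    (((¬ ∀ i, β i = 1) ∨ (∃ q₁ q₂ a : ℕ, q₁.Prime ∧ q₂.Prime ∧ q₁ ≠ q₂ ∧ 2 ≤ a ∧
        n = q₁ * q₂ ∧ m = q₁ ^ a * q₂)) →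
      IsLeast {k : ℕ | ∃ t : Set (IdealVertex m),
          (∀ v ∉ t, ∃ u ∈ t, (idealGraph n m).Adj u v) ∧ t.ncard = k}
        ({v : IdealVertex m | ∀ u : IdealVertex m, ¬ (idealGraph n m).Adj v u}.ncard + 1)) ∧
    (((∀ i, β i = 1) ∧ ¬ (∃ q₁ q₂ a : ℕ, q₁.Prime ∧ q₂.Prime ∧ q₁ ≠ q₂ ∧ 2 ≤ a ∧
        n = q₁ * q₂ ∧ m = q₁ ^ a * q₂)) →
      IsLeast {k : ℕ | ∃ t : Set (IdealVertex m),
          (∀ v ∉ t, ∃ u ∈ t, (idealGraph n m).Adj u v) ∧ t.ncard = k}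
        ({v : IdealVertex m | ∀ u : IdealVertex m, ¬ (idealGraph n m).Adj v u}.ncard + 2)) := by
    classical
  have hm0 : 0 < m := by omega
  have hmne : m ≠ 0 := by omega
  have hvne : ∀ v : IdealVertex m, v.1 ≠ 0 := by
    intro v h
    exact hmne (by simpa [h] using v.2.1)
  have hisol : ∀ v : IdealVertex m, n ∣ v.1 → DomAux.Isol n m v := by
    intro v hv u hadj
    exact hadj.2 (hv.trans (Nat.dvd_lcm_left _ _))
  have hpn : ∀ i, p i ^ β i ∣ n := by
    intro i; rw [hneq]; exact Finset.dvd_prod_of_mem _ (Finset.mem_univ i)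
  have hppm : ∀ i, p i ^ α i ∣ m := by
    intro i; rw [hmeq]; exact Finset.dvd_prod_of_mem _ (Finset.mem_univ i)
  have hpim : ∀ i, p i ∣ m := fun i =>
    (dvd_pow_self (p i) (by have := hα i; omega)).trans (hppm i)
  have hwit : ∀ x : ℕ, ¬ n ∣ x → ∃ i, 1 ≤ β i ∧ ¬ p i ^ β i ∣ x := by
    intro x hnx
    by_contra hc
    push_neg at hc
    apply hnx
    rw [hneq]
    refine DomAux2.prod_pow_dvd hp hinj fun i _ => ?_
    rcases Nat.eq_zero_or_pos (β i) with h0 | h1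
    · simp [h0]
    · exact hc i h1
  have hdomP : ∀ d₀ : IdealVertex m, (∀ i, 1 ≤ β i → ¬ p i ^ β i ∣ d₀.1) →
      ∀ v, v ≠ d₀ → ¬ DomAux.Isol n m v → (idealGraph n m).Adj d₀ v := by
    intro d₀ hP v hv hni
    have hnv : ¬ n ∣ v.1 := fun h => hni (hisol v h)
    refine ⟨Ne.symm hv, fun hcon => ?_⟩
    obtain ⟨i, hb, hpi⟩ := hwit v.1 hnv
    have hdl := (hpn i).trans hcon
    rcases (DomAux2.pow_dvd_lcm_iff (hp i) (hvne d₀) (hvne v)).mp hdl with h | h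
    · exact hP i hb h
    · exact hpi h
  constructor
  · -- Part 1
    rintro (hcase | ⟨q₁, q₂, a, hq₁, hq₂, hqne, ha2, hneq', hmeq'⟩)
    · push_neg at hcase
      obtain ⟨j, hj⟩ := hcase
      rcases Nat.lt_or_ge (β j) 1 with hj0 | hj1
      · -- β j = 0
        have hj0 : β j = 0 := by omega
        have hDdvd : (∏ k ∈ Finset.univ.filter (fun k => β k = 0), p k ^ α k) ∣ m := by
          rw [hmeq]
          exact Finset.prod_dvd_prod_of_subset _ _ _ (Finset.filter_subset _ _)
        have hpD : ∀ i, 1 ≤ β i →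
            ¬ p i ∣ ∏ k ∈ Finset.univ.filter (fun k => β k = 0), p k ^ α k := by
          intro i hi hdvd'
          obtain ⟨k, hk, hd⟩ := (Prime.dvd_finset_prod_iff (hp i).prime _).mp hdvd'
          have hik := hinj (DomAux2.eq_of_prime_dvd_pow hp (hp i) hd)
          rw [Finset.mem_filter] at hk
          rw [hik] at hi
          omega
        have hD1 : (∏ k ∈ Finset.univ.filter (fun k => β k = 0), p k ^ α k) ≠ 1 := by
          intro h
          have h2 : p j ∣ ∏ k ∈ Finset.univ.filter (fun k => β k = 0), p k ^ α k :=
            (dvd_pow_self (p j) (by have := hα j; omega)).trans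
              (Finset.dvd_prod_of_mem _ (by simp [hj0]))
          rw [h] at h2
          exact (hp j).ne_one (Nat.dvd_one.mp h2)
        have hexb : ∃ i, 1 ≤ β i := by
          by_contra hc
          push_neg at hc
          have hn1 : n = 1 := by
            rw [hneq]
            exact Finset.prod_eq_one fun i _ => by
              have := hc i
              rw [Nat.lt_one_iff.mp this, pow_zero]
          omega
        obtain ⟨i₁, hi₁⟩ := hexb
        have hDm : (∏ k ∈ Finset.univ.filter (fun k => β k = 0), p k ^ α k) ≠ m := by
          intro h
          exact hpD i₁ hi₁ (by rw [h]; exact hpim i₁)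
        refine DomAux.isLeast_one hm0 hnotnull ⟨_, hDdvd, hD1, hDm⟩ (hdomP _ ?_)
        intro i hi hdvd'
        exact hpD i hi ((dvd_pow_self (p i) (by omega)).trans hdvd')
      · -- β j ≥ 2
        have hj2 : 2 ≤ β j := by omega
        have hpjm : p j ≠ m := by
          intro h
          have h2 : p j ^ 2 ∣ m := (pow_dvd_pow _ (le_trans hj2 (hβα j))).trans (hppm j)
          rw [← h] at h2
          exact DomAux2.not_pow_two_dvd (hp j) h2
        refine DomAux.isLeast_one hm0 hnotnull ⟨p j, hpim j, (hp j).ne_one, hpjm⟩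
          (hdomP _ ?_)
        intro i hi hdvd'
        have hpi : p i ∣ p j := (dvd_pow_self _ (by omega)).trans hdvd'
        have hij : i = j := hinj ((Nat.prime_dvd_prime_iff_eq (hp i) (hp j)).mp hpi)
        subst hij
        have h2 : p i ^ 2 ∣ p i := (pow_dvd_pow _ hj2).trans hdvd'
        exact DomAux2.not_pow_two_dvd (hp i) h2
    · -- exceptional case
      have hq₁m : q₁ ∣ m := by
        rw [hmeq']
        exact (dvd_pow_self q₁ (by omega)).trans (dvd_mul_right _ _)
      have hq₂m : q₂ ∣ m := by rw [hmeq']; exact dvd_mul_left _ _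
      have hq₁nm : q₁ ≠ m := by
        intro h
        rw [← h] at hq₂m
        exact hqne ((Nat.prime_dvd_prime_iff_eq hq₂ hq₁).mp hq₂m).symm
      have hq₂n : q₂ ∣ n := by rw [hneq']; exact dvd_mul_left _ _
      have hdiv : ∀ w : IdealVertex m, ¬ q₁ ∣ w.1 → w.1 = q₂ := by
        intro w hw
        have hco : Nat.Coprime w.1 (q₁ ^ a) :=
          Nat.Coprime.pow_right _ (Nat.coprime_comm.mp ((hq₁.coprime_iff_not_dvd).mpr hw))
        have hd : w.1 ∣ q₂ := hco.dvd_of_dvd_mul_left (by rw [← hmeq']; exact w.2.1)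
        rcases hq₂.eq_one_or_self_of_dvd _ hd with h | h
        · exact absurd h w.2.2.1
        · exact h
      refine DomAux.isLeast_one hm0 hnotnull ⟨q₁, hq₁m, hq₁.ne_one, hq₁nm⟩ ?_
      intro v hv hni
      have key : ¬ q₂ ∣ v.1 := by
        intro hq₂v
        apply hni
        intro u hadj
        apply hadj.2
        have hq1l : q₁ ∣ Nat.lcm v.1 u.1 := by
          by_cases hq₁v : q₁ ∣ v.1
          · exact hq₁v.trans (Nat.dvd_lcm_left _ _)
          · have hvq₂ : v.1 = q₂ := hdiv v hq₁v
            have hq₁u : q₁ ∣ u.1 := by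
              by_contra hq₁u
              exact hadj.1 (Subtype.ext (hvq₂.trans (hdiv u hq₁u).symm))
            exact hq₁u.trans (Nat.dvd_lcm_right _ _)
        have hq2l : q₂ ∣ Nat.lcm v.1 u.1 := hq₂v.trans (Nat.dvd_lcm_left _ _)
        rw [hneq']
        exact Nat.Coprime.mul_dvd_of_dvd_of_dvd
          ((Nat.coprime_primes hq₁ hq₂).mpr hqne) hq1l hq2l
      refine ⟨Ne.symm hv, fun hcon => ?_⟩
      rcases DomAux2.prime_dvd_lcm hq₂ (hq₂n.trans hcon) with h | h
      · exact hqne ((Nat.prime_dvd_prime_iff_eq hq₂ hq₁).mp h).symm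
      · exact key h
  · -- Part 2
    rintro ⟨hβ1, hnexc⟩
    have hpdvdn : ∀ i, p i ∣ n := by
      intro i
      have := hpn i
      rwa [hβ1 i, pow_one] at this
    have hprodn : ∀ x : ℕ, (∀ i, p i ∣ x) → n ∣ x := by
      intro x hx
      rw [hneq]
      refine DomAux2.prod_pow_dvd hp hinj fun i _ => ?_
      rw [hβ1 i, pow_one]
      exact hx i
    have hs1 : 0 < s := by
      rcases Nat.eq_zero_or_pos s with h | h
      · subst h
        simp at hneq
        omega
      · exact h
    have hnullaux : ∀ a b : IdealVertex m, (∀ i, p i ∣ a.1 ∨ p i ∣ b.1) →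
        ¬ (idealGraph n m).Adj a b := by
      intro a b h hadj
      apply hadj.2
      apply hprodn
      intro i
      rcases h i with h' | h'
      · exact h'.trans (Nat.dvd_lcm_left _ _)
      · exact h'.trans (Nat.dvd_lcm_right _ _)
    have h2s : 2 ≤ s := by
      by_contra hc
      have hs1' : s = 1 := by omega
      obtain ⟨a, b, hab⟩ := hnotnull
      refine hnullaux a b ?_ hab
      intro i
      obtain ⟨k, hk⟩ := DomAux2.exists_p_dvd hp (by rw [← hmeq]; exact a.2.1) a.2.2.1
      have hki : k = i := by
        apply Fin.ext
        have := k.2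
        have := i.2
        omega
      exact Or.inl (hki ▸ hk)
    have hα2 : s = 2 → ∀ i, 2 ≤ α i := by
      intro hs2 i
      by_contra hc
      have hαi : α i = 1 := by have := hα i; omega
      have hlt : i.1 < 2 := by rw [← hs2]; exact i.2
      set i' : Fin s := ⟨1 - i.1, by omega⟩ with hi'
      have hne' : i' ≠ i := by
        apply Fin.ne_of_val_ne
        simp only [hi']
        omega
      have huniv : ({i', i} : Finset (Fin s)) = Finset.univ := by
        apply Finset.eq_univ_of_card
        rw [Finset.card_pair hne']
        simp [hs2]
      have hmfac : m = p i' ^ α i' * p i := by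
        rw [hmeq, ← huniv, Finset.prod_pair hne', hαi, pow_one]
      have hnfac : n = p i' * p i := by
        rw [hneq, ← huniv, Finset.prod_pair hne', hβ1 i, hβ1 i', pow_one, pow_one]
      rcases Nat.lt_or_ge (α i') 2 with h2 | h2
      · -- α i' = 1 : null graph, contradiction
        have hαi' : α i' = 1 := by have := hα i'; omega
        rw [hαi', pow_one] at hmfac
        obtain ⟨a, b, hab⟩ := hnotnull
        have hwd : ∀ w : IdealVertex m, ¬ p i ∣ w.1 → w.1 = p i' := by
          intro w hw
          have hco : Nat.Coprime w.1 (p i) :=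
            Nat.coprime_comm.mp ((hp i).coprime_iff_not_dvd.mpr hw)
          have hd : w.1 ∣ p i' := hco.dvd_of_dvd_mul_right (by rw [← hmfac]; exact w.2.1)
          rcases (hp i').eq_one_or_self_of_dvd _ hd with h | h
          · exact absurd h w.2.2.1
          · exact h
        have hwd' : ∀ w : IdealVertex m, ¬ p i' ∣ w.1 → w.1 = p i := by
          intro w hw
          have hco : Nat.Coprime w.1 (p i') :=
            Nat.coprime_comm.mp ((hp i').coprime_iff_not_dvd.mpr hw)
          have hd : w.1 ∣ p i := by
            refine hco.dvd_of_dvd_mul_left ?_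
            rw [← hmfac]
            exact w.2.1
          rcases (hp i).eq_one_or_self_of_dvd _ hd with h | h
          · exact absurd h w.2.2.1
          · exact h
        refine hnullaux a b ?_ hab
        intro k
        have hk : k = i' ∨ k = i := by
          have := Finset.mem_univ k
          rw [← huniv, Finset.mem_insert, Finset.mem_singleton] at this
          exact this
        by_contra hcc
        push_neg at hcc
        obtain ⟨hka, hkb⟩ := hcc
        rcases hk with rfl | rfl
        · exact hab.ne (Subtype.ext ((hwd' a hka).trans (hwd' b hkb).symm))
        · exact hab.ne (Subtype.ext ((hwd a hka).trans (hwd b hkb).symm))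
      · exact hnexc ⟨p i', p i, α i', hp i', hp i, fun h => hne' (hinj h), h2, hnfac, hmfac⟩
    -- the vertices V j
    have hVdvd : ∀ j : Fin s, (∏ k ∈ Finset.univ.erase j, p k ^ α k) ∣ m := by
      intro j
      rw [hmeq]
      exact Finset.prod_dvd_prod_of_subset _ _ _ (Finset.erase_subset _ _)
    have hpV : ∀ j : Fin s, ¬ p j ∣ ∏ k ∈ Finset.univ.erase j, p k ^ α k :=
      fun j => DomAux2.not_dvd_prod_erase hp hinj j
    have hpV' : ∀ j i : Fin s, i ≠ j → p i ∣ ∏ k ∈ Finset.univ.erase j, p k ^ α k := by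
      intro j i hij
      exact (dvd_pow_self (p i) (by have := hα i; omega)).trans
        (Finset.dvd_prod_of_mem _ (Finset.mem_erase.mpr ⟨hij, Finset.mem_univ i⟩))
    have hV1 : ∀ j i : Fin s, i ≠ j → (∏ k ∈ Finset.univ.erase j, p k ^ α k) ≠ 1 := by
      intro j i hij h
      have hpi := hpV' j i hij
      rw [h] at hpi
      exact (hp i).ne_one (Nat.dvd_one.mp hpi)
    have hVm : ∀ j : Fin s, (∏ k ∈ Finset.univ.erase j, p k ^ α k) ≠ m := by
      intro j h
      exact hpV j (by rw [h]; exact hpim j)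
    have hpne_m : ∀ i k : Fin s, i ≠ k → p i ≠ m := by
      intro i k hik h
      have : p k ∣ p i := by rw [h]; exact hpim k
      exact hik (hinj ((Nat.prime_dvd_prime_iff_eq (hp k) (hp i)).mp this)).symm
    have hVnepi : ∀ j i₀ : Fin s, i₀ ≠ j →
        (∏ k ∈ Finset.univ.erase j, p k ^ α k) ≠ p i₀ := by
      intro j i₀ hij heq
      by_cases hs2 : s = 2
      · have hαi₀ := hα2 hs2 i₀
        have h2 : p i₀ ^ 2 ∣ ∏ k ∈ Finset.univ.erase j, p k ^ α k :=
          (pow_dvd_pow _ hαi₀).trans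
            (Finset.dvd_prod_of_mem _ (Finset.mem_erase.mpr ⟨hij, Finset.mem_univ i₀⟩))
        rw [heq] at h2
        exact DomAux2.not_pow_two_dvd (hp i₀) h2
      · have hs3 : 3 ≤ s := by omega
        obtain ⟨v', hv', hvj, hvi⟩ : ∃ v' : ℕ, v' < s ∧ v' ≠ j.1 ∧ v' ≠ i₀.1 := by
          by_cases h0j : j.1 = 0
          · by_cases h1i : i₀.1 = 1
            · exact ⟨2, by omega, by omega, by omega⟩
            · exact ⟨1, by omega, by omega, by omega⟩
          · by_cases h0i : i₀.1 = 0
            · by_cases h1j : j.1 = 1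
              · exact ⟨2, by omega, by omega, by omega⟩
              · exact ⟨1, by omega, by omega, by omega⟩
            · exact ⟨0, by omega, by omega, by omega⟩
        obtain ⟨k, hkj, hki₀⟩ : ∃ k : Fin s, k ≠ j ∧ k ≠ i₀ :=
          ⟨⟨v', hv'⟩, Fin.ne_of_val_ne hvj, Fin.ne_of_val_ne hvi⟩
        have hd : p k ∣ p i₀ := by rw [← heq]; exact hpV' j k hkj
        exact hki₀ (hinj ((Nat.prime_dvd_prime_iff_eq (hp k) (hp i₀)).mp hd))
    have hVnonisol : ∀ (j i₀ : Fin s) (hij : i₀ ≠ j),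
        ¬ DomAux.Isol n m ⟨_, hVdvd j, hV1 j i₀ hij, hVm j⟩ := by
      intro j i₀ hij hiso
      refine hiso ⟨p i₀, hpim i₀, (hp i₀).ne_one, hpne_m i₀ j hij⟩ ⟨?_, ?_⟩
      · intro h
        exact hVnepi j i₀ hij (congrArg Subtype.val h)
      · intro hcon
        rcases DomAux2.prime_dvd_lcm (hp j) ((hpdvdn j).trans hcon) with h | h
        · exact hpV j h
        · exact hij (hinj ((Nat.prime_dvd_prime_iff_eq (hp j) (hp i₀)).mp h)).symm
    obtain ⟨j₀, hj₀v⟩ : ∃ k : Fin s, k.1 = 0 := ⟨⟨0, by omega⟩, rfl⟩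
    obtain ⟨i₁, hi₁v⟩ : ∃ k : Fin s, k.1 = 1 := ⟨⟨1, by omega⟩, rfl⟩
    have hne₁₀ : i₁ ≠ j₀ := Fin.ne_of_val_ne (by omega)
    refine DomAux.isLeast_two hm0 hnotnull
      ⟨p j₀, hpim j₀, (hp j₀).ne_one, hpne_m j₀ i₁ (fun h => hne₁₀ h.symm)⟩
      ⟨_, hVdvd j₀, hV1 j₀ i₁ hne₁₀, hVm j₀⟩ ?_ ?_ (hVnonisol j₀ i₁ hne₁₀) ?_ ?_
    · intro h
      apply hpV j₀
      have h' := congrArg Subtype.val h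
      dsimp at h'
      rw [← h']
    · by_cases hα0 : 2 ≤ α j₀
      · intro hiso
        have hu1 : p j₀ ^ α j₀ ≠ 1 := by
          intro h
          have hd := dvd_pow_self (p j₀) (show α j₀ ≠ 0 by omega)
          rw [h] at hd
          exact (hp j₀).ne_one (Nat.dvd_one.mp hd)
        have hum : p j₀ ^ α j₀ ≠ m := by
          intro h
          have hd : p i₁ ∣ p j₀ ^ α j₀ := by rw [h]; exact hpim i₁
          exact hne₁₀ (hinj (DomAux2.eq_of_prime_dvd_pow hp (hp i₁) hd))
        refine hiso ⟨p j₀ ^ α j₀, hppm j₀, hu1, hum⟩ ⟨?_, ?_⟩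
        · intro h
          have h' := congrArg Subtype.val h
          dsimp at h'
          have h2 : p j₀ ^ 2 ∣ p j₀ ^ α j₀ := pow_dvd_pow _ hα0
          rw [← h'] at h2
          exact DomAux2.not_pow_two_dvd (hp j₀) h2
        · intro hcon
          rcases DomAux2.prime_dvd_lcm (hp i₁) ((hpdvdn i₁).trans hcon) with h | h
          · exact hne₁₀ (hinj ((Nat.prime_dvd_prime_iff_eq (hp i₁) (hp j₀)).mp h))
          · exact hne₁₀ (hinj (DomAux2.eq_of_prime_dvd_pow hp (hp i₁) h) ▸ rfl)
      · have hs3 : 3 ≤ s := by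
          rcases Nat.lt_or_ge s 3 with h | h
          · have hs2 : s = 2 := by omega
            exact absurd (hα2 hs2 j₀) hα0
          · exact h
        obtain ⟨i₂, hi₂v⟩ : ∃ k : Fin s, k.1 = 2 := ⟨⟨2, by omega⟩, rfl⟩
        intro hiso
        refine hiso ⟨p i₁, hpim i₁, (hp i₁).ne_one, hpne_m i₁ j₀ hne₁₀⟩ ⟨?_, ?_⟩
        · intro h
          exact hne₁₀ (hinj (congrArg Subtype.val h)).symm
        · intro hcon
          rcases DomAux2.prime_dvd_lcm (hp i₂) ((hpdvdn i₂).trans hcon) with h | h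
          · have h2 := hinj ((Nat.prime_dvd_prime_iff_eq (hp i₂) (hp j₀)).mp h)
            exact absurd (congrArg Fin.val h2) (by omega)
          · have h2 := hinj ((Nat.prime_dvd_prime_iff_eq (hp i₂) (hp i₁)).mp h)
            exact absurd (congrArg Fin.val h2) (by omega)
    · intro v hv1 hv2 hvI
      by_cases hc : ∀ k, k ≠ j₀ → p k ∣ v.1
      · right
        have hpj₀v : ¬ p j₀ ∣ v.1 := by
          intro h
          apply hvI
          apply hisol
          apply hprodn
          intro k
          by_cases hk : k = j₀
          · rw [hk]; exact h
          · exact hc k hk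
        refine ⟨Ne.symm hv2, fun hcon => ?_⟩
        rcases DomAux2.prime_dvd_lcm (hp j₀) ((hpdvdn j₀).trans hcon) with h | h
        · exact hpV j₀ h
        · exact hpj₀v h
      · left
        push_neg at hc
        obtain ⟨k, hkj, hkv⟩ := hc
        refine ⟨Ne.symm hv1, fun hcon => ?_⟩
        rcases DomAux2.prime_dvd_lcm (hp k) ((hpdvdn k).trans hcon) with h | h
        · exact hkj (hinj ((Nat.prime_dvd_prime_iff_eq (hp k) (hp j₀)).mp h))
        · exact hkv h
    · intro d hd
      obtain ⟨j, hj⟩ := DomAux2.exists_p_dvd hp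
        (show d.1 ∣ ∏ i, p i ^ α i by rw [← hmeq]; exact d.2.1) d.2.2.1
      obtain ⟨i₀, hi₀⟩ : ∃ i₀, ¬ p i₀ ∣ d.1 := by
        by_contra hcc
        push_neg at hcc
        exact hd (hisol d (hprodn _ hcc))
      have hij : i₀ ≠ j := fun h => hi₀ (h ▸ hj)
      refine ⟨⟨_, hVdvd j, hV1 j i₀ hij, hVm j⟩, hVnonisol j i₀ hij, ?_, ?_⟩
      · intro h
        apply hpV j
        have h' := congrArg Subtype.val h
        dsimp at h'
        rw [h']
        exact hj
      · intro hadj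
        apply hadj.2
        apply hprodn
        intro k
        by_cases hk : k = j
        · rw [hk]; exact hj.trans (Nat.dvd_lcm_left _ _)
        · exact (hpV' j k hk).trans (Nat.dvd_lcm_right _ _)
end
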